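/- arXiv:2601.17630 — 6 statements merged into one kernel-verified Lean document; each statement's English description precedes it below -/
import Mathlib

section
/- For Lebesgue-almost every α ∈ (0,1): α is irrational and there exists n₀ such that the continued fraction denominators of α satisfy q_{n+1} ≤ q_n (log q_n)² for all n ≥ n₀. -/
open MeasureTheory

/-- The `n`-th denominator of the continued fraction expansion of `α`. -/
noncomputable def cfDen (α : ℝ) (n : ℕ) : ℝ := (GenContFract.of α).dens n

namespace BorelBernsteinAux

open Real Filter GenContFract
open scoped ENNReal

/-- `δ_q = 1 / (q (log q)²)`. -/
noncomputable def del (q : ℕ) : ℝ := 1 / (q * (Real.log q) ^ 2)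

/-- The set of `α` admitting a very good rational approximation with denominator `q`. -/
def badSet (q : ℕ) : Set ℝ := {α | ∃ p : ℤ, |q * α - p| ≤ del q}

lemma del_nonneg (q : ℕ) : 0 ≤ del q := by
  unfold del; positivity

lemma one_lt_log_three : 1 < Real.log 3 := by
  rw [Real.lt_log_iff_exp_lt (by norm_num)]
  calc Real.exp 1 < 2.7182818286 := Real.exp_one_lt_d9
    _ < 3 := by norm_num

lemma one_le_log {q : ℕ} (hq : 3 ≤ q) : 1 ≤ Real.log q := by
  have h3 : Real.log 3 ≤ Real.log q := by
    apply Real.log_le_log (by norm_num)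
    exact_mod_cast hq
  linarith [one_lt_log_three]

lemma del_pos {q : ℕ} (hq : 3 ≤ q) : 0 < del q := by
  unfold del
  have hq' : (0:ℝ) < q := by positivity
  have := one_le_log hq
  positivity

lemma del_le_one {q : ℕ} (hq : 3 ≤ q) : del q ≤ 1 := by
  unfold del
  have hq' : (1:ℝ) ≤ q := by exact_mod_cast Nat.one_le_of_lt hq
  have hl := one_le_log hq
  rw [div_le_one (by positivity)]
  nlinarith

lemma summable_del : Summable fun n : ℕ => del (n + 3) := by
  have h_nonneg : ∀ n : ℕ, 0 ≤ del (n + 3) := fun n => del_nonneg _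
  have h_anti : ∀ ⦃m n : ℕ⦄, 0 < m → m ≤ n → del (n + 3) ≤ del (m + 3) := by
    intro m n hm hmn
    unfold del
    apply one_div_le_one_div_of_le
    · have h1 : (1:ℝ) ≤ Real.log (m + 3 : ℕ) := one_le_log (by omega)
      have h0 : (0:ℝ) < ((m + 3 : ℕ) : ℝ) := by positivity
      have hlp : (0:ℝ) < Real.log (m + 3 : ℕ) := lt_of_lt_of_le one_pos h1
      exact mul_pos h0 (pow_pos hlp 2)
    · have hmn' : ((m + 3 : ℕ) : ℝ) ≤ ((n + 3 : ℕ) : ℝ) := by exact_mod_cast by omega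
      have h1 : (1:ℝ) ≤ Real.log (m + 3 : ℕ) := one_le_log (by omega)
      have h2 : Real.log ((m+3 : ℕ):ℝ) ≤ Real.log ((n+3 : ℕ):ℝ) :=
        Real.log_le_log (by positivity) hmn'
      have h0 : (0:ℝ) ≤ ((m + 3 : ℕ) : ℝ) := by positivity
      have hlp : (0:ℝ) ≤ Real.log (m + 3 : ℕ) := le_trans zero_le_one h1
      exact mul_le_mul hmn' (by nlinarith) (by positivity) (by positivity)
  rw [← summable_condensed_iff_of_nonneg h_nonneg h_anti]
  have hlog2 : (0:ℝ) < Real.log 2 := Real.log_pos (by norm_num)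
  apply Summable.of_nonneg_of_le (f := fun k : ℕ => (4 / (Real.log 2)^2) * (1/((k:ℝ)+1)^2))
    (fun k => by have := h_nonneg (2^k); positivity)
  · intro k
    unfold del
    have hcast : (((2:ℕ)^k + 3 : ℕ) : ℝ) = (2:ℝ)^k + 3 := by push_cast; ring
    rw [hcast]
    set L := Real.log ((2:ℝ)^k + 3) with hL
    have hpow : (1:ℝ) ≤ (2:ℝ)^k := one_le_pow₀ (by norm_num)
    have hA : (0:ℝ) < (2:ℝ)^k + 3 := by linarith
    have h1 : (k:ℝ) * Real.log 2 ≤ L := by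
      rw [hL, ← Real.log_pow]
      exact Real.log_le_log (by positivity) (by norm_num)
    have h2 : 2 * Real.log 2 ≤ L := by
      rw [hL, show (2:ℝ) * Real.log 2 = Real.log 4 by
        rw [show (4:ℝ) = 2^2 by norm_num, Real.log_pow]; push_cast; ring]
      exact Real.log_le_log (by norm_num) (by linarith)
    have hLb : ((k:ℝ)+1) * Real.log 2 / 2 ≤ L := by nlinarith
    have hLbpos : (0:ℝ) < ((k:ℝ)+1) * Real.log 2 / 2 := by positivity
    have hL2 : (((k:ℝ)+1) * Real.log 2 / 2)^2 ≤ L^2 := by nlinarith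
    calc (2:ℝ)^k * (1 / (((2:ℝ)^k + 3) * L^2))
        ≤ (2:ℝ)^k * (1 / ((2:ℝ)^k * ((((k:ℝ)+1) * Real.log 2 / 2)^2))) := by
          apply mul_le_mul_of_nonneg_left _ (by positivity)
          apply one_div_le_one_div_of_le (by positivity)
          apply mul_le_mul (by linarith) hL2 (by positivity) (by positivity)
      _ = (4 / (Real.log 2)^2) * (1/((k:ℝ)+1)^2) := by
          have hp : ((2:ℝ)^k) ≠ 0 := by positivity
          field_simp
          ring
  · apply Summable.mul_left
    have h := (summable_nat_add_iff 1).mpr (Real.summable_one_div_nat_pow.mpr (le_refl 2))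
    apply h.congr
    intro n
    push_cast
    ring

lemma meas_badSet {q : ℕ} (hq : 3 ≤ q) :
    volume (badSet q ∩ Set.Ioo 0 1) ≤ ENNReal.ofReal (4 * del q) := by
  have hq0 : (0:ℝ) < q := by positivity
  have hd0 := del_nonneg q
  have hd1 := del_le_one hq
  have hsub : badSet q ∩ Set.Ioo 0 1 ⊆
      ⋃ p ∈ Finset.Icc (0:ℤ) q, Set.Icc (((p:ℝ) - del q)/q) (((p:ℝ) + del q)/q) := by
    rintro α ⟨⟨p, hp⟩, hα0, hα1⟩
    rw [abs_le] at hp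
    have hql : (q:ℝ) * α < q := by nlinarith
    have hqg : (0:ℝ) < q * α := by positivity
    have hpl : (-1 : ℝ) < p := by linarith [hp.1, hp.2]
    have hpu : (p:ℝ) < q + 1 := by linarith [hp.1, hp.2]
    have hp0 : (0:ℤ) ≤ p := by
      have : (-1:ℤ) < p := by exact_mod_cast hpl
      omega
    have hpq : p ≤ (q:ℤ) := by
      have : (p:ℝ) < (q:ℝ) + 1 := hpu
      have := Int.lt_add_one_iff.mp (show p < (q:ℤ) + 1 by exact_mod_cast this)
      exact this
    refine Set.mem_biUnion (Finset.mem_Icc.mpr ⟨hp0, hpq⟩) ?_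
    constructor
    · rw [div_le_iff₀ hq0]; linarith [hp.1, hp.2]
    · rw [le_div_iff₀ hq0]; linarith [hp.1, hp.2]
  calc volume (badSet q ∩ Set.Ioo 0 1)
      ≤ volume (⋃ p ∈ Finset.Icc (0:ℤ) q, Set.Icc (((p:ℝ) - del q)/q) (((p:ℝ) + del q)/q)) :=
        measure_mono hsub
    _ ≤ ∑ p ∈ Finset.Icc (0:ℤ) q, volume (Set.Icc (((p:ℝ) - del q)/q) (((p:ℝ) + del q)/q)) :=
        measure_biUnion_finset_le _ _
    _ = ∑ p ∈ Finset.Icc (0:ℤ) q, ENNReal.ofReal (2 * del q / q) := by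
        refine Finset.sum_congr rfl fun p _ => ?_
        rw [Real.volume_Icc]
        congr 1
        field_simp
        ring
    _ = (q + 1) * ENNReal.ofReal (2 * del q / q) := by
        rw [Finset.sum_const, Int.card_Icc, nsmul_eq_mul]
        congr 1
        simp
    _ ≤ ENNReal.ofReal (4 * del q) := by
        rw [show ((q:ℝ≥0∞) + 1) = ENNReal.ofReal ((q:ℝ) + 1) by
          simp [ENNReal.ofReal_add, ENNReal.ofReal_natCast]]
        rw [← ENNReal.ofReal_mul (by positivity)]
        apply ENNReal.ofReal_le_ofReal
        rw [div_eq_mul_inv]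
        have h2q : (q:ℝ) + 1 ≤ 2 * q := by
          have : (1:ℝ) ≤ q := by exact_mod_cast Nat.one_le_of_lt hq
          linarith
        calc ((q:ℝ)+1) * (2 * del q * (↑q)⁻¹) = ((q:ℝ)+1) * (↑q)⁻¹ * (2 * del q) := by ring
          _ ≤ 2 * (2 * del q) := by
              apply mul_le_mul_of_nonneg_right _ (by positivity)
              rw [mul_inv_le_iff₀ hq0]
              linarith
          _ = 4 * del q := by ring

lemma contsAux_int (v : ℝ) :
    ∀ n : ℕ, (∃ z : ℤ, ((GenContFract.of v).contsAux n).a = z) ∧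
      ∃ z : ℤ, ((GenContFract.of v).contsAux n).b = z
  | 0 => ⟨⟨1, by simp [zeroth_contAux_eq_one_zero]⟩, ⟨0, by simp [zeroth_contAux_eq_one_zero]⟩⟩
  | 1 => ⟨⟨⌊v⌋, by simp [first_contAux_eq_h_one, of_h_eq_floor]⟩,
          ⟨1, by simp [first_contAux_eq_h_one]⟩⟩
  | (n+2) => by
      obtain ⟨⟨za, ha⟩, ⟨zb, hb⟩⟩ := contsAux_int v n
      obtain ⟨⟨za', ha'⟩, ⟨zb', hb'⟩⟩ := contsAux_int v (n+1)
      rcases h : (GenContFract.of v).s.get? n with _ | gp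
      · rw [GenContFract.contsAux, h]
        exact ⟨⟨za', ha'⟩, ⟨zb', hb'⟩⟩
      · have hga : gp.a = 1 := of_partNum_eq_one (partNum_eq_s_a h)
        obtain ⟨z, hz⟩ := (of_partNum_eq_one_and_exists_int_partDen_eq h).2
        rw [GenContFract.contsAux, h]
        constructor
        · exact ⟨z * za' + za, by simp [nextConts, nextNum, hga, hz, ha, ha']⟩
        · exact ⟨z * zb' + zb, by simp [nextConts, nextDen, hga, hz, hb, hb']⟩

lemma nums_int (v : ℝ) (n : ℕ) : ∃ p : ℤ, (GenContFract.of v).nums n = p := by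
  have := (contsAux_int v (n + 1)).1
  rwa [num_eq_conts_a, nth_cont_eq_succ_nth_contAux]

lemma dens_int (v : ℝ) (n : ℕ) : ∃ z : ℤ, (GenContFract.of v).dens n = z := by
  have := (contsAux_int v (n + 1)).2
  rwa [den_eq_conts_b, nth_cont_eq_succ_nth_contAux]

lemma fib_le_dens (v : ℝ) (hv : ∀ n, ¬(GenContFract.of v).TerminatedAt n) (n : ℕ) :
    (Nat.fib (n + 1) : ℝ) ≤ (GenContFract.of v).dens n := by
  apply succ_nth_fib_le_of_nth_den
  cases n with
  | zero => exact Or.inl rfl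
  | succ m => exact Or.inr (hv m)

lemma dens_pos (v : ℝ) (hv : ∀ n, ¬(GenContFract.of v).TerminatedAt n) (n : ℕ) :
    0 < (GenContFract.of v).dens n := by
  have h := fib_le_dens v hv n
  have : (1:ℝ) ≤ (Nat.fib (n+1) : ℝ) := by
    exact_mod_cast Nat.fib_pos.mpr n.succ_pos
  linarith

lemma dens_nat (v : ℝ) (hv : ∀ n, ¬(GenContFract.of v).TerminatedAt n) (n : ℕ) :
    ∃ b : ℕ, (GenContFract.of v).dens n = b ∧ Nat.fib (n + 1) ≤ b := by
  obtain ⟨z, hz⟩ := dens_int v n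
  have h1 := fib_le_dens v hv n
  have h2 : (Nat.fib (n+1) : ℝ) ≤ (z : ℝ) := by rw [← hz]; exact h1
  have h3 : (Nat.fib (n+1) : ℤ) ≤ z := by exact_mod_cast h2
  have hz0 : 0 ≤ z := le_trans (by positivity) h3
  refine ⟨z.toNat, ?_, ?_⟩
  · rw [hz]; exact_mod_cast congrArg Int.cast (Int.toNat_of_nonneg hz0).symm
  · omega

lemma abs_den_mul_sub_num_le (α : ℝ) (hv : ∀ n, ¬(GenContFract.of α).TerminatedAt n) (n : ℕ) :
    |(GenContFract.of α).dens n * α - (GenContFract.of α).nums n| ≤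
      1 / (GenContFract.of α).dens (n + 1) := by
  have h1 := abs_sub_convs_le (hv n)
  rw [conv_eq_num_div_den] at h1
  set B := (GenContFract.of α).dens n with hB
  set B' := (GenContFract.of α).dens (n+1) with hB'
  set A := (GenContFract.of α).nums n with hA
  have hBpos : 0 < B := dens_pos α hv n
  have hB'pos : 0 < B' := dens_pos α hv (n+1)
  have key : B * α - A = B * (α - A / B) := by field_simp
  rw [key, abs_mul, abs_of_pos hBpos]
  calc B * |α - A / B| ≤ B * (1 / (B * B')) := by
        exact mul_le_mul_of_nonneg_left h1 hBpos.le
    _ = 1 / B' := by field_simp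
end BorelBernsteinAux

open BorelBernsteinAux Filter

/-- For Lebesgue-almost every `α ∈ (0,1)`: `α` is irrational and there exists `n₀` such
that the continued fraction denominators of `α` satisfy `q_{n+1} ≤ q_n (log q_n)²`
for all `n ≥ n₀`. -/
theorem stmt1 :
    ∀ᵐ α ∂(volume.restrict (Set.Ioo (0 : ℝ) 1)),
      Irrational α ∧
      ∃ n₀ : ℕ, ∀ n : ℕ, n₀ ≤ n →
        cfDen α (n + 1) ≤ cfDen α n * (Real.log (cfDen α n)) ^ 2 := by
  have hirr : ∀ᵐ α ∂(volume.restrict (Set.Ioo (0 : ℝ) 1)), Irrational α := by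
    apply ae_restrict_of_ae
    rw [MeasureTheory.ae_iff]
    have : {x : ℝ | ¬ Irrational x} = Set.range ((↑) : ℚ → ℝ) := by
      ext x; simp [Irrational]
    rw [this]
    exact (Set.countable_range _).measure_zero _
  have hBC : ∀ᵐ α ∂(volume.restrict (Set.Ioo (0 : ℝ) 1)),
      ∀ᶠ q in atTop, α ∉ badSet (q + 3) := by
    apply MeasureTheory.ae_eventually_notMem
    have hb : ∀ q : ℕ, (volume.restrict (Set.Ioo (0:ℝ) 1)) (badSet (q+3)) ≤
        ENNReal.ofReal (4 * del (q+3)) := by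
      intro q
      rw [Measure.restrict_apply' measurableSet_Ioo]
      exact meas_badSet (by omega)
    have hsum2 : Summable (fun q : ℕ => 4 * del (q+3)) := summable_del.mul_left 4
    apply ne_top_of_le_ne_top _ (ENNReal.tsum_le_tsum hb)
    rw [← ENNReal.ofReal_tsum_of_nonneg (fun q => mul_nonneg (by norm_num) (del_nonneg _)) hsum2]
    exact ENNReal.ofReal_ne_top
  filter_upwards [hirr, hBC] with α hα hq
  refine ⟨hα, ?_⟩
  obtain ⟨Q, hQ⟩ := Filter.eventually_atTop.mp hq
  have hterm : ∀ n, ¬(GenContFract.of α).TerminatedAt n := by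
    intro n hn
    obtain ⟨q, rfl⟩ := (GenContFract.terminates_iff_rat α).mp ⟨n, hn⟩
    exact hα ⟨q, rfl⟩
  refine ⟨max (Q + 3) 3 + 4, fun n hn => ?_⟩
  obtain ⟨b, hbeq, hbfib⟩ := BorelBernsteinAux.dens_nat α hterm n
  have hfib : max (Q + 3) 3 + 5 ≤ Nat.fib (n + 1) := by
    calc max (Q + 3) 3 + 5 ≤ n + 1 := by omega
      _ ≤ Nat.fib (n + 1) := Nat.le_fib_self (by omega)
  have hb3 : 3 ≤ b := by omega
  have hbQ : Q ≤ b - 3 := by omega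
  have hnb : α ∉ badSet b := by
    have := hQ (b - 3) hbQ
    rwa [show b - 3 + 3 = b by omega] at this
  obtain ⟨p, hp⟩ := BorelBernsteinAux.nums_int α n
  have hnot : ¬ |(b:ℝ) * α - (p:ℝ)| ≤ del b := fun h => hnb ⟨p, h⟩
  push_neg at hnot
  have hkey := BorelBernsteinAux.abs_den_mul_sub_num_le α hterm n
  rw [hbeq, hp] at hkey
  have h1 : del b < 1 / (GenContFract.of α).dens (n+1) := lt_of_lt_of_le hnot hkey
  have hlog : (1:ℝ) ≤ Real.log b := BorelBernsteinAux.one_le_log hb3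
  have hbpos : (0:ℝ) < (b:ℝ) := by positivity
  have hX : (0:ℝ) < (b:ℝ) * Real.log b ^ 2 := by
    have hlp : (0:ℝ) < Real.log b := lt_of_lt_of_le one_pos hlog
    exact mul_pos hbpos (pow_pos hlp 2)
  have hform : del b = 1 / ((b:ℝ) * Real.log b ^ 2) := rfl
  rw [hform] at h1
  have hfin : (GenContFract.of α).dens (n+1) < (b:ℝ) * Real.log b ^ 2 :=
    lt_of_one_div_lt_one_div hX h1
  show (GenContFract.of α).dens (n+1) ≤ (GenContFract.of α).dens n *
    (Real.log ((GenContFract.of α).dens n)) ^ 2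
  rw [hbeq]
  exact hfin.le
end

section
/- Let α ∈ (0,1) be irrational, let γ ∈ (0,1/2), and let f be a Kochergin roof function with exponent γ. Then for every continued fraction denominator q = q_n of α and every a ∈ ℝ with a + iα ∉ ℤ for all integers 0 ≤ i ≤ q, one has |S_q f'(a)| ≤ q · f_{q,max}(a) + 2 f'_{q,max}(a). -/
open Filter

/-- A Kochergin roof function with exponent `γ`: a positive, strictly convex `C²`
function on `(0,1)` with integral one and power-type singularities of exponent `γ`
at both endpoints. -/
def IsKocherginRoof (γ : ℝ) (f : ℝ → ℝ) : Prop :=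
  ContDiffOn ℝ 2 f (Set.Ioo 0 1) ∧
  (∀ x ∈ Set.Ioo (0 : ℝ) 1, 0 < f x) ∧
  (∀ x ∈ Set.Ioo (0 : ℝ) 1, 0 < deriv (deriv f) x) ∧
  (∫ x in (0 : ℝ)..1, f x) = 1 ∧
  ∃ M₁ M₂ M₃ M₄ : ℝ,
    M₁ ∈ Set.Ioo (0 : ℝ) 1 ∧ M₂ ∈ Set.Ioo (0 : ℝ) 1 ∧
    M₃ ∈ Set.Ioo (0 : ℝ) 1 ∧ M₄ ∈ Set.Ioo (0 : ℝ) 1 ∧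
    Tendsto (fun x : ℝ => f x * x ^ γ) (nhdsWithin 0 (Set.Ioi 0)) (nhds M₁) ∧
    Tendsto (fun x : ℝ => f x * (1 - x) ^ γ) (nhdsWithin 1 (Set.Iio 1)) (nhds M₂) ∧
    Tendsto (fun x : ℝ => deriv f x * x ^ (γ + 1)) (nhdsWithin 0 (Set.Ioi 0)) (nhds (-M₃)) ∧
    Tendsto (fun x : ℝ => deriv f x * (1 - x) ^ (γ + 1)) (nhdsWithin 1 (Set.Iio 1)) (nhds M₄)

/-- Birkhoff sum `S_n f(a) = ∑_{i=0}^{n-1} f({a + iα})` over the rotation by `α`. -/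
noncomputable def birkS (α : ℝ) (f : ℝ → ℝ) (n : ℕ) (a : ℝ) : ℝ :=
  ∑ i ∈ Finset.range n, f (Int.fract (a + i * α))

/-- `f_{n,max}(a) = max_{0 ≤ i ≤ n} f({a + iα})`. -/
noncomputable def fMax (α : ℝ) (f : ℝ → ℝ) (n : ℕ) (a : ℝ) : ℝ :=
  (Finset.range (n + 1)).sup' (Finset.nonempty_range_iff.mpr (Nat.succ_ne_zero n))
    (fun i => f (Int.fract (a + i * α)))

section Auxiliary

open GenContFract in
private lemma cf_int_conts (α : ℝ) (hnt : ∀ m, ¬(GenContFract.of α).TerminatedAt m) :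
    ∀ m, ∃ A B : ℤ, (GenContFract.of α).contsAux m = ⟨(A : ℝ), (B : ℝ)⟩ ∧
      ∃ A' B' : ℤ, (GenContFract.of α).contsAux (m+1) = ⟨(A' : ℝ), (B' : ℝ)⟩ := by
  intro m
  induction m with
  | zero =>
      refine ⟨1, 0, ?_, ⌊α⌋, 1, ?_⟩
      · show (⟨1, 0⟩ : Pair ℝ) = _
        norm_num
      · show (⟨(GenContFract.of α).h, 1⟩ : Pair ℝ) = _
        rw [of_h_eq_floor]; norm_num
  | succ m ih =>
      obtain ⟨A, B, hAB, A', B', hAB'⟩ := ih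
      refine ⟨A', B', hAB', ?_⟩
      obtain ⟨gp, hgp⟩ : ∃ gp, (GenContFract.of α).s.get? m = some gp :=
        Option.ne_none_iff_exists'.mp (by
          intro h; exact hnt m (terminatedAt_iff_s_none.mpr h))
      obtain ⟨ha1, z, hz⟩ := of_partNum_eq_one_and_exists_int_partDen_eq hgp
      have := contsAux_recurrence hgp hAB hAB'
      refine ⟨z * A' + A, z * B' + B, ?_⟩
      rw [this, ha1, hz]
      push_cast
      norm_num [mul_comm]

open GenContFract in
private lemma cf_coprime_approx (α : ℝ) (hirr : Irrational α) (n : ℕ) (q : ℕ)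
    (hq : (q : ℝ) = (GenContFract.of α).dens n) (hq1 : 1 ≤ q) :
    ∃ p : ℤ, Int.gcd p q = 1 ∧ |α - p / q| * (q * ((q:ℝ) - 1)) ≤ 1 := by
  have hnt : ∀ m, ¬(GenContFract.of α).TerminatedAt m := by
    intro m hm
    have hterm : (GenContFract.of α).Terminates := ⟨m, hm⟩
    rw [GenContFract.terminates_iff_rat] at hterm
    obtain ⟨r, hr⟩ := hterm
    exact hirr ⟨r, hr.symm⟩
  obtain ⟨_, _, _, A, B, hAB⟩ := cf_int_conts α hnt n
  obtain ⟨_, _, _, A', B', hAB'⟩ := cf_int_conts α hnt (n+1)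
  have hnum : (GenContFract.of α).nums n = (A : ℝ) := by
    rw [num_eq_conts_a, nth_cont_eq_succ_nth_contAux, hAB]
  have hden : (GenContFract.of α).dens n = (B : ℝ) := by
    rw [den_eq_conts_b, nth_cont_eq_succ_nth_contAux, hAB]
  have hnum' : (GenContFract.of α).nums (n+1) = (A' : ℝ) := by
    rw [num_eq_conts_a, nth_cont_eq_succ_nth_contAux, hAB']
  have hden' : (GenContFract.of α).dens (n+1) = (B' : ℝ) := by
    rw [den_eq_conts_b, nth_cont_eq_succ_nth_contAux, hAB']
  -- B = q
  have hBq : B = (q : ℤ) := by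
    have : ((B : ℝ)) = ((q:ℕ) : ℝ) := by rw [← hden, ← hq]
    exact_mod_cast this
  -- determinant
  have hdet : (GenContFract.of α).nums n * (GenContFract.of α).dens (n+1)
      - (GenContFract.of α).dens n * (GenContFract.of α).nums (n+1) = (-1)^(n+1) := by
    have := SimpContFract.determinant (s := SimpContFract.of α) (n := n) (hnt n)
    exact this
  rw [hnum, hden, hnum', hden'] at hdet
  have hdetZ : A * B' - B * A' = (-1)^(n+1) := by exact_mod_cast hdet
  have hcop : IsCoprime A B := by
    refine ⟨(-1)^(n+1) * B', -((-1)^(n+1)) * A', ?_⟩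
    have h2 : ((-1:ℤ)^(n+1)) * ((-1:ℤ)^(n+1)) = 1 := by
      rcases Nat.even_or_odd (n+1) with h | h
      · rw [h.neg_one_pow]; norm_num
      · rw [h.neg_one_pow]; norm_num
    calc (-1)^(n+1) * B' * A + -((-1)^(n+1)) * A' * B
        = ((-1:ℤ)^(n+1)) * (A * B' - B * A') := by ring
      _ = 1 := by rw [hdetZ, h2]
  have hgcd : Int.gcd A B = 1 := Int.isCoprime_iff_gcd_eq_one.mp hcop
  refine ⟨A, by rwa [hBq] at hgcd, ?_⟩
  -- approximation
  have happ := abs_sub_convs_le (v := α) (n := n) (hnt n)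
  have hconv : (GenContFract.of α).convs n = (A : ℝ) / q := by
    rw [conv_eq_num_div_den, hnum, ← hq]
  rw [hconv] at happ
  have hq0 : (0:ℝ) < q := by exact_mod_cast hq1
  have hdenpos : (q:ℝ) ≤ (GenContFract.of α).dens (n+1) := by
    rw [hq]; exact of_den_mono
  have hden1pos : (0:ℝ) < (GenContFract.of α).dens (n+1) := lt_of_lt_of_le hq0 hdenpos
  calc |α - (A:ℝ) / q| * (q * ((q:ℝ) - 1))
      ≤ (1 / ((GenContFract.of α).dens n * (GenContFract.of α).dens (n+1))) * (q * ((q:ℝ)-1)) := by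
        apply mul_le_mul_of_nonneg_right happ
        have : (1:ℝ) ≤ q := by exact_mod_cast hq1
        nlinarith
    _ ≤ 1 := by
        rw [← hq]
        rw [div_mul_eq_mul_div, div_le_one (by positivity)]
        have h1 : (1:ℝ) ≤ q := by exact_mod_cast hq1
        nlinarith

private lemma orbit_count (α a : ℝ) (q : ℕ) (hq0 : 0 < q) (p : ℤ) (hcop : Int.gcd p q = 1)
    (happ : |α - p / q| * (q * ((q:ℝ) - 1)) ≤ 1) (u v : ℝ) (huv : u ≤ v) :
    (((Finset.range q).filter (fun i : ℕ => Int.fract (a + i * α) ∈ Set.Icc u v)).card : ℝ)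
      ≤ q * (v - u) + 2 := by
  set ε : ℝ := α - p / q with hε
  have hqR : (0:ℝ) < q := by exact_mod_cast hq0
  set L : ℝ := u - ((q:ℝ) - 1) * max ε 0 with hL
  set R : ℝ := v + ((q:ℝ) - 1) * max (-ε) 0 with hR
  set k : ℕ → ℤ := fun i => p * i - q * ⌊a + i * α⌋ with hk
  set lo : ℤ := ⌈(q:ℝ) * (L - a)⌉ with hlo
  set hi : ℤ := ⌊(q:ℝ) * (R - a)⌋ with hhi
  set T := (Finset.range q).filter (fun i : ℕ => Int.fract (a + i * α) ∈ Set.Icc u v) with hT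
  have hmem : ∀ i ∈ T, k i ∈ Finset.Icc lo hi := by
    intro i hiT
    rw [hT, Finset.mem_filter, Finset.mem_range] at hiT
    have hiq := hiT.1
    have hyu := hiT.2.1
    have hyv := hiT.2.2
    have hiq1 : (i:ℝ) ≤ (q:ℝ) - 1 := by
      have : (i:ℝ) + 1 ≤ q := by exact_mod_cast hiT.1
      linarith
    have hi0 : (0:ℝ) ≤ i := Nat.cast_nonneg i
    have hshift1 : (i:ℝ) * ε ≤ ((q:ℝ) - 1) * max ε 0 := by
      rcases le_total ε 0 with h | h
      · rw [max_eq_right h]; nlinarith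
      · rw [max_eq_left h]; nlinarith
    have hshift2 : -(((q:ℝ) - 1) * max (-ε) 0) ≤ (i:ℝ) * ε := by
      rcases le_total ε 0 with h | h
      · rw [max_eq_left (by linarith : (0:ℝ) ≤ -ε)]; nlinarith
      · rw [max_eq_right (by linarith : -ε ≤ (0:ℝ))]; nlinarith
    have hfr : Int.fract (a + i * α) = a + i * α - ⌊a + i * α⌋ := rfl
    have hw : a + (k i : ℝ) / q = Int.fract (a + i * α) - i * ε := by
      simp only [hε, hk]
      push_cast
      field_simp
      rw [hfr]
      ring
    have hwL : L ≤ a + (k i : ℝ) / q := by rw [hw, hL]; linarith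
    have hwR : a + (k i : ℝ) / q ≤ R := by rw [hw, hR]; linarith
    have hk_le : (k i:ℝ) ≤ (R - a) * q := (div_le_iff₀ hqR).mp (by linarith)
    have hk_ge : (L - a) * q ≤ (k i:ℝ) := (le_div_iff₀ hqR).mp (by linarith)
    rw [Finset.mem_Icc]
    exact ⟨Int.ceil_le.mpr (by nlinarith), Int.le_floor.mpr (by nlinarith)⟩
  have hinj : ∀ i ∈ T, ∀ j ∈ T, k i = k j → i = j := by
    intro i hiT j hjT hkeq
    rw [hT, Finset.mem_filter, Finset.mem_range] at hiT hjT
    have heq : (p : ℤ) * i - q * ⌊a + i * α⌋ = p * j - q * ⌊a + j * α⌋ := hkeq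
    have hdvd : (q:ℤ) ∣ ((i:ℤ) - j) := by
      have h1 : (q:ℤ) ∣ p * ((i:ℤ) - j) := ⟨⌊a + i * α⌋ - ⌊a + j * α⌋, by linarith [heq]⟩
      exact (Int.isCoprime_iff_gcd_eq_one.mpr
        (by rwa [Int.gcd_comm] at hcop : Int.gcd (q:ℤ) p = 1)).dvd_of_dvd_mul_left h1
    by_contra hne
    have hne' : (i:ℤ) - j ≠ 0 := by
      intro h; apply hne
      have : (i:ℤ) = j := by omega
      exact_mod_cast this
    have h2 : (q:ℤ) ≤ |(i:ℤ) - j| := Int.le_of_dvd (abs_pos.mpr hne') ((dvd_abs _ _).mpr hdvd)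
    have h3 : |(i:ℤ) - j| < q := by
      rw [abs_lt]
      constructor <;> [skip; skip] <;>
      · have hi' : (i:ℤ) < q := by exact_mod_cast hiT.1
        have hj' : (j:ℤ) < q := by exact_mod_cast hjT.1
        have : (0:ℤ) ≤ i := Int.ofNat_nonneg i
        have : (0:ℤ) ≤ j := Int.ofNat_nonneg j
        omega
    omega
  have hcard : T.card ≤ (Finset.Icc lo hi).card :=
    Finset.card_le_card_of_injOn k hmem hinj
  have h1 : ((hi:ℤ):ℝ) ≤ (q:ℝ) * (R - a) := Int.floor_le _
  have h2 : (q:ℝ) * (L - a) ≤ ((lo:ℤ):ℝ) := Int.le_ceil _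
  have hRL : (q:ℝ) * (R - L) = q * (v - u) + (q:ℝ) * (((q:ℝ)-1) * (max ε 0 + max (-ε) 0)) := by
    rw [hR, hL]; ring
  clear_value lo hi T ε L R k
  clear hlo hhi hT hmem hinj hk hε hL hR
  have hicc : ((Finset.Icc lo hi).card : ℝ) ≤ max (((hi + 1 - lo : ℤ)) : ℝ) 0 := by
    rw [Int.card_Icc]
    have h1 : (((hi + 1 - lo).toNat : ℤ) : ℝ) ≤ max (((hi + 1 - lo : ℤ)) : ℝ) 0 := by
      rw [Int.toNat_eq_max]
      push_cast
      exact le_refl _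
    exact_mod_cast h1
  have habs : max ε 0 + max (-ε) 0 = |ε| := by
    rcases le_total ε 0 with h | h
    · rw [max_eq_right h, max_eq_left (by linarith : (0:ℝ) ≤ -ε), abs_of_nonpos h]; ring
    · rw [max_eq_left h, max_eq_right (by linarith : -ε ≤ (0:ℝ)), abs_of_nonneg h]; ring
  have hεb : (q:ℝ) * ((q:ℝ) - 1) * |ε| ≤ 1 := by
    calc (q:ℝ) * ((q:ℝ)-1) * |ε| = |ε| * ((q:ℝ) * ((q:ℝ)-1)) := by ring
      _ ≤ 1 := happ
  rw [habs] at hRL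
  have hfin : max (((hi + 1 - lo : ℤ)) : ℝ) 0 ≤ q * (v - u) + 2 := by
    have hvu : (0:ℝ) ≤ (q:ℝ) * (v - u) := mul_nonneg (le_of_lt hqR) (by linarith)
    have hmain : ((hi + 1 - lo : ℤ) : ℝ) ≤ q * (v - u) + 2 := by
      push_cast
      have hsm : (q:ℝ) * (((q:ℝ)-1) * |ε|) ≤ 1 := by
        rcases le_or_gt (q:ℝ) 1 with h | h
        · have hh : ((q:ℝ)-1) * |ε| ≤ 0 := mul_nonpos_of_nonpos_of_nonneg (by linarith) (abs_nonneg _)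
          nlinarith
        · calc (q:ℝ) * (((q:ℝ)-1) * |ε|) = (q:ℝ) * ((q:ℝ)-1) * |ε| := by ring
            _ ≤ 1 := hεb
      linarith [hRL, h1, h2, hsm]
    exact max_le hmain (by linarith)
  calc (T.card : ℝ) ≤ ((Finset.Icc lo hi).card : ℝ) := by exact_mod_cast hcard
    _ ≤ max (((hi + 1 - lo : ℤ)) : ℝ) 0 := hicc
    _ ≤ q * (v - u) + 2 := hfin

private lemma core_sum_bound (q : ℕ) (F : ℝ → ℝ) (V : Finset ℝ) (hcard : V.card = q)
    (hVsub : ∀ x ∈ V, x ∈ Set.Ioo (0:ℝ) 1)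
    (hmono : MonotoneOn F (Set.Ioo 0 1))
    (hFcont : ContinuousOn F (Set.Ioo 0 1))
    (C₁ C₂ : ℝ) (hC₁0 : 0 ≤ C₁) (hC₂0 : 0 ≤ C₂)
    (hIB : ∀ u v : ℝ, u ∈ Set.Ioo (0:ℝ) 1 → v ∈ V → u ≤ v → (∫ t in u..v, F t) ≤ C₁)
    (hC₂ : ∀ x ∈ V, F x ≤ C₂)
    (hcount : ∀ u v : ℝ, u ≤ v →
      ((V.filter (fun x => x ∈ Set.Icc u v)).card : ℝ) ≤ q * (v - u) + 2) :
    ∑ x ∈ V, F x ≤ q * C₁ + 2 * C₂ := by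
  rcases Nat.lt_or_ge q 3 with hq3 | hq3
  · -- small case
    have h1 : ∑ x ∈ V, F x ≤ V.card • C₂ := Finset.sum_le_card_nsmul V F C₂ hC₂
    rw [hcard] at h1
    have h2 : (q : ℝ) * C₂ ≤ 2 * C₂ := by
      apply mul_le_mul_of_nonneg_right _ hC₂0
      exact_mod_cast Nat.le_of_lt_succ hq3
    have h3 : (0:ℝ) ≤ (q:ℝ) * C₁ := by positivity
    have h4 : (q : ℕ) • C₂ = (q:ℝ) * C₂ := by
      rw [nsmul_eq_mul]
    linarith [h1, h2, h3, h4 ▸ h1]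
  · -- main case
    have hq0 : 0 < q := by omega
    have hqR : (0:ℝ) < q := by exact_mod_cast hq0
    set e := V.orderIsoOfFin hcard with he
    set z : ℕ → ℝ := fun j => if h : j < q then (e ⟨j, h⟩ : ℝ) else 0 with hz
    have hzV : ∀ j, j < q → z j ∈ V := by
      intro j hj
      simp only [hz, dif_pos hj]
      exact (e ⟨j, hj⟩).2
    have hzlt : ∀ i j, i < j → ∀ hj : j < q, z i < z j := by
      intro i j hij hj
      have hi : i < q := lt_trans hij hj
      simp only [hz, dif_pos hi, dif_pos hj]
      have : (⟨i, hi⟩ : Fin q) < ⟨j, hj⟩ := hij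
      exact_mod_cast (e.lt_iff_lt).mpr this
    have hzle : ∀ i j, i ≤ j → ∀ hj : j < q, z i ≤ z j := by
      intro i j hij hj
      rcases Nat.lt_or_ge i j with h | h
      · exact le_of_lt (hzlt i j h hj)
      · have : i = j := le_antisymm hij h
        rw [this]
    have hinjOn : Set.InjOn z (Finset.range q) := by
      intro i hi j hj hij
      simp only [Finset.coe_range, Set.mem_Iio] at hi hj
      by_contra hne
      rcases Nat.lt_or_ge i j with h | h
      · exact absurd hij (ne_of_lt (hzlt i j h hj))
      · have h' : j < i := by omega
        exact absurd hij.symm (ne_of_lt (hzlt j i h' hi))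
    have himg : V = (Finset.range q).image z := by
      have hsub : (Finset.range q).image z ⊆ V := by
        intro x hx
        rw [Finset.mem_image] at hx
        obtain ⟨j, hj, rfl⟩ := hx
        exact hzV j (Finset.mem_range.mp hj)
      have hcimg : ((Finset.range q).image z).card = q := by
        rw [Finset.card_image_of_injOn hinjOn, Finset.card_range]
      exact (Finset.eq_of_subset_of_card_le hsub (by rw [hcard, hcimg])).symm
    have hsum : ∑ x ∈ V, F x = ∑ j ∈ Finset.range q, F (z j) := by
      rw [himg]
      exact Finset.sum_image (fun x hx y hy h => hinjOn (by simpa using hx) (by simpa using hy) h)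
    set m := q - 2 with hm
    have hmq : m + 2 = q := by omega
    have hmcast : (m : ℝ) = (q:ℝ) - 2 := by
      rw [hm]
      push_cast [Nat.cast_sub (by omega : 2 ≤ q)]
      ring
    set top : ℝ := z (m + 1) with htop
    have htopV : top ∈ V := hzV (m+1) (by omega)
    have htopIoo : top ∈ Set.Ioo (0:ℝ) 1 := hVsub top htopV
    -- counting consequence
    have hzc : ∀ j, j < q → z j ≤ top - ((q:ℝ) - j - 2) / q := by
      intro j hj
      have hjle : z j ≤ top := hzle j (m+1) (by omega) (by omega)
      have hSsub : (Finset.Icc j (q-1)).image z ⊆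
          V.filter (fun x => x ∈ Set.Icc (z j) top) := by
        intro x hx
        rw [Finset.mem_image] at hx
        obtain ⟨k, hk, rfl⟩ := hx
        rw [Finset.mem_Icc] at hk
        have hkq : k < q := by omega
        rw [Finset.mem_filter]
        refine ⟨hzV k hkq, ?_, ?_⟩
        · exact hzle j k hk.1 hkq
        · have : k ≤ m + 1 := by omega
          exact hzle k (m+1) this (by omega)
      have hScard : ((Finset.Icc j (q-1)).image z).card = q - j := by
        rw [Finset.card_image_of_injOn ?inj, Nat.card_Icc]
        · omega
        case inj =>
          intro x hx yy hy hxy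
          apply hinjOn _ _ hxy
          · simp only [Finset.coe_Icc, Set.mem_Icc] at hx
            simp only [Finset.coe_range, Set.mem_Iio]; omega
          · simp only [Finset.coe_Icc, Set.mem_Icc] at hy
            simp only [Finset.coe_range, Set.mem_Iio]; omega
      have hcnt := hcount (z j) top hjle
      have hle1 : ((q - j : ℕ) : ℝ) ≤ ((V.filter (fun x => x ∈ Set.Icc (z j) top)).card : ℝ) := by
        have := Finset.card_le_card hSsub
        rw [hScard] at this
        exact_mod_cast this
      have hqj : ((q - j : ℕ) : ℝ) = (q:ℝ) - j := by
        push_cast [Nat.cast_sub (le_of_lt hj)]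
        ring
      rw [hqj] at hle1
      have : (q:ℝ) - j ≤ q * (top - z j) + 2 := le_trans hle1 hcnt
      have h2 : ((q:ℝ) - j - 2)/q ≤ top - z j := by
        rw [div_le_iff₀ hqR]
        nlinarith [this]
      linarith
    -- the comparison points
    set c : ℕ → ℝ := fun j => top - ((m:ℝ) - j) / q with hc
    have hcz : ∀ j, j < q → z j ≤ c j := by
      intro j hj
      have := hzc j hj
      simp only [hc]
      have hcast : (q:ℝ) - j - 2 = (m:ℝ) - j := by rw [hmcast]; ring
      rw [hcast] at this
      exact this
    have hctop : ∀ j, j ≤ m → c j ≤ top := by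
      intro j hj
      simp only [hc]
      have : (0:ℝ) ≤ ((m:ℝ) - j) / q := by
        apply div_nonneg _ (le_of_lt hqR)
        have : (j:ℝ) ≤ m := by exact_mod_cast hj
        linarith
      linarith
    have hcIoo : ∀ j, j ≤ m → c j ∈ Set.Ioo (0:ℝ) 1 := by
      intro j hj
      constructor
      · have h0 : 0 < z j := (hVsub _ (hzV j (by omega))).1
        linarith [hcz j (by omega)]
      · exact lt_of_le_of_lt (hctop j hj) htopIoo.2
    have hstep : ∀ j, j < m → F (z j) * (1/q) ≤ ∫ t in (c j)..(c (j+1)), F t := by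
      intro j hj
      have hcj : c j ∈ Set.Ioo (0:ℝ) 1 := hcIoo j (by omega)
      have hcj1 : c (j+1) ∈ Set.Ioo (0:ℝ) 1 := hcIoo (j+1) (by omega)
      have hdiff : c (j+1) - c j = 1/q := by
        simp only [hc]
        push_cast
        field_simp
        ring
      have hle : c j ≤ c (j+1) := by
        have h0 : (0:ℝ) ≤ c (j+1) - c j := by rw [hdiff]; positivity
        exact sub_nonneg.mp h0
      have hIccIoo : Set.Icc (c j) (c (j+1)) ⊆ Set.Ioo (0:ℝ) 1 := by
        intro x hx
        exact ⟨lt_of_lt_of_le hcj.1 hx.1, lt_of_le_of_lt hx.2 hcj1.2⟩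
      have hintF : IntervalIntegrable F MeasureTheory.volume (c j) (c (j+1)) := by
        apply ContinuousOn.intervalIntegrable
        rw [Set.uIcc_of_le hle]
        exact hFcont.mono hIccIoo
      have hmono2 : ∀ x ∈ Set.Icc (c j) (c (j+1)), F (c j) ≤ F x := by
        intro x hx
        exact hmono hcj (hIccIoo hx) hx.1
      have h1 : ∫ t in (c j)..(c (j+1)), F (c j) ≤ ∫ t in (c j)..(c (j+1)), F t := by
        apply intervalIntegral.integral_mono_on hle (intervalIntegrable_const) hintF hmono2
      rw [intervalIntegral.integral_const, hdiff] at h1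
      have h2 : F (z j) ≤ F (c j) :=
        hmono (hVsub _ (hzV j (by omega))) hcj (hcz j (by omega))
      have h3 : F (z j) * (1/q) ≤ F (c j) * (1/q) := by
        apply mul_le_mul_of_nonneg_right h2 (by positivity)
      calc F (z j) * (1/q) ≤ F (c j) * (1/q) := h3
        _ = (1/q : ℝ) • F (c j) := by rw [smul_eq_mul]; ring
        _ ≤ ∫ t in (c j)..(c (j+1)), F t := h1
    have hints : ∀ k, k < m → IntervalIntegrable F MeasureTheory.volume (c k) (c (k+1)) := by
      intro k hk
      have hcj : c k ∈ Set.Ioo (0:ℝ) 1 := hcIoo k (by omega)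
      have hcj1 : c (k+1) ∈ Set.Ioo (0:ℝ) 1 := hcIoo (k+1) (by omega)
      apply ContinuousOn.intervalIntegrable
      apply hFcont.mono
      intro x hx
      rw [Set.mem_uIcc] at hx
      rcases hx with hx | hx
      · exact ⟨lt_of_lt_of_le hcj.1 hx.1, lt_of_le_of_lt hx.2 hcj1.2⟩
      · exact ⟨lt_of_lt_of_le hcj1.1 hx.1, lt_of_le_of_lt hx.2 hcj.2⟩
    have hchain : ∑ j ∈ Finset.range m, ∫ t in (c j)..(c (j+1)), F t = ∫ t in (c 0)..(c m), F t :=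
      intervalIntegral.sum_integral_adjacent_intervals hints
    have hcm : c m = top := by simp [hc]
    have hc0top : c 0 ≤ top := hctop 0 (by omega)
    have hintbound : ∫ t in (c 0)..(c m), F t ≤ C₁ := by
      rw [hcm]
      exact hIB (c 0) top (hcIoo 0 (by omega)) htopV hc0top
    have hmainsum : ∑ j ∈ Finset.range m, F (z j) ≤ q * C₁ := by
      have h1 : ∑ j ∈ Finset.range m, F (z j) * (1/q) ≤ C₁ := by
        calc ∑ j ∈ Finset.range m, F (z j) * (1/q)
            ≤ ∑ j ∈ Finset.range m, ∫ t in (c j)..(c (j+1)), F t :=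
              Finset.sum_le_sum (fun j hj => hstep j (Finset.mem_range.mp hj))
          _ = ∫ t in (c 0)..(c m), F t := hchain
          _ ≤ C₁ := hintbound
      have h2 : (∑ j ∈ Finset.range m, F (z j)) * (1/q) ≤ C₁ := by
        rw [Finset.sum_mul]
        exact h1
      calc ∑ j ∈ Finset.range m, F (z j)
          = ((∑ j ∈ Finset.range m, F (z j)) * (1/q)) * q := by field_simp
        _ ≤ C₁ * q := mul_le_mul_of_nonneg_right h2 (le_of_lt hqR)
        _ = q * C₁ := by ring
    -- assemble
    have hsplit : ∑ j ∈ Finset.range q, F (z j)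
        = ∑ j ∈ Finset.range m, F (z j) + F (z m) + F (z (m+1)) := by
      rw [← hmq, Finset.sum_range_succ, Finset.sum_range_succ]
    have hFzm : F (z m) ≤ C₂ := hC₂ _ (hzV m (by omega))
    have hFzm1 : F (z (m+1)) ≤ C₂ := hC₂ _ (hzV (m+1) (by omega))
    rw [hsum, hsplit]
    linarith [hmainsum]

end Auxiliary

/-- Denjoy–Koksma for the derivative: for a continued fraction denominator `q` of `α`
one has `|S_q f'(a)| ≤ q f_{q,max}(a) + 2 f'_{q,max}(a)`. -/
theorem stmt3 (α γ : ℝ) (hα : α ∈ Set.Ioo (0 : ℝ) 1) (hirr : Irrational α)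
    (hγ : γ ∈ Set.Ioo (0 : ℝ) (1 / 2)) (f : ℝ → ℝ) (hf : IsKocherginRoof γ f)
    (n : ℕ) (q : ℕ) (hq : (q : ℝ) = (GenContFract.of α).dens n)
    (a : ℝ) (ha : ∀ i : ℕ, i ≤ q → ∀ m : ℤ, a + i * α ≠ m) :
    |birkS α (deriv f) q a| ≤ q * fMax α f q a + 2 * fMax α (fun x => |deriv f x|) q a := by
  obtain ⟨hC2f, hfpos, hfpp, -, -⟩ := hf
  set F := deriv f with hF
  set y : ℕ → ℝ := fun i => Int.fract (a + i * α) with hy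
  set C₁ := fMax α f q a with hC₁def
  set C₂ := fMax α (fun x => |deriv f x|) q a with hC₂def
  have hC₁mem : ∀ i, i ≤ q → f (y i) ≤ C₁ := by
    intro i hi
    exact Finset.le_sup' (fun i : ℕ => f (Int.fract (a + i * α)))
      (Finset.mem_range.mpr (by omega))
  have hC₂mem : ∀ i, i ≤ q → |F (y i)| ≤ C₂ := by
    intro i hi
    exact Finset.le_sup' (fun i : ℕ => |deriv f (Int.fract (a + i * α))|)
      (Finset.mem_range.mpr (by omega))
  have hC₂0 : 0 ≤ C₂ := le_trans (abs_nonneg _) (hC₂mem 0 (Nat.zero_le q))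
  rcases Nat.eq_zero_or_pos q with hq0 | hq0
  · subst hq0
    have : birkS α F 0 a = 0 := by simp [birkS]
    rw [this]
    simp only [Nat.cast_zero, zero_mul, zero_add, abs_zero]
    linarith
  -- q ≥ 1
  have hq1 : 1 ≤ q := hq0
  have hqR : (0:ℝ) < q := by exact_mod_cast hq0
  have hyIoo : ∀ i, i ≤ q → y i ∈ Set.Ioo (0:ℝ) 1 := by
    intro i hi
    refine ⟨?_, Int.fract_lt_one _⟩
    rcases lt_or_eq_of_le (Int.fract_nonneg (a + i * α)) with h | h
    · exact h
    · exfalso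
      have h0 : a + i * α - ⌊a + i * α⌋ = 0 := by
        have : Int.fract (a + i * α) = a + i * α - ⌊a + i * α⌋ := rfl
        rw [← this, ← h]
      exact ha i hi ⌊a + i * α⌋ (by linarith)
  have hyinj : ∀ i ∈ Finset.range q, ∀ j ∈ Finset.range q, y i = y j → i = j := by
    intro i hi j hj hij
    by_contra hne
    obtain ⟨z, hz⟩ := Int.fract_eq_fract.mp hij
    have hzz : ((i:ℝ) - j) * α = z := by
      have : (a + i * α) - (a + j * α) = ((i:ℝ) - j) * α := by ring
      linarith [hz, this.symm ▸ hz]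
    have hd : (i:ℝ) - j ≠ 0 := by
      intro h
      apply hne
      have : (i:ℝ) = j := by linarith
      exact_mod_cast this
    apply hirr
    refine ⟨(z : ℚ) / ((i:ℚ) - j), ?_⟩
    push_cast
    rw [div_eq_iff hd]
    linear_combination -hzz
  have hFcont : ContinuousOn F (Set.Ioo 0 1) :=
    hC2f.continuousOn_deriv_of_isOpen isOpen_Ioo (by norm_num)
  have hfdiff : ∀ x ∈ Set.Ioo (0:ℝ) 1, DifferentiableAt ℝ f x := by
    intro x hx
    exact (hC2f.differentiableOn (by norm_num)).differentiableAt (isOpen_Ioo.mem_nhds hx)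
  have hFmono : MonotoneOn F (Set.Ioo 0 1) := by
    apply StrictMonoOn.monotoneOn
    apply strictMonoOn_of_deriv_pos (convex_Ioo 0 1) hFcont
    rw [interior_Ioo]
    exact fun x hx => hfpp x hx
  have hFTC : ∀ u v : ℝ, u ∈ Set.Ioo (0:ℝ) 1 → v ∈ Set.Ioo (0:ℝ) 1 → u ≤ v →
      (∫ t in u..v, F t) = f v - f u := by
    intro u v hu hv huv
    have hsub : Set.uIcc u v ⊆ Set.Ioo (0:ℝ) 1 := by
      rw [Set.uIcc_of_le huv]
      intro x hx
      exact ⟨lt_of_lt_of_le hu.1 hx.1, lt_of_le_of_lt hx.2 hv.2⟩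
    apply intervalIntegral.integral_deriv_eq_sub
    · exact fun x hx => hfdiff x (hsub hx)
    · exact (hFcont.mono hsub).intervalIntegrable
  have hC₁0 : 0 ≤ C₁ :=
    le_trans (le_of_lt (hfpos _ (hyIoo 0 (Nat.zero_le q)))) (hC₁mem 0 (Nat.zero_le q))
  -- counting
  obtain ⟨p, hcop, happ⟩ := cf_coprime_approx α hirr n q hq hq1
  have hcnt : ∀ u v : ℝ, u ≤ v →
      (((Finset.range q).filter (fun i : ℕ => y i ∈ Set.Icc u v)).card : ℝ)
        ≤ q * (v - u) + 2 := fun u v huv => orbit_count α a q hq0 p hcop happ u v huv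
  set V : Finset ℝ := (Finset.range q).image y with hV
  have hcardV : V.card = q := by
    rw [hV, Finset.card_image_of_injOn (fun x hx y' hy' h => hyinj x hx y' hy' h),
      Finset.card_range]
  have hVmem : ∀ x ∈ V, ∃ i, i < q ∧ y i = x := by
    intro x hx
    rw [hV, Finset.mem_image] at hx
    obtain ⟨i, hi, rfl⟩ := hx
    exact ⟨i, Finset.mem_range.mp hi, rfl⟩
  have hVsub : ∀ x ∈ V, x ∈ Set.Ioo (0:ℝ) 1 := by
    intro x hx
    obtain ⟨i, hi, rfl⟩ := hVmem x hx
    exact hyIoo i (le_of_lt hi)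
  have hfV : ∀ x ∈ V, f x ≤ C₁ := by
    intro x hx
    obtain ⟨i, hi, rfl⟩ := hVmem x hx
    exact hC₁mem i (le_of_lt hi)
  have hFV : ∀ x ∈ V, |F x| ≤ C₂ := by
    intro x hx
    obtain ⟨i, hi, rfl⟩ := hVmem x hx
    exact hC₂mem i (le_of_lt hi)
  have hcountV : ∀ u v : ℝ, u ≤ v →
      ((V.filter (fun x => x ∈ Set.Icc u v)).card : ℝ) ≤ q * (v - u) + 2 := by
    intro u v huv
    rw [hV, Finset.filter_image]
    have : ((Finset.range q).filter (fun i : ℕ => y i ∈ Set.Icc u v)).card =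
        (((Finset.range q).filter (fun i : ℕ => y i ∈ Set.Icc u v)).image y).card := by
      rw [Finset.card_image_of_injOn]
      intro x hx y' hy' h
      exact hyinj x (Finset.mem_of_mem_filter _ hx) y' (Finset.mem_of_mem_filter _ hy') h
    rw [← this]
    exact hcnt u v huv
  have hbirk : birkS α F q a = ∑ x ∈ V, F x := by
    rw [hV, Finset.sum_image hyinj, birkS]
  -- upper bound
  have hupper : ∑ x ∈ V, F x ≤ q * C₁ + 2 * C₂ := by
    apply core_sum_bound q F V hcardV hVsub hFmono hFcont C₁ C₂ hC₁0 hC₂0 _ _ hcountV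
    · intro u v hu hv huv
      rw [hFTC u v hu (hVsub v hv) huv]
      have h1 : 0 < f u := hfpos u hu
      have h2 : f v ≤ C₁ := hfV v hv
      linarith
    · intro x hx
      exact le_trans (le_abs_self _) (hFV x hx)
  -- lower bound via reflection
  set G : ℝ → ℝ := fun x => -F (1 - x) with hG
  set W : Finset ℝ := V.image (fun x => 1 - x) with hW
  have hrefl : ∀ x : ℝ, x ∈ Set.Ioo (0:ℝ) 1 → (1 - x) ∈ Set.Ioo (0:ℝ) 1 := by
    intro x hx
    exact ⟨by linarith [hx.2], by linarith [hx.1]⟩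
  have hreflinj : ∀ s : Finset ℝ, ∀ x ∈ s, ∀ y' ∈ s, (1:ℝ) - x = 1 - y' → x = y' := by
    intro s x _ y' _ h
    linarith
  have hcardW : W.card = q := by
    rw [hW, Finset.card_image_of_injOn (hreflinj V), hcardV]
  have hWmem : ∀ x ∈ W, (1 - x) ∈ V ∧ x ∈ Set.Ioo (0:ℝ) 1 := by
    intro x hx
    rw [hW, Finset.mem_image] at hx
    obtain ⟨v, hv, rfl⟩ := hx
    constructor
    · have : (1:ℝ) - (1 - v) = v := by ring
      rw [this]; exact hv
    · exact hrefl v (hVsub v hv)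
  have hGmono : MonotoneOn G (Set.Ioo 0 1) := by
    intro x hx x' hx' hxx'
    simp only [hG]
    have h1 : (1 - x') ≤ (1 - x) := by linarith
    exact neg_le_neg (hFmono (hrefl x' hx') (hrefl x hx) h1)
  have hGcont : ContinuousOn G (Set.Ioo 0 1) := by
    apply ContinuousOn.neg
    apply hFcont.comp ((continuous_const.sub continuous_id).continuousOn)
    intro x hx
    exact hrefl x hx
  have hlower : ∑ x ∈ W, G x ≤ q * C₁ + 2 * C₂ := by
    apply core_sum_bound q G W hcardW (fun x hx => (hWmem x hx).2) hGmono hGcont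
      C₁ C₂ hC₁0 hC₂0
    · intro u v hu hv huv
      have h1v : (1 - v) ∈ Set.Ioo (0:ℝ) 1 := hVsub _ (hWmem v hv).1
      have h1u : (1 - u) ∈ Set.Ioo (0:ℝ) 1 := hrefl u hu
      have hle : (1 - v) ≤ (1 - u) := by linarith
      have hcomp : (∫ t in u..v, G t) = -(∫ t in (1-v)..(1-u), F t) := by
        rw [hG]
        rw [intervalIntegral.integral_neg]
        congr 1
        exact intervalIntegral.integral_comp_sub_left F 1
      rw [hcomp, hFTC (1-v) (1-u) h1v h1u hle]
      have h1 : 0 < f (1 - u) := hfpos _ h1u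
      have h2 : f (1 - v) ≤ C₁ := hfV _ (hWmem v hv).1
      linarith
    · intro x hx
      simp only [hG]
      calc -F (1 - x) ≤ |F (1 - x)| := neg_le_abs _
        _ ≤ C₂ := hFV _ (hWmem x hx).1
    · intro u v huv
      rw [hW, Finset.filter_image]
      have hcardeq : ((V.filter (fun x => (1:ℝ) - x ∈ Set.Icc u v)).image (fun x => 1 - x)).card
          = (V.filter (fun x => (1:ℝ) - x ∈ Set.Icc u v)).card := by
        apply Finset.card_image_of_injOn
        intro x hx y' hy' h
        exact hreflinj _ x (Finset.mem_of_mem_filter _ hx) y' (Finset.mem_of_mem_filter _ hy') h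
      rw [hcardeq]
      have hseteq : V.filter (fun x => (1:ℝ) - x ∈ Set.Icc u v)
          = V.filter (fun x => x ∈ Set.Icc (1-v) (1-u)) := by
        apply Finset.filter_congr
        intro x _
        simp only [Set.mem_Icc]
        constructor
        · intro h; exact ⟨by linarith [h.2], by linarith [h.1]⟩
        · intro h; exact ⟨by linarith [h.2], by linarith [h.1]⟩
      rw [hseteq]
      have := hcountV (1-v) (1-u) (by linarith)
      calc ((V.filter (fun x => x ∈ Set.Icc (1-v) (1-u))).card : ℝ)
          ≤ q * ((1-u) - (1-v)) + 2 := this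
        _ = q * (v - u) + 2 := by ring
  have hsumW : ∑ x ∈ W, G x = -∑ x ∈ V, F x := by
    rw [hW, Finset.sum_image (hreflinj V), ← Finset.sum_neg_distrib]
    apply Finset.sum_congr rfl
    intro x _
    simp only [hG]
    have : (1:ℝ) - (1 - x) = x := by ring
    rw [this]
  rw [hbirk]
  rw [hsumW] at hlower
  exact abs_le.mpr ⟨by linarith, hupper⟩
end

section
/- Let α ∈ (0,1) be irrational with slowly growing denominators, let γ ∈ (0,1/2), and let f be a Kochergin roof function with exponent γ. Then there exists n₀ such that for every integer n ≥ n₀ and every a ∈ ℝ with a + iα ∉ ℤ for all integers 0 ≤ i ≤ n, one has S_n f(a) ≤ n (log n)² + f_{n,max}(a). -/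
open Filter

/-- `α` has slowly growing continued fraction denominators: eventually
`q_{n+1} ≤ q_n (log q_n)²`. -/
def SlowDens (α : ℝ) : Prop :=
  ∃ n₀ : ℕ, ∀ n : ℕ, n₀ ≤ n →
    (GenContFract.of α).dens (n + 1) ≤
      (GenContFract.of α).dens n * (Real.log ((GenContFract.of α).dens n)) ^ 2

lemma sum_rpow_le (γ : ℝ) (hγ0 : 0 < γ) (hγ1 : γ < 1) (N : ℕ) :
    ∑ k ∈ Finset.range N, ((k : ℝ) + 1) ^ (-γ) ≤ (N : ℝ) ^ (1 - γ) / (1 - γ) := by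
  have h1γ : (0:ℝ) < 1 - γ := by linarith
  induction N with
  | zero => simp [Real.zero_rpow (by linarith : (1:ℝ) - γ ≠ 0)]
  | succ N ih =>
    rw [Finset.sum_range_succ]
    have hy : (0:ℝ) < (N:ℝ) + 1 := by positivity
    -- key : (N:ℝ)^(1-γ) + (1-γ)*((N:ℝ)+1)^(-γ) ≤ ((N:ℝ)+1)^(1-γ)
    have key : (N:ℝ)^(1-γ) + (1-γ)*((N:ℝ)+1)^(-γ) ≤ ((N:ℝ)+1)^(1-γ) := by
      have hb : ((1:ℝ) + (-(1/((N:ℝ)+1))))^(1-γ) ≤ 1 + (1-γ) * (-(1/((N:ℝ)+1))) := by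
        apply rpow_one_add_le_one_add_mul_self (by
          have : 1/((N:ℝ)+1) ≤ 1 := by
            rw [div_le_one hy]; linarith
          linarith) (le_of_lt h1γ) (by linarith)
      have h2 : (1 + (-(1/((N:ℝ)+1)))) = (N:ℝ)/((N:ℝ)+1) := by field_simp; ring
      rw [h2] at hb
      have h3 : ((N:ℝ)/((N:ℝ)+1))^(1-γ) = (N:ℝ)^(1-γ) / ((N:ℝ)+1)^(1-γ) := by
        rw [Real.div_rpow (Nat.cast_nonneg N) (le_of_lt hy)]
      rw [h3] at hb
      have hpos : (0:ℝ) < ((N:ℝ)+1)^(1-γ) := Real.rpow_pos_of_pos hy _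
      have hb' := mul_le_mul_of_nonneg_right hb (le_of_lt hpos)
      rw [div_mul_cancel₀ _ (ne_of_gt hpos)] at hb'
      have h4 : (1 + (1-γ) * (-(1/((N:ℝ)+1)))) * ((N:ℝ)+1)^(1-γ)
          = ((N:ℝ)+1)^(1-γ) - (1-γ) * (((N:ℝ)+1)^(1-γ) / ((N:ℝ)+1)) := by ring
      rw [h4] at hb'
      have h5 : ((N:ℝ)+1)^(1-γ) / ((N:ℝ)+1) = ((N:ℝ)+1)^(-γ) := by
        rw [eq_comm, eq_div_iff (ne_of_gt hy)]
        rw [← Real.rpow_add_one (ne_of_gt hy) (-γ)]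
        congr 1; ring
      rw [h5] at hb'
      linarith
    have : ((N:ℝ)+1)^(-γ) ≤ (((N:ℝ)+1)^(1-γ) - (N:ℝ)^(1-γ))/(1-γ) := by
      rw [le_div_iff₀ h1γ]; linarith
    have hsplit : (((N:ℝ)+1)^(1-γ) - (N:ℝ)^(1-γ))/(1-γ)
        = ((N:ℝ)+1)^(1-γ)/(1-γ) - (N:ℝ)^(1-γ)/(1-γ) := sub_div _ _ _
    push_cast
    linarith [ih, this]

lemma sep_lower (T : Finset ℕ) (x : ℕ → ℝ) (c : ℝ) (hc : 0 < c)
    (hlb : ∀ i ∈ T, c ≤ x i)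
    (hsep : ∀ i ∈ T, ∀ j ∈ T, i ≠ j → 2*c ≤ |x i - x j|) :
    ∀ i ∈ T, c * (((T.filter (fun j => x j < x i)).card : ℝ) + 1) ≤ x i := by
  suffices H : ∀ k : ℕ, ∀ i ∈ T, (T.filter (fun j => x j < x i)).card = k →
      c * ((k : ℝ) + 1) ≤ x i by
    intro i hi; exact H _ i hi rfl
  intro k
  induction k using Nat.strong_induction_on with
  | _ k IH =>
    intro i hi hk
    rcases Nat.eq_zero_or_pos k with rfl | hkpos
    · simpa using hlb i hi
    · have hne : (T.filter (fun j => x j < x i)).Nonempty := by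
        rw [← Finset.card_pos, hk]; exact hkpos
      obtain ⟨j, hjmem, hjmax⟩ := Finset.exists_max_image _ x hne
      have hjT : j ∈ T := (Finset.mem_filter.mp hjmem).1
      have hji : x j < x i := (Finset.mem_filter.mp hjmem).2
      have hij : i ≠ j := by rintro rfl; exact lt_irrefl _ hji
      -- the filter for j equals filter for i minus j
      have hsub1 : T.filter (fun l => x l < x j) ⊆ (T.filter (fun l => x l < x i)).erase j := by
        intro l hl
        rw [Finset.mem_erase]
        have hlT := (Finset.mem_filter.mp hl).1
        have hlj := (Finset.mem_filter.mp hl).2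
        exact ⟨by rintro rfl; exact lt_irrefl _ hlj,
          Finset.mem_filter.mpr ⟨hlT, hlj.trans hji⟩⟩
      have hsub2 : (T.filter (fun l => x l < x i)).erase j ⊆ T.filter (fun l => x l < x j) := by
        intro l hl
        have hlj : l ≠ j := (Finset.mem_erase.mp hl).1
        have hlf := (Finset.mem_erase.mp hl).2
        have hlT := (Finset.mem_filter.mp hlf).1
        have hle : x l ≤ x j := hjmax l hlf
        have hne' : x l ≠ x j := by
          intro he
          have := hsep l hlT j hjT hlj
          rw [he, sub_self, abs_zero] at this
          linarith
        exact Finset.mem_filter.mpr ⟨hlT, lt_of_le_of_ne hle hne'⟩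
      have hcard : (T.filter (fun l => x l < x j)).card = k - 1 := by
        have := Finset.Subset.antisymm hsub1 hsub2
        rw [this, Finset.card_erase_of_mem hjmem, hk]
      have hIH : c * (((k - 1 : ℕ) : ℝ) + 1) ≤ x j :=
        IH (k-1) (Nat.sub_lt hkpos one_pos) j hjT hcard
      have hstep : x j + 2*c ≤ x i := by
        have := hsep i hi j hjT hij
        rw [abs_of_pos (by linarith : (0:ℝ) < x i - x j)] at this
        linarith
      have hcast : ((k - 1 : ℕ) : ℝ) = (k : ℝ) - 1 := by
        have : (1:ℕ) ≤ k := hkpos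
        push_cast [Nat.cast_sub this]; ring
      rw [hcast] at hIH
      nlinarith [hIH, hstep, hc]

lemma sep_sum (T : Finset ℕ) (x : ℕ → ℝ) (c γ : ℝ) (hc : 0 < c)
    (hγ0 : 0 < γ) (hγ1 : γ < 1)
    (hlb : ∀ i ∈ T, c ≤ x i)
    (hsep : ∀ i ∈ T, ∀ j ∈ T, i ≠ j → 2*c ≤ |x i - x j|)
    (hsr : ∀ N : ℕ, ∑ k ∈ Finset.range N, ((k : ℝ) + 1) ^ (-γ) ≤ (N : ℝ) ^ (1 - γ) / (1 - γ)) :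
    ∑ i ∈ T, (x i) ^ (-γ) ≤ c ^ (-γ) * ((T.card : ℝ) ^ (1 - γ) / (1 - γ)) := by
  classical
  set cnt : ℕ → ℕ := fun i => (T.filter (fun j => x j < x i)).card with hcnt
  have hlow := sep_lower T x c hc hlb hsep
  have step1 : ∑ i ∈ T, (x i) ^ (-γ) ≤ ∑ i ∈ T, c^(-γ) * (((cnt i : ℝ) + 1) ^ (-γ)) := by
    apply Finset.sum_le_sum
    intro i hi
    have h1 : 0 < c * ((cnt i : ℝ) + 1) := by positivity
    have h2 : c * ((cnt i : ℝ) + 1) ≤ x i := hlow i hi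
    have : (x i) ^ (-γ) ≤ (c * ((cnt i : ℝ) + 1)) ^ (-γ) := by
      rw [Real.rpow_neg (le_of_lt h1), Real.rpow_neg (by linarith : (0:ℝ) ≤ x i)]
      apply inv_anti₀ (Real.rpow_pos_of_pos h1 _)
      exact Real.rpow_le_rpow (le_of_lt h1) h2 (le_of_lt hγ0)
    calc (x i) ^ (-γ) ≤ (c * ((cnt i : ℝ) + 1)) ^ (-γ) := this
      _ = c^(-γ) * (((cnt i : ℝ) + 1) ^ (-γ)) :=
        Real.mul_rpow (le_of_lt hc) (by positivity)
  have hinj : Set.InjOn cnt T := by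
    intro i hi j hj hij
    by_contra hne
    have hxne : x i ≠ x j := by
      intro he
      have := hsep i hi j hj hne
      rw [he, sub_self, abs_zero] at this; linarith
    -- wlog x i < x j
    have key : ∀ a b : ℕ, a ∈ T → b ∈ T → x a < x b → cnt a < cnt b := by
      intro a b ha hb hab
      have hsub : insert a (T.filter (fun l => x l < x a)) ⊆ T.filter (fun l => x l < x b) := by
        intro l hl
        rcases Finset.mem_insert.mp hl with rfl | hl
        · exact Finset.mem_filter.mpr ⟨ha, hab⟩
        · have := Finset.mem_filter.mp hl
          exact Finset.mem_filter.mpr ⟨this.1, this.2.trans hab⟩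
      have := Finset.card_le_card hsub
      rw [Finset.card_insert_of_notMem (by simp)] at this
      simp only [hcnt]
      omega
    rcases lt_or_gt_of_ne hxne with h | h
    · exact absurd hij (Nat.ne_of_lt (key i j hi hj h)) 
    · exact absurd hij.symm (Nat.ne_of_lt (key j i hj hi h))
  have hmap : ∀ i ∈ T, cnt i ∈ Finset.range T.card := by
    intro i hi
    rw [Finset.mem_range]
    apply Finset.card_lt_card
    constructor
    · exact Finset.filter_subset _ _
    · intro hsub
      have := hsub hi
      simp at this
  have step2 : ∑ i ∈ T, (((cnt i : ℝ) + 1) ^ (-γ)) ≤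
      ∑ k ∈ Finset.range T.card, (((k : ℝ) + 1) ^ (-γ)) := by
    rw [← Finset.sum_image (f := fun k : ℕ => ((k:ℝ)+1)^(-γ)) (g := cnt)
      (fun a ha b hb h => hinj ha hb h)]
    · apply Finset.sum_le_sum_of_subset_of_nonneg
      · intro k hk
        obtain ⟨i, hi, rfl⟩ := Finset.mem_image.mp hk
        exact hmap i hi
      · intro k _ _; positivity
  calc ∑ i ∈ T, (x i) ^ (-γ) ≤ ∑ i ∈ T, c^(-γ) * (((cnt i : ℝ) + 1) ^ (-γ)) := step1
    _ = c^(-γ) * ∑ i ∈ T, (((cnt i : ℝ) + 1) ^ (-γ)) := by rw [Finset.mul_sum]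
    _ ≤ c^(-γ) * ∑ k ∈ Finset.range T.card, (((k : ℝ) + 1) ^ (-γ)) := by
        apply mul_le_mul_of_nonneg_left step2 (by positivity)
    _ ≤ c^(-γ) * ((T.card : ℝ) ^ (1 - γ) / (1 - γ)) := by
        apply mul_le_mul_of_nonneg_left (hsr T.card) (by positivity)


lemma cf_not_term {α : ℝ} (hirr : Irrational α) (n : ℕ) :
    ¬(GenContFract.of α).TerminatedAt n := by
  intro h
  obtain ⟨q, hq⟩ := (GenContFract.terminates_iff_rat α).1 ⟨n, h⟩
  exact hirr ⟨q, hq.symm⟩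

lemma cf_stream_ne_none {α : ℝ} (hirr : Irrational α) (n : ℕ) :
    GenContFract.IntFractPair.stream α n ≠ none := by
  cases n with
  | zero => rw [GenContFract.IntFractPair.stream_zero]; simp
  | succ n =>
    intro h
    exact cf_not_term hirr n
      (GenContFract.of_terminatedAt_n_iff_succ_nth_intFractPair_stream_eq_none.2 h)

lemma cf_dens_ge_one {α : ℝ} (hirr : Irrational α) (m : ℕ) :
    (1 : ℝ) ≤ (GenContFract.of α).dens m := by
  have h : (Nat.fib (m + 1) : ℝ) ≤ (GenContFract.of α).dens m := by
    apply GenContFract.succ_nth_fib_le_of_nth_den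
    cases m with
    | zero => exact Or.inl rfl
    | succ m => exact Or.inr (cf_not_term hirr _)
  have : (1 : ℝ) ≤ (Nat.fib (m+1) : ℝ) := by
    exact_mod_cast Nat.fib_pos.2 (Nat.succ_pos m)
  linarith

lemma cf_approx {α : ℝ} (hirr : Irrational α) (m : ℕ) :
    1/(2 * (GenContFract.of α).dens (m+1)) ≤
      (-1:ℝ)^m * ((GenContFract.of α).dens m * α - (GenContFract.of α).nums m) := by
  set g := GenContFract.of α with hg
  obtain ⟨ifp, stream_eq⟩ : ∃ ifp, GenContFract.IntFractPair.stream α m = some ifp :=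
    Option.ne_none_iff_exists'.1 (cf_stream_ne_none hirr m)
  have hfr : ifp.fr ≠ 0 := by
    intro h
    exact cf_stream_ne_none hirr (m+1)
      (GenContFract.IntFractPair.stream_eq_none_of_fr_eq_zero stream_eq h)
  have hfr0 : 0 < ifp.fr :=
    lt_of_le_of_ne (GenContFract.IntFractPair.nth_stream_fr_nonneg stream_eq) (Ne.symm hfr)
  have hfr1 : ifp.fr < 1 := GenContFract.IntFractPair.nth_stream_fr_lt_one stream_eq
  have hfrinv : 1 < ifp.fr⁻¹ := (one_lt_inv₀ hfr0).2 hfr1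
  -- notation
  set B := (g.contsAux (m+1)).b with hB
  set pB := (g.contsAux m).b with hpB
  have hBdens : g.dens m = B := by
    rw [GenContFract.den_eq_conts_b, GenContFract.nth_cont_eq_succ_nth_contAux]
  have hB1 : (1:ℝ) ≤ B := by rw [← hBdens]; exact cf_dens_ge_one hirr m
  have hpB0 : (0:ℝ) ≤ pB := GenContFract.zero_le_of_contsAux_b
  have hD : 0 < ifp.fr⁻¹ * B + pB := by nlinarith
  -- exact formula
  have hsub := GenContFract.sub_convs_eq stream_eq
  simp only [if_neg hfr] at hsub
  rw [GenContFract.conv_eq_num_div_den] at hsub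
  have hBne : B ≠ 0 := by linarith
  have hkey : g.dens m * α - g.nums m = (-1:ℝ)^m / (ifp.fr⁻¹ * B + pB) := by
    have h1 : α - g.nums m / g.dens m = (-1:ℝ)^m / (B * (ifp.fr⁻¹ * B + pB)) := hsub
    have h2 : g.dens m * (α - g.nums m / g.dens m) = g.dens m * α - g.nums m := by
      field_simp [hBdens, hBne]
    rw [h1] at h2
    rw [← h2, hBdens]
    field_simp
  -- next denominator
  obtain ⟨ifp', stream_succ_eq⟩ : ∃ ifp', GenContFract.IntFractPair.stream α (m+1) = some ifp' :=
    Option.ne_none_iff_exists'.1 (cf_stream_ne_none hirr (m+1))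
  have hib : ifp'.b = ⌊ifp.fr⁻¹⌋ := by
    obtain ⟨ifp2, stream2, hfr2, hof⟩ :=
      GenContFract.IntFractPair.succ_nth_stream_eq_some_iff.1 stream_succ_eq
    rw [stream_eq] at stream2
    cases stream2
    rw [← hof]
    rfl
  have hs_eq : g.s.get? m = some ⟨1, (ifp'.b : ℝ)⟩ :=
    GenContFract.get?_of_eq_some_of_succ_get?_intFractPair_stream stream_succ_eq
  have hrec := GenContFract.contsAux_recurrence hs_eq rfl rfl
  have hdens1 : g.dens (m+1) = (ifp'.b : ℝ) * B + pB := by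
    rw [GenContFract.den_eq_conts_b, GenContFract.nth_cont_eq_succ_nth_contAux, hrec]
    simp [hB, hpB]
  have hflt : ifp.fr⁻¹ < (ifp'.b : ℝ) + 1 := by
    rw [hib]; push_cast; exact Int.lt_floor_add_one _
  have hmono : B ≤ g.dens (m+1) := by rw [← hBdens]; exact GenContFract.of_den_mono
  have hDle : ifp.fr⁻¹ * B + pB ≤ 2 * g.dens (m+1) := by
    have : ifp.fr⁻¹ * B ≤ ((ifp'.b : ℝ) + 1) * B := by nlinarith
    nlinarith [hdens1, hmono]
  have hd1pos : (0:ℝ) < g.dens (m+1) := lt_of_lt_of_le one_pos (cf_dens_ge_one hirr (m+1))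
  rw [hkey]
  have : (-1:ℝ)^m * ((-1:ℝ)^m / (ifp.fr⁻¹ * B + pB)) = 1 / (ifp.fr⁻¹ * B + pB) := by
    rw [← mul_div_assoc, ← pow_add, ← two_mul, pow_mul]
    norm_num
  rw [this]
  exact one_div_le_one_div_of_le hD hDle

lemma cf_contsAux_int {α : ℝ} (hirr : Irrational α) :
    ∀ n : ℕ, (∃ z : ℤ, ((GenContFract.of α).contsAux n).a = (z:ℝ)) ∧
      (∃ z : ℤ, ((GenContFract.of α).contsAux n).b = (z:ℝ)) := by
  set g := GenContFract.of α with hg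
  have key : ∀ n : ℕ,
      ((∃ z : ℤ, (g.contsAux n).a = (z:ℝ)) ∧ (∃ z : ℤ, (g.contsAux n).b = (z:ℝ))) ∧
      ((∃ z : ℤ, (g.contsAux (n+1)).a = (z:ℝ)) ∧ (∃ z : ℤ, (g.contsAux (n+1)).b = (z:ℝ))) := by
    intro n
    induction n with
    | zero =>
      constructor
      · rw [GenContFract.zeroth_contAux_eq_one_zero]
        exact ⟨⟨1, by norm_num⟩, ⟨0, by norm_num⟩⟩
      · rw [GenContFract.first_contAux_eq_h_one]
        refine ⟨⟨⌊α⌋, ?_⟩, ⟨1, by norm_num⟩⟩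
        rw [hg, GenContFract.of_h_eq_floor]
    | succ n ih =>
      refine ⟨ih.2, ?_⟩
      obtain ⟨gp, hs⟩ : ∃ gp, g.s.get? n = some gp :=
        Option.ne_none_iff_exists'.1 (cf_not_term hirr n)
      have hga : gp.a = 1 := GenContFract.of_partNum_eq_one (GenContFract.partNum_eq_s_a hs)
      obtain ⟨zb, hgb⟩ : ∃ z : ℤ, gp.b = (z:ℝ) :=
        GenContFract.exists_int_eq_of_partDen (GenContFract.partDen_eq_s_b hs)
      have hrec := GenContFract.contsAux_recurrence hs rfl rfl
      obtain ⟨⟨za0, ha0⟩, ⟨zb0, hb0⟩⟩ := ih.1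
      obtain ⟨⟨za1, ha1⟩, ⟨zb1, hb1⟩⟩ := ih.2
      rw [hrec]
      refine ⟨⟨zb * za1 + za0, ?_⟩, ⟨zb * zb1 + zb0, ?_⟩⟩ <;>
        simp [hga, hgb, ha0, hb0, ha1, hb1] <;> push_cast <;> ring
  exact fun n => (key n).1

lemma cf_nums_dens_int {α : ℝ} (hirr : Irrational α) (n : ℕ) :
    (∃ z : ℤ, (GenContFract.of α).nums n = (z:ℝ)) ∧
      (∃ z : ℤ, (GenContFract.of α).dens n = (z:ℝ)) := by
  rw [GenContFract.num_eq_conts_a, GenContFract.den_eq_conts_b,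
    GenContFract.nth_cont_eq_succ_nth_contAux]
  exact cf_contsAux_int hirr (n+1)

lemma abs_le_abs_add_of_mul_nonneg {a b : ℝ} (h : 0 ≤ a * b) : |a| ≤ |a + b| := by
  rcases le_total 0 a with ha | ha <;> rcases le_total 0 b with hb | hb
  · rw [abs_of_nonneg ha, abs_of_nonneg (by linarith)]; linarith
  · have : a * b ≤ 0 := mul_nonpos_of_nonneg_of_nonpos ha hb
    have h0 : a * b = 0 := le_antisymm this h
    rcases mul_eq_zero.1 h0 with rfl | rfl
    · simp
    · simp
  · have : a * b ≤ 0 := mul_nonpos_of_nonpos_of_nonneg ha hb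
    have h0 : a * b = 0 := le_antisymm this h
    rcases mul_eq_zero.1 h0 with rfl | rfl
    · simp
    · simp
  · rw [abs_of_nonpos ha, abs_of_nonpos (by linarith)]; linarith

/-- Best approximation property. -/
lemma cf_best_approx {α : ℝ} (hirr : Irrational α) (m : ℕ) (k p : ℤ)
    (hk : 0 < k) (hk2 : (k:ℝ) < (GenContFract.of α).dens (m+1)) :
    1/(2 * (GenContFract.of α).dens (m+1)) ≤ |(k:ℝ) * α - p| := by
  obtain ⟨⟨Pm, hPm⟩, ⟨Qm, hQm⟩⟩ := cf_nums_dens_int hirr m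
  obtain ⟨⟨Pm1, hPm1⟩, ⟨Qm1, hQm1⟩⟩ := cf_nums_dens_int hirr (m+1)
  have hdetR : (GenContFract.of α).nums m * (GenContFract.of α).dens (m+1)
      - (GenContFract.of α).dens m * (GenContFract.of α).nums (m+1) = (-1:ℝ)^(m+1) :=
    SimpContFract.determinant (s := SimpContFract.of α) (n := m) (cf_not_term hirr m)
  have hdetZ : Pm * Qm1 - Qm * Pm1 = (-1:ℤ)^(m+1) := by
    have : ((Pm * Qm1 - Qm * Pm1 : ℤ) : ℝ) = (((-1:ℤ)^(m+1) : ℤ) : ℝ) := by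
      push_cast
      rw [← hPm, ← hQm, ← hPm1, ← hQm1]
      exact hdetR
    exact_mod_cast this
  have hQmpos : (0:ℝ) < Qm := by rw [← hQm]; exact lt_of_lt_of_le one_pos (cf_dens_ge_one hirr m)
  have hQm1pos : (0:ℝ) < Qm1 := by
    rw [← hQm1]; exact lt_of_lt_of_le one_pos (cf_dens_ge_one hirr (m+1))
  have hQmpos' : 0 < Qm := by exact_mod_cast hQmpos
  have hQm1pos' : 0 < Qm1 := by exact_mod_cast hQm1pos
  have h2 : ((-1:ℤ)^(m+1))^2 = 1 := by
    rw [← pow_mul, mul_comm, pow_mul]; norm_num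
  obtain ⟨x, hx⟩ : ∃ x : ℤ, x = (-1)^(m+1) * (p * Qm1 - k * Pm1) := ⟨_, rfl⟩
  obtain ⟨y, hy⟩ : ∃ y : ℤ, y = (-1)^(m+1) * (k * Pm - p * Qm) := ⟨_, rfl⟩
  have hsolve1 : x * Qm + y * Qm1 = k := by
    rw [hx, hy]; linear_combination (k * (-1:ℤ)^(m+1)) * hdetZ + k * h2
  have hsolve2 : x * Pm + y * Pm1 = p := by
    rw [hx, hy]; linear_combination (p * (-1:ℤ)^(m+1)) * hdetZ + p * h2
  obtain ⟨u, hu⟩ : ∃ u : ℝ, u = (GenContFract.of α).dens m * α - (GenContFract.of α).nums m :=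
    ⟨_, rfl⟩
  obtain ⟨w, hw⟩ : ∃ w : ℝ,
      w = (GenContFract.of α).dens (m+1) * α - (GenContFract.of α).nums (m+1) := ⟨_, rfl⟩
  have e1 : (x:ℝ) * Qm + (y:ℝ) * Qm1 = (k:ℝ) := by exact_mod_cast hsolve1
  have e2 : (x:ℝ) * Pm + (y:ℝ) * Pm1 = (p:ℝ) := by exact_mod_cast hsolve2
  have hdecomp : (k:ℝ) * α - p = (x:ℝ) * u + (y:ℝ) * w := by
    rw [hu, hw, hPm, hQm, hPm1, hQm1]
    linear_combination (-α) * e1 + e2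
  have hd1pos : (0:ℝ) < (GenContFract.of α).dens (m+1) := by
    rw [hQm1]; exact hQm1pos
  have hd2pos : (0:ℝ) < (GenContFract.of α).dens (m+2) :=
    lt_of_lt_of_le one_pos (cf_dens_ge_one hirr (m+2))
  have hsu : 0 < (-1:ℝ)^m * u := by
    rw [hu]
    exact lt_of_lt_of_le (one_div_pos.2 (by linarith)) (cf_approx hirr m)
  have hsw : 0 < (-1:ℝ)^(m+1) * w := by
    rw [hw]
    exact lt_of_lt_of_le (one_div_pos.2 (by linarith)) (cf_approx hirr (m+1))
  have huw : u * w < 0 := by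
    have h1 : 0 < ((-1:ℝ)^m * u) * ((-1:ℝ)^(m+1) * w) := mul_pos hsu hsw
    have h3 : (-1:ℝ)^m * (-1:ℝ)^(m+1) = -1 := by
      rw [← pow_add]
      have hme : m + (m + 1) = 2*m + 1 := by ring
      rw [hme, pow_succ, pow_mul]
      norm_num
    nlinarith
  have hub : 1/(2 * (GenContFract.of α).dens (m+1)) ≤ |u| := by
    calc 1/(2 * (GenContFract.of α).dens (m+1)) ≤ (-1:ℝ)^m * u := by
          rw [hu]; exact cf_approx hirr m
      _ ≤ |(-1:ℝ)^m * u| := le_abs_self _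
      _ = |u| := by rw [abs_mul, abs_pow, abs_neg, abs_one, one_pow, one_mul]
  rcases eq_or_ne y 0 with hy0 | hy0
  · rw [hy0] at hsolve1 hdecomp
    simp only [Int.cast_zero, zero_mul, add_zero] at hsolve1 hdecomp
    have hx0 : x ≠ 0 := by
      intro h
      rw [h] at hsolve1
      simp at hsolve1
      omega
    have hx1 : (1:ℝ) ≤ |(x:ℝ)| := by
      rw [← Int.cast_abs]
      exact_mod_cast Int.one_le_abs hx0
    rw [hdecomp, abs_mul]
    calc 1/(2 * (GenContFract.of α).dens (m+1)) ≤ |u| := hub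
      _ ≤ |(x:ℝ)| * |u| := le_mul_of_one_le_left (abs_nonneg _) hx1
  · rcases eq_or_ne x 0 with hx0 | hx0
    · exfalso
      rw [hx0] at hsolve1
      simp only [zero_mul, zero_add] at hsolve1
      have hy1 : 1 ≤ y := by
        rcases lt_trichotomy y 0 with h | h | h
        · nlinarith [hsolve1]
        · exact absurd h hy0
        · omega
      have : Qm1 ≤ k := by nlinarith [hsolve1]
      have : (Qm1:ℝ) ≤ (k:ℝ) := by exact_mod_cast this
      rw [hQm1] at hk2
      linarith
    · have hxy : x * y < 0 := by
        rcases lt_trichotomy x 0 with h | h | h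
        · rcases lt_trichotomy y 0 with h' | h' | h'
          · exfalso; nlinarith [hsolve1]
          · exact absurd h' hy0
          · exact mul_neg_of_neg_of_pos h h'
        · exact absurd h hx0
        · rcases lt_trichotomy y 0 with h' | h' | h'
          · exact mul_neg_of_pos_of_neg h h'
          · exact absurd h' hy0
          · exfalso
            have hkQ : (k:ℝ) < (Qm1:ℝ) := by rw [← hQm1]; exact hk2
            have : Qm1 ≤ k := by nlinarith [hsolve1]
            have : (Qm1:ℝ) ≤ (k:ℝ) := by exact_mod_cast this
            linarith
      have hxyR : ((x:ℝ)) * ((y:ℝ)) < 0 := by exact_mod_cast hxy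
      have hprod : 0 ≤ ((x:ℝ) * u) * ((y:ℝ) * w) := by nlinarith
      rw [hdecomp]
      calc 1/(2 * (GenContFract.of α).dens (m+1)) ≤ |u| := hub
        _ ≤ |(x:ℝ)| * |u| := by
            apply le_mul_of_one_le_left (abs_nonneg _)
            rw [← Int.cast_abs]
            exact_mod_cast Int.one_le_abs hx0
        _ = |(x:ℝ) * u| := (abs_mul _ _).symm
        _ ≤ |(x:ℝ) * u + (y:ℝ) * w| := abs_le_abs_add_of_mul_nonneg hprod

lemma cf_gap {α : ℝ} (hirr : Irrational α) (hslow : SlowDens α) :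
    ∃ N₁ : ℕ, 3 ≤ N₁ ∧ ∀ n : ℕ, N₁ ≤ n → ∀ k p : ℤ, k ≠ 0 → |k| ≤ (n:ℤ) →
      1/(2 * n * (Real.log n)^2) ≤ |(k:ℝ) * α - p| := by
  classical
  obtain ⟨n₀s, hn₀s⟩ := hslow
  refine ⟨max (⌈(GenContFract.of α).dens n₀s⌉₊ + 1) (max (n₀s + 1) 3), le_max_of_le_right (le_max_right _ _), ?_⟩
  intro n hn k p hk hkn
  have hn3 : 3 ≤ n := le_trans (le_max_of_le_right (le_max_right _ _)) hn
  have hn1 : (1:ℝ) < n := by exact_mod_cast by omega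
  have hlogpos : 0 < Real.log n := Real.log_pos hn1
  set P : ℕ → Prop := fun m => (GenContFract.of α).dens m ≤ (n:ℝ) with hP
  have hceil : ⌈(GenContFract.of α).dens n₀s⌉₊ + 1 ≤ n := le_trans (le_max_left _ _) hn
  have hPn₀ : P n₀s := by
    rw [hP]
    calc (GenContFract.of α).dens n₀s ≤ (⌈(GenContFract.of α).dens n₀s⌉₊ : ℝ) := Nat.le_ceil _
      _ ≤ (n:ℝ) := by exact_mod_cast by omega
  have hn₀le : n₀s ≤ n + 1 := by
    have : n₀s + 1 ≤ n := le_trans (le_max_of_le_right (le_max_left _ _)) hn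
    omega
  set m : ℕ := Nat.findGreatest P (n+1) with hm
  have hPm : P m := Nat.findGreatest_spec hn₀le hPn₀
  have hm_ge : n₀s ≤ m := Nat.le_findGreatest hn₀le hPn₀
  have hm_le : m ≤ n + 1 := Nat.findGreatest_le (n+1)
  have hm_le_n : m ≤ n := by
    rcases Nat.lt_or_ge m (n+1) with h | h
    · omega
    · exfalso
      have hmeq : m = n + 1 := le_antisymm hm_le h
      have : ((n:ℝ) + 2) ≤ (GenContFract.of α).dens (n+1) := by
        have h1 : (n + 2 : ℕ) ≤ Nat.fib (n + 2) := Nat.le_fib_self (by omega)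
        have h2 : (Nat.fib (n+2) : ℝ) ≤ (GenContFract.of α).dens (n+1) := by
          apply GenContFract.succ_nth_fib_le_of_nth_den
          exact Or.inr (cf_not_term hirr _)
        calc ((n:ℝ) + 2) ≤ (Nat.fib (n+2) : ℝ) := by exact_mod_cast h1
          _ ≤ _ := h2
      have := hPm
      rw [hP, hmeq] at this
      linarith
  have hnotP : ¬ P (m + 1) :=
    Nat.findGreatest_is_greatest (Nat.lt_succ_of_le (le_refl m)) (by omega)
  have hdm1 : (n:ℝ) < (GenContFract.of α).dens (m+1) := by
    have : ¬ (GenContFract.of α).dens (m+1) ≤ (n:ℝ) := hnotP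
    linarith [not_le.1 this]
  -- best approximation bound
  have hbest : 1/(2 * (GenContFract.of α).dens (m+1)) ≤ |(k:ℝ) * α - p| := by
    rcases lt_trichotomy k 0 with hneg | rfl | hpos
    · have h1 : 1/(2 * (GenContFract.of α).dens (m+1)) ≤ |((-k:ℤ):ℝ) * α - ((-p:ℤ):ℝ)| := by
        apply cf_best_approx hirr m (-k) (-p) (by omega)
        calc ((-k:ℤ):ℝ) ≤ (n:ℝ) := by
              have : (-k) ≤ (n:ℤ) := by rw [abs_of_neg hneg] at hkn; omega
              exact_mod_cast this
          _ < _ := hdm1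
      calc 1/(2 * (GenContFract.of α).dens (m+1)) ≤ |((-k:ℤ):ℝ) * α - ((-p:ℤ):ℝ)| := h1
        _ = |(k:ℝ) * α - p| := by
            push_cast
            rw [show -(k:ℝ) * α - (-(p:ℝ)) = -((k:ℝ)*α - p) by ring, abs_neg]
    · exact absurd rfl hk
    · apply cf_best_approx hirr m k p hpos
      calc ((k:ℤ):ℝ) ≤ (n:ℝ) := by
            have : k ≤ (n:ℤ) := by rw [abs_of_pos hpos] at hkn; omega
            exact_mod_cast this
        _ < _ := hdm1
  -- slow denominators chain
  have hq1 : (1:ℝ) ≤ (GenContFract.of α).dens m := cf_dens_ge_one hirr m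
  have hqlogn : (GenContFract.of α).dens (m+1) ≤ (n:ℝ) * (Real.log n)^2 := by
    have h1 := hn₀s m hm_ge
    have h2 : Real.log ((GenContFract.of α).dens m) ≤ Real.log n :=
      Real.log_le_log (by linarith) hPm
    have h3 : 0 ≤ Real.log ((GenContFract.of α).dens m) := Real.log_nonneg hq1
    have h4 : (Real.log ((GenContFract.of α).dens m))^2 ≤ (Real.log n)^2 := by nlinarith
    calc (GenContFract.of α).dens (m+1)
        ≤ (GenContFract.of α).dens m * (Real.log ((GenContFract.of α).dens m))^2 := h1
      _ ≤ (n:ℝ) * (Real.log n)^2 := by nlinarith [hPm]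
  have hd1pos : (0:ℝ) < (GenContFract.of α).dens (m+1) :=
    lt_of_lt_of_le one_pos (cf_dens_ge_one hirr (m+1))
  calc 1/(2 * (n:ℝ) * (Real.log n)^2) ≤ 1/(2 * (GenContFract.of α).dens (m+1)) := by
        apply one_div_le_one_div_of_le (by linarith)
        nlinarith
    _ ≤ |(k:ℝ) * α - p| := hbest
lemma roof_envelope {γ : ℝ} {f : ℝ → ℝ} (hγ0 : 0 < γ) (hγ1 : γ < 1)
    (hf : IsKocherginRoof γ f) :
    ∃ C : ℝ, 1 ≤ C ∧ ∀ x ∈ Set.Ioo (0:ℝ) 1,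
      f x ≤ C * x ^ (-γ) + C * (1-x) ^ (-γ) := by
  obtain ⟨hreg, hpos, -, -, M₁, M₂, M₃, M₄, hM₁, hM₂, -, -, ht1, ht2, -, -⟩ := hf
  have hcont : ContinuousOn f (Set.Ioo 0 1) := hreg.continuousOn
  -- near 0
  have h1 : ∀ᶠ x in nhdsWithin 0 (Set.Ioi 0), f x * x ^ γ < 1 :=
    ht1.eventually_lt_const hM₁.2
  obtain ⟨ε₁, hε₁, hb1⟩ := Metric.mem_nhdsWithin_iff.mp h1
  -- near 1
  have h2 : ∀ᶠ x in nhdsWithin 1 (Set.Iio 1), f x * (1-x) ^ γ < 1 :=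
    ht2.eventually_lt_const hM₂.2
  obtain ⟨ε₂, hε₂, hb2⟩ := Metric.mem_nhdsWithin_iff.mp h2
  -- compact middle
  set a : ℝ := min (ε₁/2) (1/4) with ha
  set b : ℝ := max (1 - ε₂/2) (3/4) with hb
  have ha0 : 0 < a := by apply lt_min (by linarith) (by norm_num)
  have ha14 : a ≤ 1/4 := min_le_right _ _
  have hb34 : 3/4 ≤ b := le_max_right _ _
  have hb1' : b < 1 := by
    apply max_lt (by linarith) (by norm_num)
  have hsub : Set.Icc a b ⊆ Set.Ioo 0 1 := fun z hz =>
    ⟨lt_of_lt_of_le ha0 hz.1, lt_of_le_of_lt hz.2 hb1'⟩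
  obtain ⟨K, hK⟩ := (isCompact_Icc (a := a) (b := b)).exists_bound_of_continuousOn
    (hcont.mono hsub)
  refine ⟨max 1 K, le_max_left _ _, ?_⟩
  intro x hx
  have hxpow0 : (0:ℝ) < x ^ (-γ) := Real.rpow_pos_of_pos hx.1 _
  have hxpow1 : (0:ℝ) < (1-x) ^ (-γ) := Real.rpow_pos_of_pos (by linarith [hx.2]) _
  have hCpos : (0:ℝ) < max 1 K := lt_of_lt_of_le one_pos (le_max_left _ _)
  rcases lt_or_ge x a with hxa | hxa
  · -- near 0 : f x < x^(-γ)
    have hfx : f x * x ^ γ < 1 := by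
      refine hb1 ⟨?_, hx.1⟩
      rw [Metric.mem_ball, Real.dist_eq, sub_zero, abs_of_pos hx.1]
      calc x < a := hxa
        _ ≤ ε₁/2 := min_le_left _ _
        _ < ε₁ := by linarith
    have hxg : (0:ℝ) < x ^ γ := Real.rpow_pos_of_pos hx.1 _
    have : f x < x ^ (-γ) := by
      rw [Real.rpow_neg (le_of_lt hx.1), ← one_div]
      rw [lt_div_iff₀ hxg]
      exact hfx
    calc f x ≤ x ^ (-γ) := le_of_lt this
      _ ≤ max 1 K * x ^ (-γ) := le_mul_of_one_le_left (le_of_lt hxpow0) (le_max_left _ _)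
      _ ≤ max 1 K * x ^ (-γ) + max 1 K * (1-x) ^ (-γ) := by nlinarith
  · rcases le_or_gt x b with hxb | hxb
    · -- middle
      have : |f x| ≤ K := hK x ⟨hxa, hxb⟩
      have hx1 : x ≤ 1 := le_of_lt hx.2
      have hone : (1:ℝ) ≤ x ^ (-γ) :=
        Real.one_le_rpow_of_pos_of_le_one_of_nonpos hx.1 hx1 (by linarith)
      calc f x ≤ |f x| := le_abs_self _
        _ ≤ K := this
        _ ≤ max 1 K := le_max_right _ _
        _ ≤ max 1 K * x ^ (-γ) := le_mul_of_one_le_right (le_of_lt hCpos) hone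
        _ ≤ max 1 K * x ^ (-γ) + max 1 K * (1-x) ^ (-γ) := by nlinarith
    · -- near 1
      have hfx : f x * (1-x) ^ γ < 1 := by
        refine hb2 ⟨?_, hx.2⟩
        rw [Metric.mem_ball, Real.dist_eq]
        rw [abs_of_neg (by linarith [hx.2] : x - 1 < 0)]
        have : 1 - ε₂/2 < x := lt_of_le_of_lt (le_max_left _ _) hxb
        linarith
      have hxg : (0:ℝ) < (1-x) ^ γ := Real.rpow_pos_of_pos (by linarith [hx.2]) _
      have : f x < (1-x) ^ (-γ) := by
        rw [Real.rpow_neg (by linarith [hx.2] : (0:ℝ) ≤ 1-x), ← one_div]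
        rw [lt_div_iff₀ hxg]
        exact hfx
      calc f x ≤ (1-x) ^ (-γ) := le_of_lt this
        _ ≤ max 1 K * (1-x) ^ (-γ) := le_mul_of_one_le_left (le_of_lt hxpow1) (le_max_left _ _)
        _ ≤ max 1 K * x ^ (-γ) + max 1 K * (1-x) ^ (-γ) := by nlinarith


set_option maxHeartbeats 1000000 in
/-- Denjoy–Koksma consequence: for `α` with slowly growing denominators, eventually
`S_n f(a) ≤ n (log n)² + f_{n,max}(a)`. -/
theorem stmt4 (α γ : ℝ) (hα : α ∈ Set.Ioo (0 : ℝ) 1) (hirr : Irrational α)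
    (hslow : SlowDens α)
    (hγ : γ ∈ Set.Ioo (0 : ℝ) (1 / 2)) (f : ℝ → ℝ) (hf : IsKocherginRoof γ f) :
    ∃ n₀ : ℕ, ∀ n : ℕ, n₀ ≤ n → ∀ a : ℝ,
      (∀ i : ℕ, i ≤ n → ∀ m : ℤ, a + i * α ≠ m) →
      birkS α f n a ≤ n * (Real.log n) ^ 2 + fMax α f n a := by
  classical
  have hγ0 : 0 < γ := hγ.1
  have hγh : γ < 1/2 := hγ.2
  have hγ1 : γ < 1 := by linarith
  obtain ⟨N₁, hN₁3, hgap⟩ := cf_gap hirr hslow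
  obtain ⟨C, hC1, hCf⟩ := roof_envelope hγ0 hγ1 hf
  have hfpos := hf.2.1
  refine ⟨max N₁ (⌈Real.exp (max 1 (8*C))⌉₊ + 1), ?_⟩
  intro n hn a ha
  have hnN₁ : N₁ ≤ n := le_trans (le_max_left _ _) hn
  have hn3 : 3 ≤ n := le_trans hN₁3 hnN₁
  have hnpos : (0:ℝ) < n := by exact_mod_cast by omega
  set L : ℝ := Real.log n with hL
  have hLbig : max 1 (8*C) ≤ L := by
    rw [hL]
    have h1 : Real.exp (max 1 (8*C)) ≤ (n:ℝ) := by
      have h2 : (⌈Real.exp (max 1 (8*C))⌉₊ + 1 : ℕ) ≤ n := le_trans (le_max_right _ _) hn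
      calc Real.exp (max 1 (8*C)) ≤ (⌈Real.exp (max 1 (8*C))⌉₊ : ℝ) := Nat.le_ceil _
        _ ≤ (n:ℝ) := by exact_mod_cast by omega
    calc max 1 (8*C) = Real.log (Real.exp (max 1 (8*C))) := (Real.log_exp _).symm
      _ ≤ Real.log n := Real.log_le_log (Real.exp_pos _) h1
  have hL1 : 1 ≤ L := le_trans (le_max_left _ _) hLbig
  have hL8C : 8*C ≤ L := le_trans (le_max_right _ _) hLbig
  have hLpos : 0 < L := lt_of_lt_of_le one_pos hL1
  set x : ℕ → ℝ := fun i => Int.fract (a + i * α) with hxdef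
  have hxmem : ∀ i, i ≤ n → x i ∈ Set.Ioo (0:ℝ) 1 := by
    intro i hi
    refine ⟨?_, Int.fract_lt_one _⟩
    rcases eq_or_lt_of_le (Int.fract_nonneg (a + i * α)) with h | h
    · exfalso
      apply ha i hi ⌊a + i * α⌋
      conv_lhs => rw [← Int.floor_add_fract (a + i * α)]
      rw [← h, add_zero]
    · exact h
  -- separation
  set δ : ℝ := 1/(2*(n:ℝ)*L^2) with hδ
  have hδpos : 0 < δ := by rw [hδ]; positivity
  have hsep : ∀ i, i ≤ n → ∀ j, j ≤ n → i ≠ j →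
      δ ≤ |x i - x j| ∧ δ ≤ x i + (1 - x j) := by
    intro i hi j hj hij
    have hk0 : (i:ℤ) - j ≠ 0 := by
      intro h
      apply hij
      omega
    have hkabs : |(i:ℤ) - j| ≤ (n:ℤ) := by
      rw [abs_sub_le_iff]
      omega
    have key : x i - x j = ((((i:ℤ) - j : ℤ)):ℝ) * α
        - (((⌊a + i * α⌋ - ⌊a + j * α⌋ : ℤ)):ℝ) := by
      rw [hxdef]
      simp only [Int.fract]
      push_cast
      ring
    constructor
    · have := hgap n hnN₁ ((i:ℤ) - j) (⌊a + i * α⌋ - ⌊a + j * α⌋) hk0 hkabs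
      rw [← key] at this
      exact this
    · have := hgap n hnN₁ ((i:ℤ) - j) (⌊a + i * α⌋ - ⌊a + j * α⌋ - 1) hk0 hkabs
      have key2 : ((((i:ℤ) - j : ℤ)):ℝ) * α - (((⌊a + i * α⌋ - ⌊a + j * α⌋ - 1 : ℤ)):ℝ)
          = x i + (1 - x j) := by
        push_cast
        push_cast at key
        linarith [key]
      rw [key2] at this
      have hpos' : 0 ≤ x i + (1 - x j) := by
        have h1 := (hxmem i hi).1
        have h2 := (hxmem j hj).2
        linarith
      rw [abs_of_nonneg hpos'] at this
      exact this
  -- good and bad indices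
  set c : ℝ := 1/(4*(n:ℝ)*L^2) with hc
  have hcpos : 0 < c := by rw [hc]; positivity
  have h2c : 2*c = δ := by rw [hc, hδ]; ring
  set p : ℕ → Prop := fun i => c ≤ x i ∧ c ≤ 1 - x i with hp
  set T : Finset ℕ := (Finset.range n).filter p with hT
  set Bad : Finset ℕ := (Finset.range n).filter (fun i => ¬ p i) with hBad
  have hmemn : ∀ i ∈ Finset.range n, i ≤ n := fun i hi => le_of_lt (Finset.mem_range.1 hi)
  -- at most one bad index
  have hBadcard : ∀ i ∈ Bad, ∀ j ∈ Bad, i = j := by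
    intro i hi j hj
    by_contra hij
    have hiT := Finset.mem_filter.1 hi
    have hjT := Finset.mem_filter.1 hj
    have hin : i ≤ n := hmemn i hiT.1
    have hjn : j ≤ n := hmemn j hjT.1
    have hxi := hxmem i hin
    have hxj := hxmem j hjn
    have hib : x i < c ∨ 1 - x i < c := by
      have := hiT.2
      rw [hp] at this
      push_neg at this
      by_cases h : c ≤ x i
      · exact Or.inr (this h)
      · exact Or.inl (lt_of_not_ge h)
    have hjb : x j < c ∨ 1 - x j < c := by
      have := hjT.2
      rw [hp] at this
      push_neg at this
      by_cases h : c ≤ x j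
      · exact Or.inr (this h)
      · exact Or.inl (lt_of_not_ge h)
    obtain ⟨hs1, hs2⟩ := hsep i hin j hjn hij
    obtain ⟨hs1', hs2'⟩ := hsep j hjn i hin (Ne.symm hij)
    rcases hib with h1 | h1 <;> rcases hjb with h2 | h2
    · have habs : |x i - x j| < 2*c := by
        rw [abs_sub_lt_iff]
        exact ⟨by linarith [hxi.1, hxj.1], by linarith [hxi.1, hxj.1]⟩
      rw [h2c] at habs
      linarith
    · linarith
    · linarith
    · have habs : |x i - x j| < 2*c := by
        rw [abs_sub_lt_iff]
        exact ⟨by linarith [hxi.2, hxj.2], by linarith [hxi.2, hxj.2]⟩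
      rw [h2c] at habs
      linarith
  -- split the Birkhoff sum
  have hsplit : birkS α f n a = (∑ i ∈ T, f (x i)) + (∑ i ∈ Bad, f (x i)) := by
    rw [birkS, hT, hBad]
    exact (Finset.sum_filter_add_sum_filter_not _ _ _).symm
  -- fMax bounds
  have hfM : ∀ i, i ≤ n → f (x i) ≤ fMax α f n a := by
    intro i hi
    have h := Finset.le_sup' (s := Finset.range (n+1))
      (fun j : ℕ => f (Int.fract (a + (j:ℕ) * α)))
      (by rw [Finset.mem_range]; omega : i ∈ Finset.range (n+1))
    exact h
  have hfM0 : 0 ≤ fMax α f n a := by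
    have h0 : f (x 0) ≤ fMax α f n a := hfM 0 (by omega)
    have := hfpos (x 0) (hxmem 0 (by omega))
    linarith
  have hBadsum : (∑ i ∈ Bad, f (x i)) ≤ fMax α f n a := by
    rcases Bad.eq_empty_or_nonempty with he | ⟨i, hi⟩
    · rw [he, Finset.sum_empty]; exact hfM0
    · have hBe : Bad = {i} := by
        apply Finset.eq_singleton_iff_unique_mem.2
        exact ⟨hi, fun j hj => hBadcard j hj i hi⟩
      rw [hBe, Finset.sum_singleton]
      exact hfM i (hmemn i (Finset.mem_filter.1 hi).1)
  -- bound sum over good indices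
  have hTmem : ∀ i ∈ T, c ≤ x i ∧ c ≤ 1 - x i := by
    intro i hi
    exact (Finset.mem_filter.1 hi).2
  have hTsep : ∀ i ∈ T, ∀ j ∈ T, i ≠ j → 2*c ≤ |x i - x j| := by
    intro i hi j hj hij
    rw [h2c]
    exact (hsep i (hmemn i (Finset.mem_filter.1 hi).1) j
      (hmemn j (Finset.mem_filter.1 hj).1) hij).1
  have hTsep' : ∀ i ∈ T, ∀ j ∈ T, i ≠ j → 2*c ≤ |(1 - x i) - (1 - x j)| := by
    intro i hi j hj hij
    have : (1 - x i) - (1 - x j) = -(x i - x j) := by ring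
    rw [this, abs_neg]
    exact hTsep i hi j hj hij
  have hS0 : ∑ i ∈ T, (x i) ^ (-γ) ≤ c^(-γ) * ((T.card : ℝ)^(1-γ)/(1-γ)) :=
    sep_sum T x c γ hcpos hγ0 hγ1 (fun i hi => (hTmem i hi).1) hTsep
      (sum_rpow_le γ hγ0 hγ1)
  have hS1 : ∑ i ∈ T, (1 - x i) ^ (-γ) ≤ c^(-γ) * ((T.card : ℝ)^(1-γ)/(1-γ)) :=
    sep_sum T (fun i => 1 - x i) c γ hcpos hγ0 hγ1 (fun i hi => (hTmem i hi).2) hTsep'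
      (sum_rpow_le γ hγ0 hγ1)
  have hTf : ∑ i ∈ T, f (x i) ≤
      C * (∑ i ∈ T, (x i) ^ (-γ)) + C * (∑ i ∈ T, (1 - x i) ^ (-γ)) := by
    rw [Finset.mul_sum, Finset.mul_sum, ← Finset.sum_add_distrib]
    apply Finset.sum_le_sum
    intro i hi
    exact hCf (x i) (hxmem i (hmemn i (Finset.mem_filter.1 hi).1))
  -- numeric bounds
  have h1γpos : (0:ℝ) < 1 - γ := by linarith
  have hcinv : c^(-γ) = (4*(n:ℝ)*L^2)^γ := by
    rw [hc, one_div, Real.inv_rpow (by positivity), Real.rpow_neg (by positivity), inv_inv]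
  have h4γ : (4:ℝ)^γ ≤ 2 := by
    have h1 : (4:ℝ)^γ ≤ (4:ℝ)^((1:ℝ)/2) :=
      Real.rpow_le_rpow_of_exponent_le (by norm_num) (le_of_lt hγh)
    have h2 : (4:ℝ)^((1:ℝ)/2) = 2 := by
      rw [show (4:ℝ) = 2^(2:ℕ) by norm_num, ← Real.rpow_natCast 2 2,
        ← Real.rpow_mul (by norm_num)]
      norm_num
    linarith
  have hL2γ : (L^2)^γ ≤ L := by
    have h1 : (L^2 : ℝ) = L^((2:ℝ)) := by
      rw [← Real.rpow_natCast L 2]; norm_num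
    rw [h1, ← Real.rpow_mul (le_of_lt hLpos)]
    calc L^(2*γ) ≤ L^(1:ℝ) := Real.rpow_le_rpow_of_exponent_le hL1 (by linarith)
      _ = L := Real.rpow_one L
  have hnγpos : (0:ℝ) < (n:ℝ)^γ := Real.rpow_pos_of_pos hnpos γ
  have hL2γpos : (0:ℝ) ≤ (L^2)^γ := Real.rpow_nonneg (by positivity) γ
  have hcpow : c^(-γ) ≤ 2 * (n:ℝ)^γ * L := by
    rw [hcinv]
    have hmul : (4*(n:ℝ)*L^2)^γ = (4:ℝ)^γ * (n:ℝ)^γ * (L^2)^γ := by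
      rw [Real.mul_rpow (by positivity) (by positivity),
        Real.mul_rpow (by norm_num) (le_of_lt hnpos)]
    rw [hmul]
    calc (4:ℝ)^γ * (n:ℝ)^γ * (L^2)^γ = (4:ℝ)^γ * ((n:ℝ)^γ * (L^2)^γ) := by ring
      _ ≤ 2 * ((n:ℝ)^γ * (L^2)^γ) :=
          mul_le_mul_of_nonneg_right h4γ (by positivity)
      _ = 2 * (n:ℝ)^γ * (L^2)^γ := by ring
      _ ≤ 2 * (n:ℝ)^γ * L := by
          have := mul_le_mul_of_nonneg_left hL2γ (by positivity : (0:ℝ) ≤ 2 * (n:ℝ)^γ)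
          calc 2 * (n:ℝ)^γ * (L^2)^γ = 2 * (n:ℝ)^γ * ((L^2)^γ) := by ring
            _ ≤ 2 * (n:ℝ)^γ * L := this
  have hTcard : (T.card : ℝ) ≤ (n:ℝ) := by
    have : T.card ≤ n := le_trans (Finset.card_filter_le _ _) (le_of_eq (Finset.card_range n))
    exact_mod_cast this
  have hTpow : ((T.card:ℝ))^(1-γ) ≤ (n:ℝ)^(1-γ) :=
    Real.rpow_le_rpow (Nat.cast_nonneg _) hTcard (by linarith)
  have hnn : (n:ℝ)^γ * (n:ℝ)^(1-γ) = (n:ℝ) := by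
    rw [← Real.rpow_add hnpos]
    norm_num
  have hR : c^(-γ) * ((T.card : ℝ)^(1-γ)/(1-γ)) ≤ (2*(n:ℝ)^γ*L) * ((n:ℝ)^(1-γ)/(1-γ)) := by
    have hdiv : (T.card:ℝ)^(1-γ)/(1-γ) ≤ (n:ℝ)^(1-γ)/(1-γ) := by
      rw [div_eq_mul_inv, div_eq_mul_inv]
      exact mul_le_mul_of_nonneg_right hTpow (inv_nonneg.2 (le_of_lt h1γpos))
    have hpos1 : (0:ℝ) ≤ (T.card:ℝ)^(1-γ)/(1-γ) :=
      div_nonneg (Real.rpow_nonneg (Nat.cast_nonneg _) _) (le_of_lt h1γpos)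
    have hpos2 : (0:ℝ) ≤ 2*(n:ℝ)^γ*L := by
      have := Real.rpow_nonneg (le_of_lt hnpos) γ
      nlinarith
    exact mul_le_mul hcpow hdiv hpos1 hpos2
  have hRval : (2*(n:ℝ)^γ*L) * ((n:ℝ)^(1-γ)/(1-γ)) ≤ 4*L*(n:ℝ) := by
    have he : (2*(n:ℝ)^γ*L) * ((n:ℝ)^(1-γ)/(1-γ)) = 2*L*((n:ℝ)^γ*(n:ℝ)^(1-γ))/(1-γ) := by
      ring
    rw [he, hnn, div_le_iff₀ h1γpos]
    nlinarith [mul_pos hLpos hnpos]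
  have hgood : ∑ i ∈ T, f (x i) ≤ (n:ℝ) * L^2 := by
    have hb2 : ∑ i ∈ T, f (x i) ≤ 2 * C * (c^(-γ) * ((T.card : ℝ)^(1-γ)/(1-γ))) := by
      have hc0 : (0:ℝ) ≤ C := by linarith
      calc ∑ i ∈ T, f (x i)
          ≤ C * (∑ i ∈ T, (x i) ^ (-γ)) + C * (∑ i ∈ T, (1 - x i) ^ (-γ)) := hTf
        _ ≤ C * (c^(-γ) * ((T.card : ℝ)^(1-γ)/(1-γ)))
            + C * (c^(-γ) * ((T.card : ℝ)^(1-γ)/(1-γ))) := by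
            apply add_le_add (mul_le_mul_of_nonneg_left hS0 hc0)
              (mul_le_mul_of_nonneg_left hS1 hc0)
        _ = 2 * C * (c^(-γ) * ((T.card : ℝ)^(1-γ)/(1-γ))) := by ring
    have hb3 : 2 * C * (c^(-γ) * ((T.card : ℝ)^(1-γ)/(1-γ))) ≤ 2 * C * (4*L*(n:ℝ)) := by
      apply mul_le_mul_of_nonneg_left (le_trans hR hRval) (by linarith)
    calc ∑ i ∈ T, f (x i) ≤ 2 * C * (4*L*(n:ℝ)) := le_trans hb2 hb3
      _ = 8 * C * L * (n:ℝ) := by ring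
      _ ≤ (n:ℝ) * L^2 := by nlinarith [mul_pos hLpos hnpos]
  rw [hsplit]
  linarith [hgood, hBadsum]
end

section
/- Let α ∈ (0,1) be irrational with slowly growing denominators, let γ ∈ (0,1/2), and let f be a Kochergin roof function with exponent γ. Then there exists n₀ such that for every integer n ≥ n₀ and every a ∈ ℝ with a + iα ∉ ℤ for all integers 0 ≤ i ≤ n, one has |S_n f'(a)| ≤ n (log n)² f_{n,max}(a) + 2 f'_{n,max}(a). -/
open Filter

open GenContFract

namespace CFDev

variable {α : ℝ}

/-- The stream of `IntFractPair`s of an irrational number never terminates. -/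
lemma stream_isSome (hirr : Irrational α) (n : ℕ) :
    (GenContFract.IntFractPair.stream α n).isSome := by
  rcases n with _ | m
  · rw [GenContFract.IntFractPair.stream_zero]; rfl
  · by_contra h
    have hnone : GenContFract.IntFractPair.stream α (m + 1) = none := by
      cases hh : GenContFract.IntFractPair.stream α (m + 1) with
      | none => rfl
      | some p => rw [hh] at h; simp at h
    have hterm : (GenContFract.of α).TerminatedAt m :=
      GenContFract.of_terminatedAt_n_iff_succ_nth_intFractPair_stream_eq_none.mpr hnone
    obtain ⟨q, hq⟩ := GenContFract.exists_rat_eq_of_terminates ⟨m, hterm⟩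
    exact hirr ⟨q, hq.symm⟩

/-- The `n`-th `IntFractPair` of an irrational `α`. -/
noncomputable def sA (hirr : Irrational α) (n : ℕ) : GenContFract.IntFractPair ℝ :=
  (GenContFract.IntFractPair.stream α n).get (stream_isSome hirr n)

lemma sA_eq (hirr : Irrational α) (n : ℕ) :
    GenContFract.IntFractPair.stream α n = some (sA hirr n) := by
  simp [sA]

end CFDev

namespace CFDev

variable {α : ℝ}

open GenContFract.IntFractPair in
lemma fr_pos (hirr : Irrational α) (n : ℕ) : 0 < (sA hirr n).fr := by
  rcases lt_or_eq_of_le (nth_stream_fr_nonneg (sA_eq hirr n)) with h | h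
  · exact h
  · exfalso
    have h1 := stream_eq_none_of_fr_eq_zero (sA_eq hirr n) h.symm
    have h2 := sA_eq hirr (n + 1)
    simp_all

lemma fr_lt_one (hirr : Irrational α) (n : ℕ) : (sA hirr n).fr < 1 :=
  GenContFract.IntFractPair.nth_stream_fr_lt_one (sA_eq hirr n)

lemma one_lt_inv_fr (hirr : Irrational α) (n : ℕ) : 1 < (sA hirr n).fr⁻¹ :=
  (one_lt_inv₀ (fr_pos hirr n)).mpr (fr_lt_one hirr n)

/-- The `n`-th partial denominator (`b`-value), as an integer. -/
noncomputable def B (hirr : Irrational α) (n : ℕ) : ℤ := (sA hirr (n + 1)).b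

lemma one_le_B (hirr : Irrational α) (n : ℕ) : 1 ≤ B hirr n :=
  GenContFract.IntFractPair.one_le_succ_nth_stream_b (sA_eq hirr (n + 1))

lemma sA_succ (hirr : Irrational α) (n : ℕ) :
    sA hirr (n + 1) = GenContFract.IntFractPair.of (sA hirr n).fr⁻¹ := by
  have h := GenContFract.IntFractPair.stream_succ_of_some (sA_eq hirr n)
      (ne_of_gt (fr_pos hirr n))
  have h2 := sA_eq hirr (n + 1)
  rw [h] at h2
  exact (Option.some_injective _ h2).symm

lemma B_eq_floor (hirr : Irrational α) (n : ℕ) : B hirr n = ⌊(sA hirr n).fr⁻¹⌋ := by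
  rw [B, sA_succ hirr n]; rfl

lemma B_le_inv_fr (hirr : Irrational α) (n : ℕ) : (B hirr n : ℝ) ≤ (sA hirr n).fr⁻¹ := by
  rw [B_eq_floor]; exact Int.floor_le _

lemma inv_fr_lt_B_add_one (hirr : Irrational α) (n : ℕ) :
    (sA hirr n).fr⁻¹ < B hirr n + 1 := by
  rw [B_eq_floor]
  push_cast
  exact Int.lt_floor_add_one _

lemma s_get? (hirr : Irrational α) (n : ℕ) :
    (GenContFract.of α).s.get? n = some ⟨1, (B hirr n : ℝ)⟩ :=
  GenContFract.get?_of_eq_some_of_succ_get?_intFractPair_stream (sA_eq hirr (n + 1))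

lemma dens_zero : (GenContFract.of α).dens 0 = 1 := GenContFract.zeroth_den_eq_one

lemma dens_one (hirr : Irrational α) : (GenContFract.of α).dens 1 = (B hirr 0 : ℝ) := by
  simpa using GenContFract.first_den_eq (s_get? hirr 0)

lemma dens_rec (hirr : Irrational α) (n : ℕ) :
    (GenContFract.of α).dens (n + 2) =
      (B hirr (n + 1) : ℝ) * (GenContFract.of α).dens (n + 1) + (GenContFract.of α).dens n := by
  have := GenContFract.dens_recurrence (g := GenContFract.of α) (s_get? hirr (n + 1)) rfl rfl
  simpa using this

lemma nums_zero (hα : α ∈ Set.Ioo (0:ℝ) 1) : (GenContFract.of α).nums 0 = 0 := by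
  rw [GenContFract.zeroth_num_eq_h, GenContFract.of_h_eq_floor]
  exact_mod_cast Int.floor_eq_zero_iff.mpr ⟨hα.1.le, hα.2⟩

lemma nums_one (hirr : Irrational α) (hα : α ∈ Set.Ioo (0:ℝ) 1) :
    (GenContFract.of α).nums 1 = 1 := by
  have h := GenContFract.first_num_eq (s_get? hirr 0)
  have hh : (GenContFract.of α).h = 0 := by
    rw [GenContFract.of_h_eq_floor]
    exact_mod_cast Int.floor_eq_zero_iff.mpr ⟨hα.1.le, hα.2⟩
  rw [h, hh]; simp

lemma nums_rec (hirr : Irrational α) (n : ℕ) :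
    (GenContFract.of α).nums (n + 2) =
      (B hirr (n + 1) : ℝ) * (GenContFract.of α).nums (n + 1) + (GenContFract.of α).nums n := by
  have := GenContFract.nums_recurrence (g := GenContFract.of α) (s_get? hirr (n + 1)) rfl rfl
  simpa using this

end CFDev

namespace CFDev

/-- Integer denominators `q_n`. -/
noncomputable def QZ (hirr : Irrational α) : ℕ → ℤ
  | 0 => 1
  | 1 => B hirr 0
  | (n + 2) => B hirr (n + 1) * QZ hirr (n + 1) + QZ hirr n

/-- Integer numerators `p_n`. -/
noncomputable def PZ (hirr : Irrational α) : ℕ → ℤ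
  | 0 => 0
  | 1 => 1
  | (n + 2) => B hirr (n + 1) * PZ hirr (n + 1) + PZ hirr n

lemma QZ_cast (hirr : Irrational α) (n : ℕ) :
    ((QZ hirr n : ℤ) : ℝ) = (GenContFract.of α).dens n := by
  induction n using Nat.strong_induction_on with
  | _ n ih =>
    match n with
    | 0 => simpa [QZ] using dens_zero.symm
    | 1 => simpa [QZ] using (dens_one hirr).symm
    | (m + 2) =>
      rw [QZ, dens_rec hirr m]
      push_cast
      rw [ih (m+1) (by omega), ih m (by omega)]

lemma PZ_cast (hirr : Irrational α) (hα : α ∈ Set.Ioo (0:ℝ) 1) (n : ℕ) :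
    ((PZ hirr n : ℤ) : ℝ) = (GenContFract.of α).nums n := by
  induction n using Nat.strong_induction_on with
  | _ n ih =>
    match n with
    | 0 => simpa [PZ] using (nums_zero hα).symm
    | 1 => simpa [PZ] using (nums_one hirr hα).symm
    | (m + 2) =>
      rw [PZ, nums_rec hirr m]
      push_cast
      rw [ih (m+1) (by omega), ih m (by omega)]

lemma one_le_QZ (hirr : Irrational α) (n : ℕ) : 1 ≤ QZ hirr n := by
  induction n using Nat.strong_induction_on with
  | _ n ih =>
    match n with
    | 0 => simp [QZ]
    | 1 => simpa [QZ] using one_le_B hirr 0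
    | (m + 2) =>
      have h1 := ih (m+1) (by omega)
      have h0 := ih m (by omega)
      have hb := one_le_B hirr (m+1)
      rw [QZ]
      nlinarith

lemma QZ_mono_succ (hirr : Irrational α) (n : ℕ) : QZ hirr n ≤ QZ hirr (n + 1) := by
  match n with
  | 0 => simpa [QZ] using one_le_B hirr 0
  | (m + 1) =>
    rw [QZ]
    have h1 := one_le_QZ hirr (m+1)
    have h0 := one_le_QZ hirr m
    have hb := one_le_B hirr (m+1)
    nlinarith

lemma QZ_mono (hirr : Irrational α) {m n : ℕ} (h : m ≤ n) : QZ hirr m ≤ QZ hirr n := by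
  induction n with
  | zero => simpa [Nat.le_zero.mp h]
  | succ k ih =>
    rcases Nat.lt_or_ge m (k+1) with h' | h'
    · exact (ih (by omega)).trans (QZ_mono_succ hirr k)
    · have : m = k + 1 := by omega
      simp [this]

lemma QZ_add_le (hirr : Irrational α) (n : ℕ) :
    QZ hirr (n + 1) + QZ hirr n ≤ QZ hirr (n + 2) := by
  rw [QZ]
  have h1 := one_le_QZ hirr (n+1)
  have hb := one_le_B hirr (n+1)
  nlinarith

lemma le_QZ (hirr : Irrational α) (n : ℕ) : (n : ℤ) ≤ QZ hirr n := by
  induction n using Nat.strong_induction_on with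
  | _ n ih =>
    match n with
    | 0 => simp [QZ]
    | 1 => simpa [QZ] using one_le_B hirr 0
    | (m + 2) =>
      have h1 := ih (m+1) (by omega)
      have h0 := one_le_QZ hirr m
      have h2 := QZ_add_le hirr m
      push_cast at h1
      omega

end CFDev

namespace CFDev

variable {α : ℝ}

/-- `e_n = q_n α - p_n`. -/
noncomputable def ee (hirr : Irrational α) (n : ℕ) : ℝ :=
  (QZ hirr n : ℝ) * α - (PZ hirr n : ℝ)

lemma one_le_dens (hirr : Irrational α) (n : ℕ) :
    (1 : ℝ) ≤ (GenContFract.of α).dens n := by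
  rw [← QZ_cast hirr n]; exact_mod_cast one_le_QZ hirr n

lemma dens_pos (hirr : Irrational α) (n : ℕ) : (0 : ℝ) < (GenContFract.of α).dens n :=
  lt_of_lt_of_le one_pos (one_le_dens hirr n)

/-- The auxiliary denominator in the exact error formula. -/
noncomputable def Dd (hirr : Irrational α) (n : ℕ) : ℝ :=
  (sA hirr n).fr⁻¹ * (GenContFract.of α).dens n + ((GenContFract.of α).contsAux n).b

lemma contsAux_b_nonneg (n : ℕ) : (0:ℝ) ≤ ((GenContFract.of α).contsAux n).b :=
  GenContFract.zero_le_of_contsAux_b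

lemma contsAux_b_succ (n : ℕ) :
    ((GenContFract.of α).contsAux (n + 1)).b = (GenContFract.of α).dens n := by
  rw [GenContFract.den_eq_conts_b, GenContFract.nth_cont_eq_succ_nth_contAux]

lemma Dd_pos (hirr : Irrational α) (n : ℕ) : 0 < Dd hirr n := by
  have h1 := one_lt_inv_fr hirr n
  have h2 := dens_pos hirr n
  have h3 := contsAux_b_nonneg (α := α) n
  unfold Dd; nlinarith

/-- `dens (n+1) = B n * dens n + contsAux n |>.b`, valid for all `n`. -/
lemma dens_succ_eq (hirr : Irrational α) (n : ℕ) :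
    (GenContFract.of α).dens (n + 1) =
      (B hirr n : ℝ) * (GenContFract.of α).dens n + ((GenContFract.of α).contsAux n).b := by
  have h := GenContFract.contsAux_recurrence (g := GenContFract.of α) (s_get? hirr n) rfl rfl
  have hb : ((GenContFract.of α).contsAux (n + 2)).b
      = (B hirr n : ℝ) * ((GenContFract.of α).contsAux (n+1)).b
        + 1 * ((GenContFract.of α).contsAux n).b := by
    rw [h]
  rw [← contsAux_b_succ (n+1), hb, contsAux_b_succ n]
  ring

end CFDev

namespace CFDev

variable {α : ℝ}

lemma ee_formula (hirr : Irrational α) (hα : α ∈ Set.Ioo (0:ℝ) 1) (n : ℕ) :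
    ee hirr n = (-1) ^ n / Dd hirr n := by
  have hfr0 : (sA hirr n).fr ≠ 0 := (fr_pos hirr n).ne'
  have hsub := GenContFract.sub_convs_eq (sA_eq hirr n)
  simp only [if_neg hfr0] at hsub
  have hdB : ((GenContFract.of α).contsAux (n+1)).b = (GenContFract.of α).dens n :=
    contsAux_b_succ n
  rw [hdB] at hsub
  have hdne : (GenContFract.of α).dens n ≠ 0 := (dens_pos hirr n).ne'
  have hconv : (GenContFract.of α).convs n
      = (GenContFract.of α).nums n / (GenContFract.of α).dens n :=
    GenContFract.conv_eq_num_div_den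
  have hee : ee hirr n = (GenContFract.of α).dens n * (α - (GenContFract.of α).convs n) := by
    rw [hconv, ee, QZ_cast hirr n, PZ_cast hirr hα n]
    field_simp
  rw [hee, hsub]
  have hDd : Dd hirr n
      = (sA hirr n).fr⁻¹ * (GenContFract.of α).dens n + ((GenContFract.of α).contsAux n).b := rfl
  have hDdne : Dd hirr n ≠ 0 := (Dd_pos hirr n).ne'
  rw [← hDd] at *
  field_simp

/-- `β_n = |q_n α - p_n|`. -/
noncomputable def bb (hirr : Irrational α) (n : ℕ) : ℝ := |ee hirr n|

lemma bb_eq (hirr : Irrational α) (hα : α ∈ Set.Ioo (0:ℝ) 1) (n : ℕ) :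
    bb hirr n = 1 / Dd hirr n := by
  rw [bb, ee_formula hirr hα n, abs_div, abs_pow, abs_neg, abs_one, one_pow,
    abs_of_pos (Dd_pos hirr n)]

lemma bb_pos (hirr : Irrational α) (hα : α ∈ Set.Ioo (0:ℝ) 1) (n : ℕ) :
    0 < bb hirr n := by
  rw [bb_eq hirr hα n]
  exact div_pos one_pos (Dd_pos hirr n)

lemma ee_eq_sign (hirr : Irrational α) (hα : α ∈ Set.Ioo (0:ℝ) 1) (n : ℕ) :
    ee hirr n = (-1) ^ n * bb hirr n := by
  rw [ee_formula hirr hα n, bb_eq hirr hα n]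
  ring

lemma Dd_lb (hirr : Irrational α) (n : ℕ) :
    (GenContFract.of α).dens (n+1) ≤ Dd hirr n := by
  have h1 := B_le_inv_fr hirr n
  have h2 := dens_pos hirr n
  rw [dens_succ_eq hirr n, Dd]
  nlinarith

lemma Dd_ub (hirr : Irrational α) (n : ℕ) :
    Dd hirr n < (GenContFract.of α).dens (n+1) + (GenContFract.of α).dens n := by
  have h1 := inv_fr_lt_B_add_one hirr n
  have h2 := dens_pos hirr n
  rw [dens_succ_eq hirr n, Dd]
  nlinarith

lemma bb_lb (hirr : Irrational α) (hα : α ∈ Set.Ioo (0:ℝ) 1) (n : ℕ) :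
    1 / ((GenContFract.of α).dens (n+1) + (GenContFract.of α).dens n) < bb hirr n := by
  rw [bb_eq hirr hα n]
  have h1 := Dd_ub hirr n
  have h2 := Dd_pos hirr n
  have h3 : 0 < (GenContFract.of α).dens (n+1) + (GenContFract.of α).dens n :=
    lt_trans h2 h1
  exact one_div_lt_one_div_of_lt h2 h1

/-- recurrence for the errors. -/
lemma ee_rec (hirr : Irrational α) (n : ℕ) :
    ee hirr (n + 2) = (B hirr (n+1) : ℝ) * ee hirr (n + 1) + ee hirr n := by
  simp only [ee, QZ, PZ]
  push_cast
  ring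

/-- recurrence for `β`: `β_n = b_{n+1} β_{n+1} + β_{n+2}`. -/
lemma bb_rec (hirr : Irrational α) (hα : α ∈ Set.Ioo (0:ℝ) 1) (n : ℕ) :
    bb hirr n = (B hirr (n+1) : ℝ) * bb hirr (n + 1) + bb hirr (n + 2) := by
  have h := ee_rec hirr n
  rw [ee_eq_sign hirr hα n, ee_eq_sign hirr hα (n+1), ee_eq_sign hirr hα (n+2)] at h
  have hne : ((-1:ℝ)) ^ n ≠ 0 := by
    simp
  have hexp : ((-1:ℝ)) ^ (n+1) = -((-1:ℝ)) ^ n := by ring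
  have hexp2 : ((-1:ℝ)) ^ (n+2) = ((-1:ℝ)) ^ n := by ring
  rw [hexp, hexp2] at h
  have h2 : ((-1:ℝ))^n * bb hirr n = ((-1:ℝ))^n * ((B hirr (n+1) : ℝ) * bb hirr (n + 1) + bb hirr (n + 2)) := by ring_nf; ring_nf at h; linarith
  exact mul_left_cancel₀ hne h2

end CFDev

namespace CFDev

variable {α : ℝ}

lemma det_eq (hirr : Irrational α) (n : ℕ) :
    PZ hirr (n+1) * QZ hirr n - PZ hirr n * QZ hirr (n+1) = (-1) ^ n := by
  induction n with
  | zero => simp [PZ, QZ]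
  | succ m ih =>
    have h : PZ hirr (m+2) * QZ hirr (m+1) - PZ hirr (m+1) * QZ hirr (m+2)
        = -(PZ hirr (m+1) * QZ hirr m - PZ hirr m * QZ hirr (m+1)) := by
      simp only [PZ, QZ]; ring
    rw [h, ih]; ring

/-- The best-approximation property: for `0 < d < q_{j+1}` and any integer `c`,
`|d α - c| ≥ β_j`. -/
lemma best_approx (hirr : Irrational α) (hα : α ∈ Set.Ioo (0:ℝ) 1) (j : ℕ) (d c : ℤ)
    (hd0 : 0 < d) (hd : d < QZ hirr (j+1)) :
    bb hirr j ≤ |(d : ℝ) * α - (c : ℝ)| := by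
  set σ : ℤ := (-1) ^ j with hσ
  have hsq : σ * σ = 1 := by
    rw [hσ, ← pow_add]
    exact Even.neg_one_pow ⟨j, rfl⟩
  have hdet := det_eq hirr j
  rw [← hσ] at hdet
  set x : ℤ := σ * (d * PZ hirr (j+1) - c * QZ hirr (j+1)) with hxdef
  set y : ℤ := σ * (c * QZ hirr j - d * PZ hirr j) with hydef
  have hx : x * QZ hirr j + y * QZ hirr (j+1) = d := by
    rw [hxdef, hydef]
    linear_combination σ * d * hdet + d * hsq
  have hc : x * PZ hirr j + y * PZ hirr (j+1) = c := by
    rw [hxdef, hydef]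
    linear_combination σ * c * hdet + c * hsq
  have hlin : (d : ℝ) * α - (c : ℝ) = (x : ℝ) * ee hirr j + (y : ℝ) * ee hirr (j+1) := by
    have hxr : ((x : ℝ)) * (QZ hirr j : ℝ) + (y : ℝ) * (QZ hirr (j+1) : ℝ) = (d : ℝ) := by
      exact_mod_cast hx
    have hcr : ((x : ℝ)) * (PZ hirr j : ℝ) + (y : ℝ) * (PZ hirr (j+1) : ℝ) = (c : ℝ) := by
      exact_mod_cast hc
    simp only [ee]
    linear_combination (-α) * hxr + hcr
  have hQ0 := one_le_QZ hirr j
  have hQ1 := one_le_QZ hirr (j+1)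
  have hbbj := bb_pos hirr hα j
  have hbbj1 := bb_pos hirr hα (j+1)
  rcases eq_or_ne y 0 with hy | hy
  · -- y = 0 : d = x q_j, so x ≥ 1 and |dα - c| = |x| β_j ≥ β_j
    rw [hy] at hx
    simp only [zero_mul, add_zero] at hx
    have hx1 : 1 ≤ x := by
      by_contra hcon
      push_neg at hcon
      have : x ≤ 0 := by omega
      nlinarith
    have : |(d:ℝ) * α - c| = |(x:ℝ)| * bb hirr j := by
      rw [hlin, hy]
      push_cast
      simp [abs_mul, bb]
    rw [this]
    have : (1:ℝ) ≤ |(x:ℝ)| := by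
      rw [abs_of_pos (by exact_mod_cast hx1 : (0:ℝ) < (x:ℝ))]
      exact_mod_cast hx1
    nlinarith
  · rcases eq_or_ne x 0 with hx0 | hx0
    · -- x = 0 : d = y q_{j+1} ≥ q_{j+1}, contradiction
      exfalso
      rw [hx0] at hx
      simp only [zero_mul, zero_add] at hx
      have hy1 : 1 ≤ y := by
        by_contra hcon
        push_neg at hcon
        have : y ≤ 0 := by omega
        nlinarith
      nlinarith
    · -- both nonzero: they must have opposite signs
      have hopp : x * y < 0 := by
        rcases lt_or_gt_of_ne hx0 with hxneg | hxpos
        · rcases lt_or_gt_of_ne hy with hyneg | hypos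
          · exfalso; nlinarith
          · nlinarith
        · rcases lt_or_gt_of_ne hy with hyneg | hypos
          · nlinarith
          · exfalso; nlinarith
      -- |x e_j + y e_{j+1}| = |x β_j - y β_{j+1}| ≥ β_j
      have hsign : (d:ℝ) * α - c = ((-1:ℝ)) ^ j * ((x:ℝ) * bb hirr j - (y:ℝ) * bb hirr (j+1)) := by
        rw [hlin, ee_eq_sign hirr hα j, ee_eq_sign hirr hα (j+1)]
        ring
      rw [hsign, abs_mul, abs_pow, abs_neg, abs_one, one_pow, one_mul]
      rcases lt_or_gt_of_ne hx0 with hxneg | hxpos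
      · -- x < 0, y > 0
        have hypos : 0 < y := by nlinarith
        have hxle : x ≤ -1 := by omega
        rw [abs_sub_comm]
        refine le_trans ?_ (le_abs_self _)
        have : (1:ℝ) ≤ (y:ℝ) := by exact_mod_cast hypos
        have hxr : (x:ℝ) ≤ -1 := by exact_mod_cast hxle
        nlinarith
      · -- x > 0, y < 0
        have hyneg : y < 0 := by nlinarith
        have hxge : 1 ≤ x := hxpos
        refine le_trans ?_ (le_abs_self _)
        have hxr : (1:ℝ) ≤ (x:ℝ) := by exact_mod_cast hxge
        have hyr : (y:ℝ) ≤ 0 := by exact_mod_cast hyneg.le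
        nlinarith

end CFDev

namespace CFDev

variable {α : ℝ}

lemma best_approx_abs (hirr : Irrational α) (hα : α ∈ Set.Ioo (0:ℝ) 1) (j : ℕ) (d c : ℤ)
    (hd0 : d ≠ 0) (hd : |d| < QZ hirr (j+1)) :
    bb hirr j ≤ |(d : ℝ) * α - (c : ℝ)| := by
  rcases lt_or_gt_of_ne hd0 with hneg | hpos
  · have h := best_approx hirr hα j (-d) (-c) (by omega) (by rwa [abs_of_neg hneg] at hd)
    have : |((-d : ℤ) : ℝ) * α - ((-c : ℤ) : ℝ)| = |(d:ℝ) * α - c| := by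
      push_cast
      rw [← abs_neg]
      ring_nf
    rwa [this] at h
  · exact best_approx hirr hα j d c hpos (by rwa [abs_of_pos hpos] at hd)

lemma fract_diff_eq (x y : ℝ) :
    ∃ m : ℤ, Int.fract x - Int.fract y = (x - y) - (m : ℝ) := by
  exact ⟨⌊x⌋ - ⌊y⌋, by rw [Int.fract, Int.fract]; push_cast; ring⟩

/-- Distance between two orbit points is at least `β_k` provided the time
difference is less than `q_{k+1}`. -/
lemma points_gap (hirr : Irrational α) (hα : α ∈ Set.Ioo (0:ℝ) 1) (k : ℕ) {n : ℕ}
    (hn : (n : ℤ) ≤ QZ hirr (k+1)) (a : ℝ) {i j : ℕ} (hi : i < n) (hj : j < n)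
    (hij : i ≠ j) :
    bb hirr k ≤ |Int.fract (a + i * α) - Int.fract (a + j * α)| := by
  obtain ⟨m, hm⟩ := fract_diff_eq (a + i * α) (a + j * α)
  have hdiff : (a + i * α) - (a + j * α) = ((i:ℤ) - (j:ℤ) : ℤ) * α := by
    push_cast; ring
  rw [hdiff] at hm
  rw [hm]
  exact best_approx_abs hirr hα k ((i:ℤ) - j) m (by omega)
    (by rw [abs_sub_lt_iff]; omega)

/-- In the regime `n ≤ 2 q_k`, two orbit points closer than `β_{k-1}/2` must have
time difference exactly `q_k`.  Here `k = m+2`. -/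
lemma close_implies_qk (hirr : Irrational α) (hα : α ∈ Set.Ioo (0:ℝ) 1) (m : ℕ) {n : ℕ}
    (hn1 : (n : ℤ) ≤ QZ hirr (m+3)) (hn2 : (n : ℤ) ≤ 2 * QZ hirr (m+2)) (a : ℝ)
    {i j : ℕ} (hi : i < n) (hj : j < n) (hij : i ≠ j)
    (hclose : |Int.fract (a + i * α) - Int.fract (a + j * α)| < bb hirr (m+1) / 2) :
    (i : ℤ) - j = QZ hirr (m+2) ∨ (j : ℤ) - i = QZ hirr (m+2) := by
  obtain ⟨c, hm⟩ := fract_diff_eq (a + i * α) (a + j * α)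
  have hdiff : (a + i * α) - (a + j * α) = ((i:ℤ) - (j:ℤ) : ℤ) * α := by
    push_cast; ring
  rw [hdiff] at hm
  set d : ℤ := (i:ℤ) - j with hd
  have hd0 : d ≠ 0 := by omega
  have hdn : |d| ≤ (n:ℤ) - 1 := by
    rw [hd, abs_le]
    omega
  have hbbm1pos := bb_pos hirr hα (m+1)
  have habs : |(d:ℝ) * α - c| < bb hirr (m+1) / 2 := by rw [← hm]; exact hclose
  -- |d| cannot be < q_{m+2}
  have hnotlt : ¬ (|d| < QZ hirr (m+2)) := by
    intro hlt
    have := best_approx_abs hirr hα (m+1) d c hd0 hlt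
    nlinarith
  -- |d| cannot be > q_{m+2}
  have hnotgt : ¬ (QZ hirr (m+2) < |d|) := by
    intro hgt
    set e : ℤ := |d| - QZ hirr (m+2) with he
    have he0 : 0 < e := by omega
    have heub : e < QZ hirr (m+2) := by omega
    -- |d| α - c' decomposition, where c' is c sign-adjusted
    obtain ⟨c', habs'⟩ : ∃ c' : ℤ, |(|d| : ℝ) * α - (c' : ℝ)| < bb hirr (m+1) / 2 := by
      rcases abs_choice d with hcase | hcase
      · have hdnn : (0:ℝ) ≤ (d:ℝ) := by exact_mod_cast abs_eq_self.mp hcase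
        refine ⟨c, ?_⟩
        rw [abs_of_nonneg hdnn]
        exact habs
      · have hdnp : (d:ℝ) ≤ 0 := by
          have : d ≤ 0 := abs_eq_neg_self.mp hcase
          exact_mod_cast this
        refine ⟨-c, ?_⟩
        rw [abs_of_nonpos hdnp]
        push_cast
        calc |-(d : ℝ) * α - (-c : ℝ)| = |(d:ℝ) * α - c| := by rw [← abs_neg]; ring_nf
        _ < _ := habs
    -- triangle inequality step
    have htri : |((e:ℝ)) * α - ((c' - PZ hirr (m+2) : ℤ) : ℝ)| - bb hirr (m+2)
        ≤ |(|d| : ℝ) * α - (c' : ℝ)| := by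
      have hsplit : (|d| : ℝ) * α - (c' : ℝ)
          = ((e:ℝ) * α - ((c' - PZ hirr (m+2) : ℤ) : ℝ)) + ee hirr (m+2) := by
        rw [ee, he]
        push_cast
        ring
      rw [hsplit]
      have h1 : |((e:ℝ)) * α - ((c' - PZ hirr (m+2) : ℤ) : ℝ)|
          ≤ |((e:ℝ) * α - ((c' - PZ hirr (m+2) : ℤ) : ℝ)) + ee hirr (m+2)| + |ee hirr (m+2)| := by
        calc |((e:ℝ)) * α - ((c' - PZ hirr (m+2) : ℤ) : ℝ)|
            = |(((e:ℝ) * α - ((c' - PZ hirr (m+2) : ℤ) : ℝ)) + ee hirr (m+2)) - ee hirr (m+2)| := by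
              ring_nf
          _ ≤ _ := abs_sub _ _
      have : |ee hirr (m+2)| = bb hirr (m+2) := rfl
      linarith
    rcases eq_or_lt_of_le (one_le_B hirr (m+2)) with hB1 | hB2
    · -- B_{m+2} = 1 : q_{m+3} = q_{m+2} + q_{m+1}, use level m
      have hq : QZ hirr (m+3) = QZ hirr (m+2) + QZ hirr (m+1) := by
        show QZ hirr ((m+1)+2) = _
        rw [QZ, ← hB1]
        ring
      have heub2 : e < QZ hirr (m+1) := by omega
      have hba := best_approx_abs hirr hα m e (c' - PZ hirr (m+2)) (by omega)
        (by rwa [abs_of_pos he0])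
      -- β_m = B_{m+1} β_{m+1} + β_{m+2} ≥ β_{m+1} + β_{m+2}
      have hrec := bb_rec hirr hα m
      have hBm1 : (1:ℝ) ≤ (B hirr (m+1) : ℝ) := by exact_mod_cast one_le_B hirr (m+1)
      have hbb2pos := bb_pos hirr hα (m+2)
      nlinarith
    · -- B_{m+2} ≥ 2 : β_{m+1} ≥ 2 β_{m+2}
      have hba := best_approx_abs hirr hα (m+1) e (c' - PZ hirr (m+2)) (by omega)
        (by rwa [abs_of_pos he0])
      have hrec := bb_rec hirr hα (m+1)
      have hBm2 : (2:ℝ) ≤ (B hirr (m+2) : ℝ) := by exact_mod_cast hB2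
      have hbb3pos := bb_pos hirr hα (m+3)
      have hbb2pos := bb_pos hirr hα (m+2)
      nlinarith
  have : |d| = QZ hirr (m+2) := by omega
  rcases abs_choice d with hcase | hcase
  · left; omega
  · right; omega

end CFDev

namespace CFDev

/-- Telescoping bound: if points of `S` are `g`-separated and
`(y-x) u y ≤ F x - F y` for pairs, then the sum of `u` is controlled by the
minimum point. -/
lemma sum_telescope_one (u F : ℝ → ℝ) (g : ℝ) (hg : 0 < g) (S : Finset ℝ) :
    ∀ (hne : S.Nonempty),
    (∀ x ∈ S, 0 ≤ u x) → (∀ x ∈ S, 0 ≤ F x) →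
    (∀ x ∈ S, ∀ y ∈ S, x < y → g ≤ y - x) →
    (∀ x ∈ S, ∀ y ∈ S, x < y → (y - x) * u y ≤ F x - F y) →
    ∑ x ∈ S, u x ≤ u (S.min' hne) + (1/g) * F (S.min' hne) := by
  induction S using Finset.strongInduction with
  | _ S ih =>
    intro hne hu hF hgap hpair
    have hmS : S.min' hne ∈ S := S.min'_mem hne
    set m := S.min' hne with hm
    have hsum : ∑ x ∈ S, u x = u m + ∑ x ∈ S.erase m, u x :=
      (Finset.add_sum_erase _ _ hmS).symm
    rcases (S.erase m).eq_empty_or_nonempty with he | hne2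
    · rw [hsum, he]
      simp only [Finset.sum_empty, add_zero]
      have h1 := hF m hmS
      have h2 : 0 ≤ (1/g) * F m := by positivity
      linarith
    · have hsub : S.erase m ⊂ S := Finset.erase_ssubset hmS
      have ih2 := ih _ hsub hne2
        (fun x hx => hu x (S.erase_subset _ hx))
        (fun x hx => hF x (S.erase_subset _ hx))
        (fun x hx y hy hxy => hgap x (S.erase_subset _ hx) y (S.erase_subset _ hy) hxy)
        (fun x hx y hy hxy => hpair x (S.erase_subset _ hx) y (S.erase_subset _ hy) hxy)
      set m2 := (S.erase m).min' hne2 with hm2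
      have hm2e : m2 ∈ S.erase m := (S.erase m).min'_mem hne2
      have hm2S : m2 ∈ S := S.erase_subset _ hm2e
      have hmm2 : m < m2 := by
        have hne' : m2 ≠ m := Finset.ne_of_mem_erase hm2e
        exact lt_of_le_of_ne (S.min'_le _ hm2S) hne'.symm
      have hgap2 : g ≤ m2 - m := hgap m hmS m2 hm2S hmm2
      have hpair2 : (m2 - m) * u m2 ≤ F m - F m2 := hpair m hmS m2 hm2S hmm2
      have hum2 : 0 ≤ u m2 := hu m2 hm2S
      have key : u m2 + (1/g) * F m2 ≤ (1/g) * F m := by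
        have h1 : g * u m2 ≤ F m - F m2 := by nlinarith
        have h2 : (1/g) * (g * u m2 + F m2) ≤ (1/g) * F m := by
          apply mul_le_mul_of_nonneg_left (by linarith) (by positivity)
        have h3 : (1/g) * (g * u m2 + F m2) = u m2 + (1/g) * F m2 := by
          field_simp
        linarith
      rw [hsum]
      linarith

/-- Two-smallest-points version with triple-gap hypothesis. -/
lemma sum_telescope_two_aux (u F : ℝ → ℝ) (G : ℝ) (hG : 0 < G) (S : Finset ℝ) :
    ∀ (hne : S.Nonempty) (hne2 : (S.erase (S.min' hne)).Nonempty),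
    (∀ x ∈ S, 0 ≤ u x) → (∀ x ∈ S, 0 ≤ F x) →
    (∀ x ∈ S, ∀ y ∈ S, ∀ z ∈ S, x < y → y < z → G ≤ z - x) →
    (∀ x ∈ S, ∀ y ∈ S, x < y → (y - x) * u y ≤ F x - F y) →
    ∑ x ∈ S, u x ≤ u (S.min' hne) + u ((S.erase (S.min' hne)).min' hne2)
      + (1/G) * (F (S.min' hne) + F ((S.erase (S.min' hne)).min' hne2)) := by
  induction S using Finset.strongInduction with
  | _ S ih =>
    intro hne hne2 hu hF htriple hpair
    have hmS : S.min' hne ∈ S := S.min'_mem hne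
    set m := S.min' hne with hm
    set S1 := S.erase m with hS1
    have hsum : ∑ x ∈ S, u x = u m + ∑ x ∈ S1, u x :=
      (Finset.add_sum_erase _ _ hmS).symm
    set m2 := S1.min' hne2 with hm2
    have hm2e : m2 ∈ S1 := S1.min'_mem hne2
    have hm2S : m2 ∈ S := S.erase_subset _ hm2e
    have hmm2 : m < m2 := by
      have hne' : m2 ≠ m := Finset.ne_of_mem_erase hm2e
      exact lt_of_le_of_ne (S.min'_le _ hm2S) hne'.symm
    have hsub : S1 ⊂ S := Finset.erase_ssubset hmS
    rcases (S1.erase m2).eq_empty_or_nonempty with he | hne3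
    · -- S = {m, m2}
      have hS1sum : ∑ x ∈ S1, u x = u m2 + ∑ x ∈ S1.erase m2, u x :=
        (Finset.add_sum_erase _ _ hm2e).symm
      rw [hsum, hS1sum, he]
      simp only [Finset.sum_empty, add_zero]
      have h1 := hF m hmS
      have h2 := hF m2 hm2S
      have h3 : 0 ≤ (1/G) * (F m + F m2) := by positivity
      linarith
    · have ih2 := ih _ hsub hne2 hne3
        (fun x hx => hu x (S.erase_subset _ hx))
        (fun x hx => hF x (S.erase_subset _ hx))
        (fun x hx y hy z hz hxy hyz =>
          htriple x (S.erase_subset _ hx) y (S.erase_subset _ hy) z (S.erase_subset _ hz) hxy hyz)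
        (fun x hx y hy hxy => hpair x (S.erase_subset _ hx) y (S.erase_subset _ hy) hxy)
      set m3 := (S1.erase m2).min' hne3 with hm3
      have hm3e : m3 ∈ S1.erase m2 := (S1.erase m2).min'_mem hne3
      have hm3S1 : m3 ∈ S1 := S1.erase_subset _ hm3e
      have hm3S : m3 ∈ S := S.erase_subset _ hm3S1
      have hm2m3 : m2 < m3 := by
        have hne' : m3 ≠ m2 := Finset.ne_of_mem_erase hm3e
        exact lt_of_le_of_ne (S1.min'_le _ hm3S1) hne'.symm
      have hG3 : G ≤ m3 - m := htriple m hmS m2 hm2S m3 hm3S hmm2 hm2m3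
      have hpair3 : (m3 - m) * u m3 ≤ F m - F m3 := hpair m hmS m3 hm3S (hmm2.trans hm2m3)
      have hum3 : 0 ≤ u m3 := hu m3 hm3S
      have key : u m3 + (1/G) * F m3 ≤ (1/G) * F m := by
        have h1 : G * u m3 ≤ F m - F m3 := by nlinarith
        have h2 : (1/G) * (G * u m3 + F m3) ≤ (1/G) * F m := by
          apply mul_le_mul_of_nonneg_left (by linarith) (by positivity)
        have h3 : (1/G) * (G * u m3 + F m3) = u m3 + (1/G) * F m3 := by
          field_simp
        linarith
      rw [hsum]
      linarith

/-- Final form of the triple-gap bound. -/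
lemma sum_telescope_two (u F : ℝ → ℝ) (G U FF : ℝ) (hG : 0 < G) (hU : 0 ≤ U) (hFF : 0 ≤ FF)
    (S : Finset ℝ)
    (hu0 : ∀ x ∈ S, 0 ≤ u x) (huU : ∀ x ∈ S, u x ≤ U)
    (hF0 : ∀ x ∈ S, 0 ≤ F x) (hF1 : ∀ x ∈ S, F x ≤ FF)
    (htriple : ∀ x ∈ S, ∀ y ∈ S, ∀ z ∈ S, x < y → y < z → G ≤ z - x)
    (hpair : ∀ x ∈ S, ∀ y ∈ S, x < y → (y - x) * u y ≤ F x - F y) :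
    ∑ x ∈ S, u x ≤ 2 * U + (1/G) * (2 * FF) := by
  rcases S.eq_empty_or_nonempty with he | hne
  · rw [he]
    simp only [Finset.sum_empty]
    positivity
  · rcases (S.erase (S.min' hne)).eq_empty_or_nonempty with he2 | hne2
    · -- singleton
      have hmS := S.min'_mem hne
      have : S = {S.min' hne} := by
        apply Finset.eq_singleton_iff_unique_mem.mpr
        refine ⟨hmS, fun x hx => ?_⟩
        by_contra hxm
        exact (Finset.ne_empty_of_mem (Finset.mem_erase.mpr ⟨hxm, hx⟩)) he2
      rw [this]
      simp only [Finset.sum_singleton]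
      have h1 := huU _ hmS
      have h2 : 0 ≤ (1/G) * (2*FF) := by positivity
      linarith
    · have h := sum_telescope_two_aux u F G hG S hne hne2 hu0 hF0 htriple hpair
      have hmS := S.min'_mem hne
      have hm2S : (S.erase (S.min' hne)).min' hne2 ∈ S :=
        S.erase_subset _ ((S.erase (S.min' hne)).min'_mem hne2)
      have h1 := huU _ hmS
      have h2 := huU _ hm2S
      have h3 := hF1 _ hmS
      have h4 := hF1 _ hm2S
      have h5 : (1/G) * (F (S.min' hne) + F ((S.erase (S.min' hne)).min' hne2))
          ≤ (1/G) * (2 * FF) := by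
        apply mul_le_mul_of_nonneg_left (by linarith) (by positivity)
      linarith

/-- Final form of the pairwise-gap bound. -/
lemma sum_telescope_one' (u F : ℝ → ℝ) (g U FF : ℝ) (hg : 0 < g) (hU : 0 ≤ U) (hFF : 0 ≤ FF)
    (S : Finset ℝ)
    (hu0 : ∀ x ∈ S, 0 ≤ u x) (huU : ∀ x ∈ S, u x ≤ U)
    (hF0 : ∀ x ∈ S, 0 ≤ F x) (hF1 : ∀ x ∈ S, F x ≤ FF)
    (hgap : ∀ x ∈ S, ∀ y ∈ S, x < y → g ≤ y - x)
    (hpair : ∀ x ∈ S, ∀ y ∈ S, x < y → (y - x) * u y ≤ F x - F y) :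
    ∑ x ∈ S, u x ≤ U + (1/g) * FF := by
  rcases S.eq_empty_or_nonempty with he | hne
  · rw [he]
    simp only [Finset.sum_empty]
    positivity
  · have h := sum_telescope_one u F g hg S hne hu0 hF0 hgap hpair
    have hmS := S.min'_mem hne
    have h1 := huU _ hmS
    have h2 : (1/g) * F (S.min' hne) ≤ (1/g) * FF := by
      apply mul_le_mul_of_nonneg_left (hF1 _ hmS) (by positivity)
    linarith

end CFDev

namespace CFDev

open Set

variable {f : ℝ → ℝ}

lemma deriv_strictMono (hC2 : ContDiffOn ℝ 2 f (Set.Ioo 0 1))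
    (hconv : ∀ x ∈ Set.Ioo (0:ℝ) 1, 0 < deriv (deriv f) x) :
    StrictMonoOn (deriv f) (Set.Ioo 0 1) := by
  apply strictMonoOn_of_deriv_pos (convex_Ioo 0 1)
  · exact hC2.continuousOn_deriv_of_isOpen isOpen_Ioo one_le_two
  · rwa [interior_Ioo]

lemma pair_ineq_left (hC2 : ContDiffOn ℝ 2 f (Set.Ioo 0 1))
    (hconv : ∀ x ∈ Set.Ioo (0:ℝ) 1, 0 < deriv (deriv f) x)
    {x y : ℝ} (hx : x ∈ Set.Ioo (0:ℝ) 1) (hy : y ∈ Set.Ioo (0:ℝ) 1) (hxy : x < y) :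
    (y - x) * (-(deriv f y)) ≤ f x - f y := by
  have hsub1 : Set.Icc x y ⊆ Set.Ioo (0:ℝ) 1 := fun t ht =>
    ⟨lt_of_lt_of_le hx.1 ht.1, lt_of_le_of_lt ht.2 hy.2⟩
  have hsub2 : Set.Ioo x y ⊆ Set.Ioo (0:ℝ) 1 := fun t ht =>
    ⟨lt_trans hx.1 ht.1, lt_trans ht.2 hy.2⟩
  obtain ⟨c, hc, hceq⟩ := exists_deriv_eq_slope f hxy
    (hC2.continuousOn.mono hsub1)
    ((hC2.differentiableOn (by norm_num)).mono hsub2)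
  have hcIoo : c ∈ Set.Ioo (0:ℝ) 1 := hsub2 hc
  have hmono := deriv_strictMono hC2 hconv
  have hlt : deriv f c < deriv f y := hmono hcIoo hy hc.2
  have h1 : f x - f y = -(deriv f c) * (y - x) := by
    rw [hceq]
    have hne : y - x ≠ 0 := by linarith
    field_simp
    ring
  rw [h1]
  nlinarith [hxy]

lemma pair_ineq_right (hC2 : ContDiffOn ℝ 2 f (Set.Ioo 0 1))
    (hconv : ∀ x ∈ Set.Ioo (0:ℝ) 1, 0 < deriv (deriv f) x)
    {x y : ℝ} (hx : x ∈ Set.Ioo (0:ℝ) 1) (hy : y ∈ Set.Ioo (0:ℝ) 1) (hxy : x < y) :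
    (y - x) * (deriv f x) ≤ f y - f x := by
  have hsub1 : Set.Icc x y ⊆ Set.Ioo (0:ℝ) 1 := fun t ht =>
    ⟨lt_of_lt_of_le hx.1 ht.1, lt_of_le_of_lt ht.2 hy.2⟩
  have hsub2 : Set.Ioo x y ⊆ Set.Ioo (0:ℝ) 1 := fun t ht =>
    ⟨lt_trans hx.1 ht.1, lt_trans ht.2 hy.2⟩
  obtain ⟨c, hc, hceq⟩ := exists_deriv_eq_slope f hxy
    (hC2.continuousOn.mono hsub1)
    ((hC2.differentiableOn (by norm_num)).mono hsub2)
  have hcIoo : c ∈ Set.Ioo (0:ℝ) 1 := hsub2 hc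
  have hmono := deriv_strictMono hC2 hconv
  have hlt : deriv f x < deriv f c := hmono hx hcIoo hc.1
  have h1 : f y - f x = (deriv f c) * (y - x) := by
    rw [hceq]
    have hne : y - x ≠ 0 := by linarith
    field_simp
  rw [h1]
  nlinarith [hxy]

end CFDev

namespace CFDev

lemma exists_k {α : ℝ} (hirr : Irrational α) (n : ℕ) (hn : 1 ≤ n) :
    ∃ k : ℕ, QZ hirr k ≤ (n:ℤ) ∧ (n:ℤ) < QZ hirr (k+1) := by
  classical
  set P : ℕ → Prop := fun j => QZ hirr j ≤ (n:ℤ) with hP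
  have hP0 : P 0 := by simp [hP, QZ]; exact_mod_cast hn
  refine ⟨Nat.findGreatest P n, ?_, ?_⟩
  · exact Nat.findGreatest_spec (Nat.zero_le n) hP0
  · set k := Nat.findGreatest P n with hk
    rcases le_or_gt (k+1) n with hle | hgt
    · have := Nat.findGreatest_is_greatest (Nat.lt_succ_self k) hle
      simpa [hP] using this
    · have hkn : n ≤ k := by omega
      have h1 : (n:ℤ) < (k:ℤ) + 1 := by exact_mod_cast Nat.lt_succ_of_le hkn
      have h2 := le_QZ hirr (k+1)
      push_cast at h2
      omega

set_option maxHeartbeats 2000000 in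
theorem stmt5' (α γ : ℝ) (hα : α ∈ Set.Ioo (0 : ℝ) 1) (hirr : Irrational α)
    (hslow : SlowDens α)
    (hγ : γ ∈ Set.Ioo (0 : ℝ) (1 / 2)) (f : ℝ → ℝ) (hf : IsKocherginRoof γ f) :
    ∃ n₀ : ℕ, ∀ n : ℕ, n₀ ≤ n → ∀ a : ℝ,
      (∀ i : ℕ, i ≤ n → ∀ m : ℤ, a + i * α ≠ m) →
      |birkS α (deriv f) n a| ≤
        n * (Real.log n) ^ 2 * fMax α f n a + 2 * fMax α (fun x => |deriv f x|) n a := by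
  classical
  obtain ⟨hC2, hpos, hconv, -, -⟩ := hf
  obtain ⟨m₀, hm₀⟩ := hslow
  refine ⟨max ((QZ hirr (m₀+3)).toNat + 1) 21, fun n hn a hInt => ?_⟩
  have hn21 : 21 ≤ n := le_trans (le_max_right _ _) hn
  have hnQ : QZ hirr (m₀+3) < (n:ℤ) := by
    have h1 : (QZ hirr (m₀+3)).toNat + 1 ≤ n := le_trans (le_max_left _ _) hn
    have h2 : (1:ℤ) ≤ QZ hirr (m₀+3) := one_le_QZ hirr _
    omega
  obtain ⟨k, hkle, hklt⟩ := exists_k hirr n (by omega)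
  have hkm : m₀ + 3 ≤ k := by
    by_contra hcon
    push_neg at hcon
    have := QZ_mono hirr (show k + 1 ≤ m₀ + 3 by omega)
    omega
  obtain ⟨m, rfl⟩ : ∃ m, k = m + 2 := ⟨k - 2, by omega⟩
  -- log bounds
  have hnpos : (0:ℝ) < (n:ℝ) := by
    have : (0:ℕ) < n := by omega
    exact_mod_cast this
  have hn21R : (21:ℝ) ≤ (n:ℝ) := by exact_mod_cast hn21
  have hlog3 : (3:ℝ) ≤ Real.log n := by
    rw [Real.le_log_iff_exp_le hnpos]
    have h1 : Real.exp 3 = (Real.exp 1)^(3:ℕ) := by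
      rw [← Real.exp_nat_mul]
      norm_num
    have h2 := Real.exp_one_lt_d9
    have h3 : (Real.exp 1)^(3:ℕ) ≤ (2.7182818286:ℝ)^(3:ℕ) :=
      pow_le_pow_left₀ (Real.exp_pos 1).le h2.le 3
    have h4 : ((2.7182818286:ℝ))^(3:ℕ) ≤ 21 := by norm_num
    linarith [h1 ▸ (h3.trans h4)]
  have hlogsq : (9:ℝ) ≤ (Real.log n)^2 := by nlinarith
  -- the orbit points
  set pf : ℕ → ℝ := fun i => Int.fract (a + i * α) with hpf
  have hIoo : ∀ i ≤ n, pf i ∈ Set.Ioo (0:ℝ) 1 := by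
    intro i hi
    have hne : pf i ≠ 0 := by
      intro h0
      have : a + i * α = (⌊a + i * α⌋ : ℝ) := by
        have := Int.fract_add_floor (a + i * α)
        rw [hpf] at h0
        simp only at h0
        rw [Int.fract] at h0
        linarith
      exact hInt i hi ⌊a + i * α⌋ this
    exact ⟨lt_of_le_of_ne (Int.fract_nonneg _) (Ne.symm hne), Int.fract_lt_one _⟩
  set P : Finset ℝ := (Finset.range n).image pf with hPdef
  have hinj : ∀ x ∈ Finset.range n, ∀ y ∈ Finset.range n, pf x = pf y → x = y := by
    intro i hi j hj hfe
    by_contra hij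
    obtain ⟨c, hc⟩ := fract_diff_eq (a + i * α) (a + j * α)
    rw [hpf] at hfe
    simp only at hfe
    rw [hfe, sub_self] at hc
    have hd : (a + i * α) - (a + j * α) = ((i:ℤ) - (j:ℤ) : ℤ) * α := by push_cast; ring
    rw [hd] at hc
    set d : ℤ := (i:ℤ) - j with hdd
    have hd0 : d ≠ 0 := by omega
    have : α = (c:ℝ) / (d:ℝ) := by
      have hdne : (d:ℝ) ≠ 0 := by exact_mod_cast hd0
      field_simp
      linarith [hc]
    rw [irrational_iff_ne_rational] at hirr
    exact hirr c d hd0 this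
  have hPIoo : ∀ x ∈ P, x ∈ Set.Ioo (0:ℝ) 1 := by
    intro x hx
    obtain ⟨i, hi, rfl⟩ := Finset.mem_image.mp hx
    exact hIoo i (le_of_lt (Finset.mem_range.mp hi))
  -- max bounds
  have hUb : ∀ x ∈ P, |deriv f x| ≤ fMax α (fun x => |deriv f x|) n a := by
    intro x hx
    obtain ⟨i, hi, rfl⟩ := Finset.mem_image.mp hx
    have hi' : i ∈ Finset.range (n+1) := by
      rw [Finset.mem_range] at *
      omega
    exact Finset.le_sup' (fun j : ℕ => |deriv f (Int.fract (a + j * α))|) hi'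
  have hFb : ∀ x ∈ P, f x ≤ fMax α f n a := by
    intro x hx
    obtain ⟨i, hi, rfl⟩ := Finset.mem_image.mp hx
    have hi' : i ∈ Finset.range (n+1) := by
      rw [Finset.mem_range] at *
      omega
    exact Finset.le_sup' (fun j : ℕ => f (Int.fract (a + j * α))) hi'
  set U := fMax α (fun x => |deriv f x|) n a with hUdef
  set FF := fMax α f n a with hFFdef
  have h0P : pf 0 ∈ P := Finset.mem_image.mpr ⟨0, Finset.mem_range.mpr (by omega), rfl⟩
  have hU0 : 0 ≤ U := le_trans (abs_nonneg _) (hUb _ h0P)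
  have hFF0 : 0 ≤ FF := le_trans (hpos _ (hPIoo _ h0P)).le (hFb _ h0P)
  -- pairwise gap at scale β_{m+2}
  have hbbpos := bb_pos hirr hα (m+2)
  have hbb1pos := bb_pos hirr hα (m+1)
  have hgapP : ∀ x ∈ P, ∀ y ∈ P, x < y → bb hirr (m+2) ≤ y - x := by
    intro x hx y hy hxy
    obtain ⟨i, hi, rfl⟩ := Finset.mem_image.mp hx
    obtain ⟨j, hj, rfl⟩ := Finset.mem_image.mp hy
    have hij : i ≠ j := by
      intro h
      rw [h] at hxy
      exact lt_irrefl _ hxy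
    have := points_gap hirr hα (m+2) hklt.le a (Finset.mem_range.mp hi)
      (Finset.mem_range.mp hj) hij
    calc bb hirr (m+2) ≤ |pf i - pf j| := this
    _ = pf j - pf i := by rw [abs_sub_comm, abs_of_pos (by linarith)]
  -- pair MVT inequalities
  have hpairA : ∀ x ∈ P, ∀ y ∈ P, x < y → (y - x) * (-(deriv f y)) ≤ f x - f y :=
    fun x hx y hy hxy => pair_ineq_left hC2 hconv (hPIoo x hx) (hPIoo y hy) hxy
  have hpairB : ∀ x ∈ P, ∀ y ∈ P, x < y → (y - x) * (deriv f x) ≤ f y - f x :=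
    fun x hx y hy hxy => pair_ineq_right hC2 hconv (hPIoo x hx) (hPIoo y hy) hxy
  -- sum decomposition
  have hbirk : birkS α (deriv f) n a = ∑ x ∈ P, deriv f x := by
    rw [hPdef, Finset.sum_image hinj]
    rfl
  set SA := P.filter (fun x => deriv f x < 0) with hSAdef
  set SB := P.filter (fun x => ¬(deriv f x < 0)) with hSBdef
  have hsplit : ∑ x ∈ P, deriv f x = ∑ x ∈ SA, deriv f x + ∑ x ∈ SB, deriv f x :=
    (Finset.sum_filter_add_sum_filter_not P _ _).symm
  have hSAP : SA ⊆ P := Finset.filter_subset _ _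
  have hSBP : SB ⊆ P := Finset.filter_subset _ _
  set Asum := ∑ x ∈ SA, (-(deriv f x)) with hAdef
  have hAeq : ∑ x ∈ SA, deriv f x = -Asum := by
    rw [hAdef, ← Finset.sum_neg_distrib]
    simp
  have hA0 : 0 ≤ Asum := Finset.sum_nonneg fun x hx => by
    have := (Finset.mem_filter.mp hx).2
    linarith
  set Bsum := ∑ x ∈ SB, deriv f x with hBdef
  have hB0 : 0 ≤ Bsum := Finset.sum_nonneg fun x hx => by
    have := (Finset.mem_filter.mp hx).2
    linarith
  -- the image of SB under negation
  set SB' := SB.image (fun x : ℝ => -x) with hSB'def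
  have hmemSB' : ∀ z ∈ SB', -z ∈ SB ∧ z = -(-z) := by
    intro z hz
    obtain ⟨w, hw, rfl⟩ := Finset.mem_image.mp hz
    simpa using hw
  have hBsum' : ∑ z ∈ SB', deriv f (-z) = Bsum := by
    rw [hSB'def, Finset.sum_image (fun x _ y _ h => neg_injective h)]
    simp [hBdef]
  -- final common target
  have hfinal : Asum ≤ (n:ℝ) * (Real.log n)^2 * FF + 2 * U ∧
      Bsum ≤ (n:ℝ) * (Real.log n)^2 * FF + 2 * U := by
    by_cases hc : (GenContFract.of α).dens (m+3) + (GenContFract.of α).dens (m+2)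
        ≤ (n:ℝ) * (Real.log n)^2
    · -- Case 1 : q_{k+1} + q_k ≤ n (log n)^2, use the pairwise gap β_{m+2}
      have hbbub : 1 / bb hirr (m+2) ≤ (n:ℝ) * (Real.log n)^2 := by
        have hlb := bb_lb hirr hα (m+2)
        have hd3 := dens_pos hirr (m+3)
        have hd2 := dens_pos hirr (m+2)
        have hSpos : 0 < (GenContFract.of α).dens (m+3) + (GenContFract.of α).dens (m+2) := by
          linarith
        have h1 : 1 / bb hirr (m+2)
            < (GenContFract.of α).dens (m+3) + (GenContFract.of α).dens (m+2) := by
          rw [div_lt_iff₀ hbbpos]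
          rw [div_lt_iff₀ hSpos] at hlb
          nlinarith
        linarith
      have hA : Asum ≤ U + (1 / bb hirr (m+2)) * FF := by
        apply sum_telescope_one' _ _ _ _ _ hbbpos hU0 hFF0 SA
        · intro x hx
          have := (Finset.mem_filter.mp hx).2
          linarith
        · intro x hx
          exact le_trans (neg_le_abs _) (hUb x (hSAP hx))
        · intro x hx
          exact (hpos x (hPIoo x (hSAP hx))).le
        · intro x hx
          exact hFb x (hSAP hx)
        · intro x hx y hy hxy
          exact hgapP x (hSAP hx) y (hSAP hy) hxy
        · intro x hx y hy hxy
          exact hpairA x (hSAP hx) y (hSAP hy) hxy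
      have hB : Bsum ≤ U + (1 / bb hirr (m+2)) * FF := by
        rw [← hBsum']
        apply sum_telescope_one' (fun z => deriv f (-z)) (fun z => f (-z)) _ _ _
          hbbpos hU0 hFF0 SB'
        · intro z hz
          obtain ⟨hw, -⟩ := hmemSB' z hz
          have := (Finset.mem_filter.mp hw).2
          linarith
        · intro z hz
          obtain ⟨hw, -⟩ := hmemSB' z hz
          exact le_trans (le_abs_self _) (hUb _ (hSBP hw))
        · intro z hz
          obtain ⟨hw, -⟩ := hmemSB' z hz
          exact (hpos _ (hPIoo _ (hSBP hw))).le
        · intro z hz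
          obtain ⟨hw, -⟩ := hmemSB' z hz
          exact hFb _ (hSBP hw)
        · intro x hx y hy hxy
          obtain ⟨hwx, -⟩ := hmemSB' x hx
          obtain ⟨hwy, -⟩ := hmemSB' y hy
          have := hgapP (-y) (hSBP hwy) (-x) (hSBP hwx) (by linarith)
          linarith
        · intro x hx y hy hxy
          obtain ⟨hwx, -⟩ := hmemSB' x hx
          obtain ⟨hwy, -⟩ := hmemSB' y hy
          have := hpairB (-y) (hSBP hwy) (-x) (hSBP hwx) (by linarith)
          have heq : (-x) - (-y) = y - x := by ring
          rw [heq] at this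
          linarith
      have hmul : (1 / bb hirr (m+2)) * FF ≤ (n:ℝ) * (Real.log n)^2 * FF :=
        mul_le_mul_of_nonneg_right hbbub hFF0
      exact ⟨by linarith, by linarith⟩
    · -- Case 2 : n < 2 q_{m+2}; use the triple gap β_{m+1}/2
      push_neg at hc
      have hd2 := dens_pos hirr (m+2)
      have hd1 := dens_pos hirr (m+1)
      have hdens2n : (GenContFract.of α).dens (m+2) ≤ (n:ℝ) := by
        rw [← QZ_cast hirr (m+2)]
        exact_mod_cast hkle
      have hdmono : (GenContFract.of α).dens (m+1) ≤ (GenContFract.of α).dens (m+2) := by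
        rw [← QZ_cast hirr (m+1), ← QZ_cast hirr (m+2)]
        exact_mod_cast QZ_mono_succ hirr (m+1)
      have hlogq0 : 0 ≤ Real.log ((GenContFract.of α).dens (m+2)) :=
        Real.log_nonneg (one_le_dens hirr (m+2))
      have hlogq : Real.log ((GenContFract.of α).dens (m+2)) ≤ Real.log n :=
        Real.log_le_log hd2 hdens2n
      have hsq : (Real.log ((GenContFract.of α).dens (m+2)))^2 ≤ (Real.log n)^2 := by
        nlinarith
      have hslowk := hm₀ (m+2) (by omega)
      have hnlt2q : (n:ℝ) < 2 * (GenContFract.of α).dens (m+2) := by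
        have hq3 : (GenContFract.of α).dens (m+3)
            ≤ (GenContFract.of α).dens (m+2) * (Real.log n)^2 := by
          calc (GenContFract.of α).dens (m+3)
              ≤ (GenContFract.of α).dens (m+2)
                * (Real.log ((GenContFract.of α).dens (m+2)))^2 := hslowk
          _ ≤ _ := by nlinarith
        have h9 : (GenContFract.of α).dens (m+2)
            ≤ (GenContFract.of α).dens (m+2) * (Real.log n)^2 := by nlinarith
        nlinarith
      have hn2 : (n:ℤ) ≤ 2 * QZ hirr (m+2) := by
        have h1 : ((n:ℤ):ℝ) < ((2 * QZ hirr (m+2) : ℤ):ℝ) := by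
          push_cast
          rw [QZ_cast hirr (m+2)]
          exact_mod_cast hnlt2q
        exact_mod_cast h1.le
      have htriple : ∀ x ∈ P, ∀ y ∈ P, ∀ z ∈ P, x < y → y < z →
          bb hirr (m+1)/2 ≤ z - x := by
        intro x hx y hy z hz hxy hyz
        by_contra hcon
        push_neg at hcon
        obtain ⟨i, hi, rfl⟩ := Finset.mem_image.mp hx
        obtain ⟨j, hj, rfl⟩ := Finset.mem_image.mp hy
        obtain ⟨l, hl, rfl⟩ := Finset.mem_image.mp hz
        have hij : i ≠ j := by
          intro h
          rw [h] at hxy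
          exact lt_irrefl _ hxy
        have hjl : j ≠ l := by
          intro h
          rw [h] at hyz
          exact lt_irrefl _ hyz
        have hil : i ≠ l := by
          intro h
          rw [h] at hxy
          linarith
        have hc1 := close_implies_qk hirr hα m hklt.le hn2 a (Finset.mem_range.mp hi)
          (Finset.mem_range.mp hj) hij
          (by rw [abs_sub_comm, abs_of_pos (by linarith)]; linarith)
        have hc2 := close_implies_qk hirr hα m hklt.le hn2 a (Finset.mem_range.mp hj)
          (Finset.mem_range.mp hl) hjl
          (by rw [abs_sub_comm, abs_of_pos (by linarith)]; linarith)
        have hc3 := close_implies_qk hirr hα m hklt.le hn2 a (Finset.mem_range.mp hi)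
          (Finset.mem_range.mp hl) hil
          (by rw [abs_sub_comm, abs_of_pos (by linarith)]; linarith)
        have hQ1 := one_le_QZ hirr (m+2)
        omega
      have hGpos : 0 < bb hirr (m+1)/2 := by linarith
      have hA : Asum ≤ 2*U + (1/(bb hirr (m+1)/2)) * (2*FF) := by
        apply sum_telescope_two _ _ _ _ _ hGpos hU0 hFF0 SA
        · intro x hx
          have := (Finset.mem_filter.mp hx).2
          linarith
        · intro x hx
          exact le_trans (neg_le_abs _) (hUb x (hSAP hx))
        · intro x hx
          exact (hpos x (hPIoo x (hSAP hx))).le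
        · intro x hx
          exact hFb x (hSAP hx)
        · intro x hx y hy z hz hxy hyz
          exact htriple x (hSAP hx) y (hSAP hy) z (hSAP hz) hxy hyz
        · intro x hx y hy hxy
          exact hpairA x (hSAP hx) y (hSAP hy) hxy
      have hB : Bsum ≤ 2*U + (1/(bb hirr (m+1)/2)) * (2*FF) := by
        rw [← hBsum']
        apply sum_telescope_two (fun z => deriv f (-z)) (fun z => f (-z)) _ _ _
          hGpos hU0 hFF0 SB'
        · intro z hz
          obtain ⟨hw, -⟩ := hmemSB' z hz
          have := (Finset.mem_filter.mp hw).2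
          linarith
        · intro z hz
          obtain ⟨hw, -⟩ := hmemSB' z hz
          exact le_trans (le_abs_self _) (hUb _ (hSBP hw))
        · intro z hz
          obtain ⟨hw, -⟩ := hmemSB' z hz
          exact (hpos _ (hPIoo _ (hSBP hw))).le
        · intro z hz
          obtain ⟨hw, -⟩ := hmemSB' z hz
          exact hFb _ (hSBP hw)
        · intro x hx y hy z hz hxy hyz
          obtain ⟨hwx, -⟩ := hmemSB' x hx
          obtain ⟨hwy, -⟩ := hmemSB' y hy
          obtain ⟨hwz, -⟩ := hmemSB' z hz
          have := htriple (-z) (hSBP hwz) (-y) (hSBP hwy) (-x) (hSBP hwx)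
            (by linarith) (by linarith)
          linarith
        · intro x hx y hy hxy
          obtain ⟨hwx, -⟩ := hmemSB' x hx
          obtain ⟨hwy, -⟩ := hmemSB' y hy
          have := hpairB (-y) (hSBP hwy) (-x) (hSBP hwx) (by linarith)
          have heq : (-x) - (-y) = y - x := by ring
          rw [heq] at this
          linarith
      have hr : (1/(bb hirr (m+1)/2)) * (2*FF) ≤ (n:ℝ) * (Real.log n)^2 * FF := by
        have hlb := bb_lb hirr hα (m+1)
        have hSpos : 0 < (GenContFract.of α).dens (m+2) + (GenContFract.of α).dens (m+1) := by
          linarith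
        have h1 : 1 / bb hirr (m+1)
            < (GenContFract.of α).dens (m+2) + (GenContFract.of α).dens (m+1) := by
          rw [div_lt_iff₀ hbb1pos]
          rw [div_lt_iff₀ hSpos] at hlb
          nlinarith
        have h2 : 1/(bb hirr (m+1)/2) = 2 * (1 / bb hirr (m+1)) := by
          field_simp
        have h3 : 1/(bb hirr (m+1)/2) < 4 * (GenContFract.of α).dens (m+2) := by
          rw [h2]
          linarith
        have h4 : (1/(bb hirr (m+1)/2)) * (2*FF) ≤ 8 * (n:ℝ) * FF := by
          have h5 : 1/(bb hirr (m+1)/2) ≤ 4 * (n:ℝ) := by linarith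
          have h6 : 0 ≤ 1/(bb hirr (m+1)/2) := by positivity
          nlinarith
        have h7 : 8 * (n:ℝ) * FF ≤ (n:ℝ) * (Real.log n)^2 * FF := by
          have h8 : 0 ≤ (n:ℝ) * FF := mul_nonneg hnpos.le hFF0
          nlinarith [mul_le_mul_of_nonneg_left hlogsq h8]
        linarith
      exact ⟨by linarith, by linarith⟩
  rw [hbirk, hsplit, hAeq]
  rw [abs_le]
  constructor
  · linarith [hfinal.1, hB0]
  · linarith [hfinal.2, hA0]

end CFDev

/-- Denjoy–Koksma consequence for the derivative: for `α` with slowly growing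
denominators, eventually `|S_n f'(a)| ≤ n (log n)² f_{n,max}(a) + 2 f'_{n,max}(a)`. -/
theorem stmt5 (α γ : ℝ) (hα : α ∈ Set.Ioo (0 : ℝ) 1) (hirr : Irrational α)
    (hslow : SlowDens α)
    (hγ : γ ∈ Set.Ioo (0 : ℝ) (1 / 2)) (f : ℝ → ℝ) (hf : IsKocherginRoof γ f) :
    ∃ n₀ : ℕ, ∀ n : ℕ, n₀ ≤ n → ∀ a : ℝ,
      (∀ i : ℕ, i ≤ n → ∀ m : ℤ, a + i * α ≠ m) →
      |birkS α (deriv f) n a| ≤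
        n * (Real.log n) ^ 2 * fMax α f n a + 2 * fMax α (fun x => |deriv f x|) n a := by
  exact CFDev.stmt5' α γ hα hirr hslow hγ f hf
end

section
/- Let α ∈ (0,1) be irrational with slowly growing denominators. Then there exists N₀ such that for every integer N ≥ N₀ and all a, ā ∈ ℝ there exists an integer j with 0 ≤ j ≤ N (log N)³ and ‖ā + jα − a‖ ≤ 1/N. -/
/-- Distance from a real number to the nearest integer. -/
noncomputable def distToInt (x : ℝ) : ℝ := |x - round x|

/-!
Let `q` be the first continued fraction denominator of `α` with `q ≥ 2N`. Slow growth applied to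
the previous denominator gives `q ≤ 2N log(2N)² ≤ N (log N)³`. If `p/q` is the corresponding
convergent, then `p` is coprime to `q`, so the points `j p / q`, `0 ≤ j < q`, run through the whole
grid `q⁻¹ℤ` modulo `1` and one of them lies within `1/(2q)` of `a - ā`. Replacing `p/q` by `α`
moves the `j`-th point by at most `q |α - p/q| ≤ 1/q'`, where `q' ≥ q` is the next denominator,
which gives the bound `1/(4N) + 1/(2N) ≤ 1/N`.
-/

open Real

theorem distToInt_le_abs_sub (x : ℝ) (k : ℤ) : distToInt x ≤ |x - k| :=
  round_le x k

theorem distToInt_add_le (x y : ℝ) : distToInt (x + y) ≤ distToInt x + |y| :=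
  calc distToInt (x + y) ≤ |x + y - round x| := distToInt_le_abs_sub _ _
    _ ≤ |x - round x| + |y| := by rw [add_sub_right_comm]; exact abs_add_le _ _

theorem exists_nat_lt_distToInt_mul_div_sub_le {P Q : ℤ} (hQ : 0 < Q) (hco : IsCoprime P Q)
    (x : ℝ) : ∃ j : ℕ, (j : ℤ) < Q ∧ distToInt (j * P / Q - x) ≤ 1 / (2 * Q) := by
  obtain ⟨u, w, huw⟩ := hco
  set t : ℤ := round ((Q : ℝ) * x)
  obtain ⟨j, hj⟩ : ∃ j : ℕ, (j : ℤ) = t * u % Q :=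
    ⟨_, Int.toNat_of_nonneg (Int.emod_nonneg _ hQ.ne')⟩
  refine ⟨j, hj ▸ Int.emod_lt_of_pos _ hQ, ?_⟩
  -- `j ≡ t u` and `u P ≡ 1` modulo `Q`, so `j P = t + k Q`
  set k : ℤ := -(t * w) - t * u / Q * P
  have hjP : (j : ℤ) * P = t + k * Q := by
    rw [hj, Int.emod_def]; linear_combination t * huw
  have hQR : (0 : ℝ) < Q := by exact_mod_cast hQ
  have hjPR : (j : ℝ) * P = t + k * Q := by exact_mod_cast hjP
  have hsplit : (j : ℝ) * P / Q - x - k = (t - Q * x) / Q := by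
    field_simp; linear_combination hjPR
  calc distToInt (j * P / Q - x) ≤ |j * P / Q - x - k| := distToInt_le_abs_sub _ _
    _ = |(Q : ℝ) * x - t| / Q := by rw [hsplit, abs_div, abs_of_pos hQR, abs_sub_comm]
    _ ≤ 1 / 2 / Q := by gcongr; exact abs_sub_round _
    _ = 1 / (2 * Q) := by ring

namespace GenContFract

variable {K : Type*} [Field K] [LinearOrder K] [FloorRing K]

theorem exists_int_eq_contsAux (v : K) (n : ℕ) :
    ∃ A B : ℤ,
      ((GenContFract.of v).contsAux n).a = A ∧ ((GenContFract.of v).contsAux n).b = B := by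
  induction n using Nat.strong_induction_on with
  | _ n ih =>
  match n with
  | 0 => exact ⟨1, 0, by simp [contsAux]⟩
  | 1 => exact ⟨⌊v⌋, 1, by simp [contsAux, of_h_eq_floor]⟩
  | n + 2 =>
    obtain ⟨A₁, B₁, hA₁, hB₁⟩ := ih (n + 1) (by omega)
    cases hs : (GenContFract.of v).s.get? n with
    | none => exact ⟨A₁, B₁, contsAux_stable_step_of_terminated hs ▸ ⟨hA₁, hB₁⟩⟩
    | some gp =>
      obtain ⟨A₀, B₀, hA₀, hB₀⟩ := ih n (by omega)
      obtain ⟨z, hz⟩ := exists_int_eq_of_partDen (partDen_eq_s_b hs)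
      have ha : gp.a = 1 := of_partNum_eq_one (partNum_eq_s_a hs)
      refine ⟨z * A₁ + A₀, z * B₁ + B₀, ?_⟩
      simp [contsAux_recurrence hs rfl rfl, ha, hz, hA₁, hB₁, hA₀, hB₀]

theorem exists_int_eq_nums_dens (v : K) (n : ℕ) :
    ∃ A B : ℤ, (GenContFract.of v).nums n = A ∧ (GenContFract.of v).dens n = B := by
  simpa only [num_eq_conts_a, den_eq_conts_b, nth_cont_eq_succ_nth_contAux]
    using exists_int_eq_contsAux v (n + 1)

theorem isCoprime_of_nums_eq_of_dens_eq [IsStrictOrderedRing K] {v : K} {n : ℕ}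
    (hn : ¬(GenContFract.of v).TerminatedAt n) {A B : ℤ} (hA : (GenContFract.of v).nums n = A)
    (hB : (GenContFract.of v).dens n = B) : IsCoprime A B := by
  obtain ⟨A', B', hA', hB'⟩ := exists_int_eq_nums_dens v (n + 1)
  have hdet := SimpContFract.determinant (s := SimpContFract.of v) hn
  simp only [SimpContFract.of, hA, hB, hA', hB'] at hdet
  have hdetℤ : A * B' - B * A' = (-1) ^ (n + 1) := by exact_mod_cast hdet
  have hsq : ((-1 : ℤ) ^ (n + 1)) ^ 2 = 1 := by rw [← pow_mul, pow_mul', neg_one_sq, one_pow]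
  exact ⟨(-1) ^ (n + 1) * B', -((-1) ^ (n + 1) * A'), by
    linear_combination (-1) ^ (n + 1) * hdetℤ + hsq⟩

end GenContFract

open GenContFract

theorem Irrational.not_terminatedAt_genContFract_of {α : ℝ} (hα : Irrational α) (n : ℕ) :
    ¬(GenContFract.of α).TerminatedAt n := fun h ↦
  hα <| by simpa [eq_comm] using (terminates_iff_rat α).1 ⟨n, h⟩

theorem Irrational.fib_succ_le_dens {α : ℝ} (hα : Irrational α) (n : ℕ) :
    (Nat.fib (n + 1) : ℝ) ≤ (GenContFract.of α).dens n :=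
  succ_nth_fib_le_of_nth_den (Or.inr (hα.not_terminatedAt_genContFract_of _))

theorem Irrational.one_le_dens {α : ℝ} (hα : Irrational α) (n : ℕ) :
    1 ≤ (GenContFract.of α).dens n :=
  le_trans (by exact_mod_cast Nat.fib_pos.2 n.succ_pos) (hα.fib_succ_le_dens n)

theorem Irrational.exists_le_dens {α : ℝ} (hα : Irrational α) (X : ℝ) :
    ∃ n, X ≤ (GenContFract.of α).dens n := by
  refine ⟨⌈X⌉₊ + 4, le_trans (Nat.le_ceil X) ?_⟩
  have h : ⌈X⌉₊ ≤ Nat.fib (⌈X⌉₊ + 4 + 1) := le_trans (by omega) (Nat.le_fib_self (by omega))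
  exact le_trans (by exact_mod_cast h) (hα.fib_succ_le_dens _)

theorem Irrational.exists_nat_lt_dens_distToInt_mul_sub_le {α : ℝ} (hα : Irrational α) (n : ℕ)
    (x : ℝ) : ∃ j : ℕ, (j : ℝ) < (GenContFract.of α).dens n ∧
      distToInt (j * α - x) ≤
        1 / (2 * (GenContFract.of α).dens n) + 1 / (GenContFract.of α).dens (n + 1) := by
  obtain ⟨P, Q, hP, hQ⟩ := exists_int_eq_nums_dens α n
  have hQpos : (0 : ℝ) < Q := hQ ▸ one_pos.trans_le (hα.one_le_dens n)
  have hnext : (0 : ℝ) < (GenContFract.of α).dens (n + 1) := one_pos.trans_le (hα.one_le_dens _)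
  obtain ⟨j, hjQ, hj⟩ := exists_nat_lt_distToInt_mul_div_sub_le (by exact_mod_cast hQpos)
    (isCoprime_of_nums_eq_of_dens_eq (hα.not_terminatedAt_genContFract_of n) hP hQ) x
  have hjQR : (j : ℝ) < Q := by exact_mod_cast hjQ
  have happrox : |α - P / Q| ≤ 1 / (Q * (GenContFract.of α).dens (n + 1)) := by
    simpa only [conv_eq_num_div_den, hP, hQ]
      using abs_sub_convs_le (hα.not_terminatedAt_genContFract_of n)
  refine ⟨j, hQ ▸ hjQR, hQ ▸ ?_⟩
  calc distToInt (j * α - x) = distToInt ((j * P / Q - x) + j * (α - P / Q)) := by ring_nf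
    _ ≤ 1 / (2 * Q) + Q * (1 / (Q * (GenContFract.of α).dens (n + 1))) := by
        grw [distToInt_add_le, hj, abs_mul, Nat.abs_cast, happrox, hjQR]
    _ = 1 / (2 * Q) + 1 / (GenContFract.of α).dens (n + 1) := by field_simp

theorem SlowDens.exists_dens_mem_Icc {α : ℝ} (hα : Irrational α) (hslow : SlowDens α) :
    ∃ X₀ : ℝ, ∀ X ≥ X₀, ∃ n,
      X ≤ (GenContFract.of α).dens n ∧ (GenContFract.of α).dens n ≤ X * log X ^ 2 := by
  classical
  obtain ⟨n₀, hn₀⟩ := hslow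
  set q : ℕ → ℝ := fun n ↦ (GenContFract.of α).dens n
  have hq_mono : Monotone q := monotone_nat_of_le_succ fun n ↦ of_den_mono
  refine ⟨q n₀ + 1, fun X hX ↦ ?_⟩
  have hex := hα.exists_le_dens X
  -- the first denominator `≥ X` is preceded by one below `X` to which slow growth applies
  obtain ⟨m, hm⟩ : ∃ m, Nat.find hex = m + 1 := Nat.exists_eq_succ_of_ne_zero fun h ↦ by
    have h0 := h ▸ Nat.find_spec hex
    rw [zeroth_den_eq_one] at h0
    linarith [hα.one_le_dens n₀]
  have hqm : q m < X := lt_of_not_ge (Nat.find_min hex (by omega))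
  have hXq : X ≤ q (m + 1) := hm ▸ Nat.find_spec hex
  have hmn₀ : n₀ ≤ m := by
    by_contra! h
    linarith [hq_mono (show m + 1 ≤ n₀ by omega)]
  refine ⟨m + 1, hXq, ?_⟩
  have hq1 := hα.one_le_dens m
  calc q (m + 1) ≤ q m * log (q m) ^ 2 := hn₀ m hmn₀
    _ ≤ X * log X ^ 2 := by
        have : log (q m) ≤ log X := log_le_log (by linarith) hqm.le
        have : 0 ≤ log (q m) := log_nonneg hq1
        gcongr
        linarith

theorem four_le_log_of_fifty_five_le {x : ℝ} (hx : 55 ≤ x) : 4 ≤ log x := by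
  rw [le_log_iff_exp_le (by linarith)]
  calc exp 4 = exp 1 ^ 4 := by rw [← exp_nat_mul]; norm_num
    _ ≤ 2.7182818286 ^ 4 := by gcongr; exact exp_one_lt_d9.le
    _ ≤ x := by norm_num; linarith

theorem two_mul_mul_log_two_mul_sq_le {x : ℝ} (hx : 55 ≤ x) :
    2 * x * log (2 * x) ^ 2 ≤ x * log x ^ 3 := by
  have hL := four_le_log_of_fifty_five_le hx
  have hlog2 := log_two_lt_d9
  have : 2 * log (2 * x) ^ 2 ≤ log x ^ 3 := by
    rw [log_mul two_ne_zero (by linarith)]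
    nlinarith [log_pos one_lt_two, sq_nonneg (log x - 4), sq_nonneg (log x)]
  nlinarith

theorem stmt7_general (α : ℝ) (hirr : Irrational α)
    (hslow : SlowDens α) :
    ∃ N₀ : ℕ, ∀ N : ℕ, N₀ ≤ N → ∀ a abar : ℝ, ∃ j : ℕ,
      (j : ℝ) ≤ N * (Real.log N) ^ 3 ∧ distToInt (abar + j * α - a) ≤ 1 / N := by
  obtain ⟨X₀, hX₀⟩ := hslow.exists_dens_mem_Icc hirr
  refine ⟨max 55 ⌈X₀⌉₊, fun N hN a abar ↦ ?_⟩
  have hN55 : (55 : ℝ) ≤ N := by exact_mod_cast (le_max_left _ _).trans hN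
  have hX₀N : X₀ ≤ 2 * N := by
    have : (⌈X₀⌉₊ : ℝ) ≤ N := by exact_mod_cast (le_max_right _ _).trans hN
    linarith [Nat.le_ceil X₀]
  obtain ⟨n, hqn, hqn'⟩ := hX₀ (2 * N) hX₀N
  obtain ⟨j, hj, hdist⟩ := hirr.exists_nat_lt_dens_distToInt_mul_sub_le n (a - abar)
  have hqn1 : 2 * (N : ℝ) ≤ (GenContFract.of α).dens (n + 1) := hqn.trans of_den_mono
  refine ⟨j, ?_, ?_⟩
  · calc (j : ℝ) ≤ 2 * N * log (2 * N) ^ 2 := hj.le.trans hqn'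
      _ ≤ N * log N ^ 3 := two_mul_mul_log_two_mul_sq_le hN55
  · calc distToInt (abar + j * α - a) = distToInt (j * α - (a - abar)) := by ring_nf
      _ ≤ 1 / (2 * (2 * N)) + 1 / (2 * N) := by grw [hdist, ← hqn, ← hqn1]
      _ ≤ 1 / N := by field_simp; linarith

/-- For `α` with slowly growing denominators, for all large `N` any two points on the
circle can be brought `1/N`-close in the horizontal direction within `N (log N)³`
steps of the rotation. -/
theorem stmt7 (α : ℝ) (hα : α ∈ Set.Ioo (0 : ℝ) 1) (hirr : Irrational α)
    (hslow : SlowDens α) :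
    ∃ N₀ : ℕ, ∀ N : ℕ, N₀ ≤ N → ∀ a abar : ℝ, ∃ j : ℕ,
      (j : ℝ) ≤ N * (Real.log N) ^ 3 ∧ distToInt (abar + j * α - a) ≤ 1 / N :=
  stmt7_general α hirr hslow
end

section
/- Let α ∈ (0,1) be irrational with slowly growing denominators. Then there exists m₀ such that for every integer m ≥ m₀ one has ‖mα‖ ≥ 1/(m (log m)⁵). -/
open GenContFract Real

namespace Stmt8Aux

variable {α : ℝ}

/-- For irrational `α`, the continued fraction never terminates. -/
lemma not_term (hirr : Irrational α) (n : ℕ) : ¬(GenContFract.of α).TerminatedAt n := by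
  intro h
  obtain ⟨q, hq⟩ := GenContFract.exists_rat_eq_of_terminates ⟨n, h⟩
  exact hirr ⟨q, hq.symm⟩

lemma one_le_dens (hirr : Irrational α) (n : ℕ) : (1 : ℝ) ≤ (GenContFract.of α).dens n := by
  have h := succ_nth_fib_le_of_nth_den (v := α) (n := n) (Or.inr (not_term hirr _))
  exact le_trans (by exact_mod_cast Nat.fib_pos.mpr n.succ_pos) h

lemma dens_pos (hirr : Irrational α) (n : ℕ) : (0 : ℝ) < (GenContFract.of α).dens n :=
  lt_of_lt_of_le one_pos (one_le_dens hirr n)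

/-- The stream entry exists. -/
lemma exists_gp (hirr : Irrational α) (n : ℕ) :
    ∃ gp, (GenContFract.of α).s.get? n = some gp :=
  Option.ne_none_iff_exists'.mp (not_term hirr n)

/-- dens (n+2) ≥ dens (n+1) + dens n. -/
lemma dens_step (hirr : Irrational α) (n : ℕ) :
    (GenContFract.of α).dens (n + 1) + (GenContFract.of α).dens n ≤
      (GenContFract.of α).dens (n + 2) := by
  obtain ⟨gp, hgp⟩ := exists_gp hirr (n + 1)
  have hrec := dens_recurrence hgp rfl rfl
  have ha : gp.a = 1 := of_partNum_eq_one (partNum_eq_s_a hgp)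
  have hb : (1 : ℝ) ≤ gp.b := of_one_le_get?_partDen (partDen_eq_s_b hgp)
  have h1 : (0 : ℝ) < (GenContFract.of α).dens (n + 1) := dens_pos hirr _
  rw [hrec, ha]
  nlinarith

/-- Continuants are integers. -/
lemma int_conts (hirr : Irrational α) :
    ∀ n : ℕ, (∃ a : ℤ, (GenContFract.of α).nums n = a) ∧
      (∃ b : ℤ, (GenContFract.of α).dens n = b) := by
  have key : ∀ n : ℕ,
      ((∃ a : ℤ, (GenContFract.of α).nums n = a) ∧
        (∃ b : ℤ, (GenContFract.of α).dens n = b)) ∧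
      ((∃ a : ℤ, (GenContFract.of α).nums (n+1) = a) ∧
        (∃ b : ℤ, (GenContFract.of α).dens (n+1) = b)) := by
    intro n
    induction n with
    | zero =>
      obtain ⟨gp, hgp⟩ := exists_gp hirr 0
      obtain ⟨ha, z, hz⟩ := of_partNum_eq_one_and_exists_int_partDen_eq hgp
      refine ⟨⟨⟨⌊α⌋, ?_⟩, ⟨1, ?_⟩⟩, ⟨⟨z * ⌊α⌋ + 1, ?_⟩, ⟨z, ?_⟩⟩⟩
      · rw [zeroth_num_eq_h, of_h_eq_floor]
      · rw [zeroth_den_eq_one]; norm_num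
      · rw [first_num_eq hgp, ha, hz, of_h_eq_floor]; push_cast; ring
      · rw [first_den_eq hgp, hz]
    | succ n ih =>
      refine ⟨ih.2, ?_⟩
      obtain ⟨⟨⟨a, hA⟩, ⟨b, hB⟩⟩, ⟨⟨a', hA'⟩, ⟨b', hB'⟩⟩⟩ := ih
      obtain ⟨gp, hgp⟩ := exists_gp hirr (n + 1)
      obtain ⟨hone, z, hz⟩ := of_partNum_eq_one_and_exists_int_partDen_eq hgp
      refine ⟨⟨z * a' + a, ?_⟩, ⟨z * b' + b, ?_⟩⟩
      · rw [nums_recurrence hgp hA hA', hone, hz]; push_cast; ring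
      · rw [dens_recurrence hgp hB hB', hone, hz]; push_cast; ring
  exact fun n => (key n).1

/-- The determinant formula for `of α`. -/
lemma det (hirr : Irrational α) (n : ℕ) :
    (GenContFract.of α).nums n * (GenContFract.of α).dens (n + 1) -
      (GenContFract.of α).dens n * (GenContFract.of α).nums (n + 1) = (-1) ^ (n + 1) :=
  SimpContFract.determinant (s := SimpContFract.of α) (not_term hirr n)

/-- Lower bound `1/(Bₙ Bₙ₊₂) ≤ |α - Aₙ/Bₙ|` for irrational `α`. -/
lemma conv_lower (hirr : Irrational α) (n : ℕ) :
    1 / ((GenContFract.of α).dens n * (GenContFract.of α).dens (n + 2)) ≤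
      |α - (GenContFract.of α).convs n| := by
  set g := GenContFract.of α with hg
  have hB0 : (0:ℝ) < g.dens n := dens_pos hirr n
  have hB1 : (0:ℝ) < g.dens (n+1) := dens_pos hirr (n+1)
  have hB2 : (0:ℝ) < g.dens (n+2) := dens_pos hirr (n+2)
  have hup : |α - g.convs (n+1)| ≤ 1 / (g.dens (n+1) * g.dens (n+2)) :=
    abs_sub_convs_le (not_term hirr (n+1))
  have hdiff : |g.convs n - g.convs (n+1)| = 1 / (g.dens n * g.dens (n+1)) := by
    rw [conv_eq_num_div_den, conv_eq_num_div_den,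
      div_sub_div _ _ hB0.ne' hB1.ne', det hirr n, abs_div, abs_pow, abs_neg, abs_one,
      one_pow, abs_of_pos (mul_pos hB0 hB1)]
  have htri : |g.convs n - g.convs (n+1)| ≤ |α - g.convs n| + |α - g.convs (n+1)| := by
    have := abs_sub_le (g.convs n) α (g.convs (n+1))
    rwa [abs_sub_comm (g.convs n) α] at this
  have hstep : g.dens (n+1) + g.dens n ≤ g.dens (n+2) := dens_step hirr n
  have hkey : 1 / (g.dens n * g.dens (n+2)) ≤
      1 / (g.dens n * g.dens (n+1)) - 1 / (g.dens (n+1) * g.dens (n+2)) := by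
    rw [div_sub_div _ _ (mul_pos hB0 hB1).ne' (mul_pos hB1 hB2).ne',
      div_le_div_iff₀ (mul_pos hB0 hB2) (mul_pos (mul_pos hB0 hB1) (mul_pos hB1 hB2))]
    nlinarith [mul_nonneg (mul_nonneg (mul_nonneg hB0.le hB1.le) hB2.le)
      (sub_nonneg.mpr hstep), mul_pos hB0 hB1, mul_pos hB1 hB2]
  have := hdiff ▸ htri
  linarith

/-- If a rational equals the `n`-th convergent, its denominator is `dens n`. -/
lemma den_eq_dens (hirr : Irrational α) (n : ℕ) (q : ℚ)
    (hq : (q : ℝ) = (GenContFract.of α).convs n) :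
    ((q.den : ℝ)) = (GenContFract.of α).dens n := by
  obtain ⟨⟨a, ha⟩, ⟨b, hb⟩⟩ := int_conts hirr n
  obtain ⟨⟨a', ha'⟩, ⟨b', hb'⟩⟩ := int_conts hirr (n+1)
  have hbpos : (0:ℝ) < (b:ℝ) := hb ▸ dens_pos hirr n
  have hb0 : (0:ℤ) < b := by exact_mod_cast hbpos
  have hdet : (a : ℝ) * b' - (b:ℝ) * a' = (-1:ℝ) ^ (n+1) := by
    rw [← ha, ← hb, ← ha', ← hb']; exact det hirr n
  have hdetZ : a * b' - b * a' = (-1:ℤ) ^ (n+1) := by exact_mod_cast hdet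
  have hcop : IsCoprime a b := by
    rcases Nat.even_or_odd (n+1) with he | ho
    · have h1 : ((-1:ℤ)) ^ (n+1) = 1 := he.neg_one_pow
      rw [h1] at hdetZ
      exact ⟨b', -a', by linear_combination hdetZ⟩
    · have h1 : ((-1:ℤ)) ^ (n+1) = -1 := ho.neg_one_pow
      rw [h1] at hdetZ
      exact ⟨-b', a', by linear_combination -hdetZ⟩
  have hcopN : Nat.Coprime a.natAbs b.natAbs := Int.isCoprime_iff_gcd_eq_one.mp hcop
  have hqab : q = (a : ℚ) / (b : ℚ) := by
    apply Rat.cast_injective (α := ℝ)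
    push_cast
    rw [hq, conv_eq_num_div_den, ha, hb]
  have := Rat.den_div_eq_of_coprime hb0 hcopN
  rw [hqab]
  rw [hb]
  exact_mod_cast this

end Stmt8Aux

/-- For `α` with slowly growing denominators, eventually `‖mα‖ ≥ 1/(m (log m)⁵)`. -/
theorem stmt8 (α : ℝ) (hα : α ∈ Set.Ioo (0 : ℝ) 1) (hirr : Irrational α)
    (hslow : SlowDens α) :
    ∃ m₀ : ℕ, ∀ m : ℕ, m₀ ≤ m →
      1 / (m * (Real.log m) ^ 5) ≤ distToInt (m * α) := by
  classical
  obtain ⟨n₀, hn₀⟩ := hslow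
  set g := GenContFract.of α with hg
  -- minimum distance to the first convergents
  set c : ℝ := (Finset.range (n₀ + 1)).inf' (by simp) (fun k => |α - (α.convergent k : ℝ)|)
    with hc_def
  have hc : 0 < c := by
    rw [hc_def, Finset.lt_inf'_iff]
    intro k _
    rw [abs_pos, sub_ne_zero]
    exact fun h => hirr ⟨_, h.symm⟩
  refine ⟨max 8200 (⌈1/c⌉₊ + 1), fun m hm => ?_⟩
  have hm1 : (8200 : ℝ) ≤ (m : ℝ) := by
    exact_mod_cast le_trans (le_max_left _ _) hm
  have hmpos : (0 : ℝ) < m := by linarith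
  have hm1' : (1 : ℝ) ≤ m := by linarith
  have hm2 : 1 / c ≤ (m : ℝ) := by
    have h1 : (⌈1/c⌉₊ : ℝ) ≤ m := by
      exact_mod_cast le_trans (le_trans (Nat.le_succ _) (le_max_right _ _)) hm
    exact le_trans (Nat.le_ceil _) h1
  have hcm : 1 / (m : ℝ) ≤ c := (one_div_le hmpos hc).mpr hm2
  set t := Real.log m with ht_def
  have ht9 : (9 : ℝ) ≤ t := by
    rw [ht_def, le_log_iff_exp_le hmpos]
    calc Real.exp 9 = Real.exp 1 ^ (9 : ℕ) := by rw [Real.exp_one_pow]; norm_num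
      _ ≤ 2.7182818286 ^ (9 : ℕ) := by
          exact pow_le_pow_left₀ (Real.exp_pos 1).le Real.exp_one_lt_d9.le 9
      _ ≤ 8200 := by norm_num
      _ ≤ m := hm1
  have ht0 : (0 : ℝ) < t := by linarith
  have ht5 : (2 : ℝ) ≤ t ^ 5 := by
    calc (2:ℝ) ≤ 9 ^ 5 := by norm_num
      _ ≤ t ^ 5 := pow_le_pow_left₀ (by norm_num) ht9 5
  have hmt5 : (0 : ℝ) < (m : ℝ) * t ^ 5 := mul_pos hmpos (by positivity)
  set p : ℤ := round ((m : ℝ) * α) with hp_def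
  set D : ℝ := |(m : ℝ) * α - p| with hD_def
  show 1 / ((m : ℝ) * t ^ 5) ≤ D
  rcases le_or_gt (1 / (2 * (m:ℝ))) D with hD | hD
  · -- easy case: the distance is at least 1/(2m)
    refine le_trans ?_ hD
    apply one_div_le_one_div_of_le (by positivity)
    nlinarith
  · -- Legendre case
    set q : ℚ := (p : ℚ) / ((m : ℤ) : ℚ) with hq_def
    have hqden_dvd : ((q.den : ℤ)) ∣ (m : ℤ) := by
      rw [hq_def, ← Rat.divInt_eq_div]
      exact Rat.den_dvd p m
    have hqden_le : (q.den : ℝ) ≤ (m : ℝ) := by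
      exact_mod_cast Int.le_of_dvd (by exact_mod_cast hmpos) hqden_dvd
    have hqden1 : (1 : ℝ) ≤ (q.den : ℝ) := by exact_mod_cast q.pos
    have hqval : (q : ℝ) = (p : ℝ) / m := by rw [hq_def]; push_cast; ring
    have habs : |α - (q : ℝ)| = D / m := by
      rw [hqval, hD_def, ← abs_of_pos hmpos, ← abs_div]
      congr 1
      field_simp
      rw [abs_of_pos hmpos]; ring
    have hlt : |α - (q : ℝ)| < 1 / (2 * (q.den : ℝ) ^ 2) := by
      rw [habs]
      have h1 : D / m < 1 / (2 * m * m) := by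
        rw [div_lt_div_iff₀ hmpos (by positivity)]
        calc D * (2 * m * m) = (D * (2 * m)) * m := by ring
          _ < 1 * m := by
              apply mul_lt_mul_of_pos_right _ hmpos
              calc D * (2 * m) < (1 / (2 * m)) * (2 * m) := by
                    apply mul_lt_mul_of_pos_right hD (by positivity)
                _ = 1 := by field_simp
          _ = 1 * m := rfl
      have h2 : (1 : ℝ) / (2 * m * m) ≤ 1 / (2 * (q.den : ℝ) ^ 2) := by
        apply one_div_le_one_div_of_le (by positivity)
        nlinarith
      linarith
    obtain ⟨n, hn⟩ := Real.exists_rat_eq_convergent hlt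
    have hconv : (q : ℝ) = g.convs n := by
      rw [hg, Real.convs_eq_convergent, ← hn]
    have hD_eq : D = (m : ℝ) * |α - (q : ℝ)| := by
      rw [habs]; field_simp
    rcases le_or_gt n₀ n with hcase | hcase
    · -- large n: use slow growth of denominators
      have hBden : (q.den : ℝ) = g.dens n := Stmt8Aux.den_eq_dens hirr n q hconv
      have hBn_le : g.dens n ≤ (m : ℝ) := hBden ▸ hqden_le
      have hB0 : (0 : ℝ) < g.dens n := Stmt8Aux.dens_pos hirr n
      have hB1one : (1 : ℝ) ≤ g.dens (n+1) := Stmt8Aux.one_le_dens hirr (n+1)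
      have hB2pos : (0 : ℝ) < g.dens (n+2) := Stmt8Aux.dens_pos hirr (n+2)
      have hlog_n : Real.log (g.dens n) ≤ t := Real.log_le_log hB0 hBn_le
      have hlog_n0 : 0 ≤ Real.log (g.dens n) := Real.log_nonneg (Stmt8Aux.one_le_dens hirr n)
      have hstep1 : g.dens (n+1) ≤ (m : ℝ) * t ^ 2 := by
        calc g.dens (n+1) ≤ g.dens n * (Real.log (g.dens n)) ^ 2 := hn₀ n hcase
          _ ≤ (m : ℝ) * t ^ 2 := by
              apply mul_le_mul hBn_le (pow_le_pow_left₀ hlog_n0 hlog_n 2) (by positivity)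
                hmpos.le
      have hmt2one : (1 : ℝ) ≤ (m : ℝ) * t ^ 2 := by nlinarith [sq_nonneg t]
      have hL0 : 0 ≤ Real.log ((m : ℝ) * t ^ 2) := Real.log_nonneg hmt2one
      have hlog_n1 : Real.log (g.dens (n+1)) ≤ Real.log ((m : ℝ) * t ^ 2) :=
        Real.log_le_log (lt_of_lt_of_le one_pos hB1one) hstep1
      have hlog_n1' : 0 ≤ Real.log (g.dens (n+1)) := Real.log_nonneg hB1one
      have hL3t : Real.log ((m : ℝ) * t ^ 2) ≤ 3 * t := by
        rw [Real.log_mul hmpos.ne' (by positivity), Real.log_pow]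
        have := Real.log_le_sub_one_of_pos ht0
        push_cast
        linarith
      have hstep2 : g.dens (n+2) ≤ ((m : ℝ) * t ^ 2) * (3 * t) ^ 2 := by
        calc g.dens (n+2) ≤ g.dens (n+1) * (Real.log (g.dens (n+1))) ^ 2 :=
              hn₀ (n+1) (le_trans hcase (Nat.le_succ n))
          _ ≤ ((m : ℝ) * t ^ 2) * (3 * t) ^ 2 := by
              apply mul_le_mul hstep1 ?_ (by positivity) (by positivity)
              apply pow_le_pow_left₀ hlog_n1'
              exact le_trans hlog_n1 hL3t
      have hprod : g.dens n * g.dens (n+2) ≤ (m : ℝ) ^ 2 * t ^ 5 := by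
        calc g.dens n * g.dens (n+2) ≤ (m : ℝ) * (((m : ℝ) * t ^ 2) * (3 * t) ^ 2) := by
              apply mul_le_mul hBn_le hstep2 hB2pos.le hmpos.le
          _ = 9 * ((m : ℝ) ^ 2 * t ^ 4) := by ring
          _ ≤ t * ((m : ℝ) ^ 2 * t ^ 4) := by
              apply mul_le_mul_of_nonneg_right ht9 (by positivity)
          _ = (m : ℝ) ^ 2 * t ^ 5 := by ring
      have hlow : 1 / (g.dens n * g.dens (n+2)) ≤ |α - (q : ℝ)| := by
        rw [hconv]
        exact Stmt8Aux.conv_lower hirr n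
      calc 1 / ((m : ℝ) * t ^ 5) = (m : ℝ) * (1 / ((m : ℝ) ^ 2 * t ^ 5)) := by
            field_simp
        _ ≤ (m : ℝ) * (1 / (g.dens n * g.dens (n+2))) := by
            apply mul_le_mul_of_nonneg_left _ hmpos.le
            exact one_div_le_one_div_of_le (mul_pos hB0 hB2pos) hprod
        _ ≤ (m : ℝ) * |α - (q : ℝ)| := mul_le_mul_of_nonneg_left hlow hmpos.le
        _ = D := hD_eq.symm
    · -- small n: use the minimum distance c
      have hcle : c ≤ |α - (α.convergent n : ℝ)| := by
        rw [hc_def]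
        exact Finset.inf'_le _ (Finset.mem_range.mpr (by omega))
      have hcq : c ≤ |α - (q : ℝ)| := by rwa [hn]
      calc 1 / ((m : ℝ) * t ^ 5) ≤ 1 / (m : ℝ) := by
            apply one_div_le_one_div_of_le hmpos
            nlinarith
        _ ≤ c := hcm
        _ ≤ |α - (q : ℝ)| := hcq
        _ ≤ (m : ℝ) * |α - (q : ℝ)| := le_mul_of_one_le_left (abs_nonneg _) hm1'
        _ = D := hD_eq.symm
end
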